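/- arXiv:2512.21177 — 9 statements merged into one kernel-verified Lean document; each statement's English description precedes it below -/
import Mathlib

section
/- Let s be a positive odd integer and let a be an integer with gcd(a,s) = 1. Set K = ∑_{x=1}^{(s−1)/2} ⌊2ax/s⌋. Then (−1)^K equals the Jacobi symbol (a/s). -/
open Finset

private lemma neg_one_pow_congr' {m n : ℕ} (h : m % 2 = n % 2) : (-1 : ℤ) ^ m = (-1) ^ n := by
  rcases Nat.even_or_odd m with h1 | h1
  · have h2 : Even n := by rw [Nat.even_iff] at h1 ⊢; omega
    rw [h1.neg_one_pow, h2.neg_one_pow]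
  · have h2 : Odd n := by rw [Nat.odd_iff] at h1 ⊢; omega
    rw [h1.neg_one_pow, h2.neg_one_pow]

private lemma res_pos {s c x : ℕ} (hs : s % 2 = 1) (hco : Nat.Coprime c s)
    (hx : x ∈ Icc 1 (s / 2)) : 1 ≤ c * x % s ∧ c * x % s < s := by
  rw [mem_Icc] at hx
  have hs0 : 0 < s := by omega
  refine ⟨?_, Nat.mod_lt _ hs0⟩
  rcases Nat.eq_zero_or_pos (c * x % s) with h | h
  · exfalso
    have hdvd : s ∣ c * x := Nat.dvd_of_mod_eq_zero h
    have hx' : s ∣ x := (Nat.Coprime.dvd_of_dvd_mul_left hco.symm hdvd)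
    have := Nat.le_of_dvd (by omega) hx'
    omega
  · exact h

private lemma lemA {s c : ℕ} (hs : s % 2 = 1) :
    ∑ x ∈ Icc 1 (s / 2), 2 * c * x / s =
      2 * (∑ x ∈ Icc 1 (s / 2), c * x / s) +
        #((Icc 1 (s / 2)).filter fun x => s / 2 < c * x % s) := by
  have hs0 : 0 < s := by omega
  rw [Finset.mul_sum, card_filter, ← Finset.sum_add_distrib]
  refine Finset.sum_congr rfl fun x _ => ?_
  have hr : c * x % s < s := Nat.mod_lt _ hs0
  have key : 2 * c * x = 2 * (c * x % s) + (2 * (c * x / s)) * s := by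
    have h1 : s * (c * x / s) + c * x % s = c * x := Nat.div_add_mod (c * x) s
    calc 2 * c * x = 2 * (s * (c * x / s) + c * x % s) := by rw [h1]; ring
    _ = _ := by ring
  have h2r : 2 * (c * x % s) / s = if s / 2 < c * x % s then 1 else 0 := by
    split_ifs with h
    · exact Nat.div_eq_of_lt_le (by omega) (by omega)
    · exact Nat.div_eq_of_lt (by omega)
  rw [key, Nat.add_mul_div_right _ _ hs0, h2r, Nat.add_comm]

private lemma lemB {s c : ℕ} (hs : s % 2 = 1) (hc : c % 2 = 1) (hco : Nat.Coprime c s) :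
    (∑ x ∈ Icc 1 (s / 2), c * x / s) % 2 =
      #((Icc 1 (s / 2)).filter fun x => s / 2 < c * x % s) % 2 := by
  have hs0 : 0 < s := by omega
  set h := s / 2 with hh
  set K1 := ∑ x ∈ Icc 1 h, c * x / s with hK1
  set N := ∑ x ∈ Icc 1 h, x with hN
  set R := ∑ x ∈ Icc 1 h, c * x % s with hR
  set μ := #((Icc 1 h).filter fun x => h < c * x % s) with hμ
  have eq1 : c * N = s * K1 + R := by
    rw [hN, hK1, hR, Finset.mul_sum, Finset.mul_sum, ← Finset.sum_add_distrib]
    exact Finset.sum_congr rfl fun x _ => (Nat.div_add_mod (c * x) s).symm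
  have hxb : ∀ x, x ∈ Icc 1 h → (1 ≤ x ∧ x ≤ h) := fun x hx => mem_Icc.mp hx
  have hinj : ∀ x ∈ Icc 1 h, ∀ y ∈ Icc 1 h,
      min (c * x % s) (s - c * x % s) = min (c * y % s) (s - c * y % s) → x = y := by
    intro x hx y hy hxy
    obtain ⟨hx1, hx2⟩ := res_pos hs hco hx
    obtain ⟨hy1, hy2⟩ := res_pos hs hco hy
    obtain ⟨hx3, hx4⟩ := hxb x hx
    obtain ⟨hy3, hy4⟩ := hxb y hy
    have hcase : c * x % s = c * y % s ∨ c * x % s + c * y % s = s := by omega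
    rcases hcase with hcase | hcase
    · have hmod := Nat.ModEq.cancel_left_of_coprime (c := c) hco.symm hcase
      unfold Nat.ModEq at hmod
      rw [Nat.mod_eq_of_lt (by omega : x < s), Nat.mod_eq_of_lt (by omega : y < s)] at hmod
      exact hmod
    · exfalso
      have h0 : (c * x + c * y) % s = 0 := by
        rw [Nat.add_mod, hcase, Nat.mod_self]
      have hdvd : s ∣ c * (x + y) := by
        have he : c * (x + y) = c * x + c * y := by ring
        rw [he]; exact Nat.dvd_of_mod_eq_zero h0
      have hxy' : s ∣ x + y := Nat.Coprime.dvd_of_dvd_mul_left hco.symm hdvd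
      have := Nat.le_of_dvd (by omega) hxy'
      omega
  have himage : Finset.image (fun x => min (c * x % s) (s - c * x % s)) (Icc 1 h) = Icc 1 h := by
    apply Finset.eq_of_subset_of_card_le
    · intro y hy
      obtain ⟨x, hx, rfl⟩ := Finset.mem_image.mp hy
      obtain ⟨h1, h2⟩ := res_pos hs hco hx
      rw [mem_Icc]; omega
    · have hc' : #(Finset.image (fun x => min (c * x % s) (s - c * x % s)) (Icc 1 h))
          = #(Icc 1 h) :=
        Finset.card_image_of_injOn fun x hx y hy hf =>
          hinj x (by simpa using hx) y (by simpa using hy) hf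
      omega
  have eqM : (∑ x ∈ Icc 1 h, min (c * x % s) (s - c * x % s)) = N := by
    rw [hN]
    calc ∑ x ∈ Icc 1 h, min (c * x % s) (s - c * x % s)
        = ∑ y ∈ Finset.image (fun x => min (c * x % s) (s - c * x % s)) (Icc 1 h), y :=
          (Finset.sum_image (g := fun x => min (c * x % s) (s - c * x % s)) (f := fun y => y) hinj).symm
      _ = ∑ x ∈ Icc 1 h, x := by rw [himage]
  have hRpar : R % 2 = (N + μ) % 2 := by
    have hpt : ∀ x ∈ Icc 1 h, (c * x % s) % 2 =
        (min (c * x % s) (s - c * x % s) + if h < c * x % s then 1 else 0) % 2 := by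
      intro x hx
      obtain ⟨h1, h2⟩ := res_pos hs hco hx
      split_ifs with hgt <;> omega
    calc R % 2 = (∑ x ∈ Icc 1 h, (c * x % s) % 2) % 2 := by rw [hR, Finset.sum_nat_mod]
      _ = (∑ x ∈ Icc 1 h,
            (min (c * x % s) (s - c * x % s) + if h < c * x % s then 1 else 0) % 2) % 2 := by
          rw [Finset.sum_congr rfl hpt]
      _ = (∑ x ∈ Icc 1 h,
            (min (c * x % s) (s - c * x % s) + if h < c * x % s then 1 else 0)) % 2 := by
          rw [← Finset.sum_nat_mod]
      _ = (N + μ) % 2 := by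
          rw [Finset.sum_add_distrib, eqM, hμ, card_filter]
  have e1 : (c * N) % 2 = N % 2 := by rw [Nat.mul_mod, hc]; omega
  have e2 : (s * K1) % 2 = K1 % 2 := by rw [Nat.mul_mod, hs]; omega
  omega

private lemma div_eq_filter_card' {a b c : ℕ} (hb0 : 0 < b) (hc : a / b ≤ c) :
    a / b = #((Icc 1 c).filter fun x => x * b ≤ a) := by
  calc a / b = #(Icc 1 (a / b)) := by simp
  _ = #((Icc 1 c).filter fun x => x * b ≤ a) := by
      congr 1
      ext x
      simp only [mem_Icc, mem_filter]
      constructor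
      · rintro ⟨h1, h2⟩
        exact ⟨⟨h1, le_trans h2 hc⟩, (Nat.le_div_iff_mul_le hb0).mp h2⟩
      · rintro ⟨⟨h1, _⟩, h3⟩
        exact ⟨h1, (Nat.le_div_iff_mul_le hb0).mpr h3⟩

private lemma sum_Icc_eq_card_lt {p q : ℕ} (hp0 : 0 < p) :
    ∑ a ∈ Icc 1 (p / 2), a * q / p =
      #(((Icc 1 (p / 2)) ×ˢ (Icc 1 (q / 2))).filter fun x => x.2 * p ≤ x.1 * q) := by
  calc ∑ a ∈ Icc 1 (p / 2), a * q / p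
      = ∑ a ∈ Icc 1 (p / 2), #((Icc 1 (q / 2)).filter fun y => y * p ≤ a * q) :=
        Finset.sum_congr rfl fun x hx => div_eq_filter_card' hp0 (by
          rw [mem_Icc] at hx
          calc x * q / p ≤ p / 2 * q / p := by gcongr; exact hx.2
          _ ≤ q / 2 := Nat.div_mul_div_le_div _ _ _)
    _ = _ := by
        rw [← Finset.card_sigma]
        exact Finset.card_nbij' (fun a => (a.1, a.2)) (fun a => ⟨a.1, a.2⟩)
          (by intro a ha; simp only [Finset.mem_coe, Finset.mem_filter, Finset.mem_sigma,
            Finset.mem_product] at ha ⊢; tauto)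
          (by intro a ha; simp only [Finset.mem_coe, Finset.mem_filter, Finset.mem_sigma,
            Finset.mem_product] at ha ⊢; tauto) (fun _ _ => rfl) (fun _ _ => rfl)

private lemma recC {p q : ℕ} (hp0 : 0 < p) (hq0 : 0 < q) (hpq : Nat.Coprime p q) :
    (∑ x ∈ Icc 1 (p / 2), x * q / p) + ∑ y ∈ Icc 1 (q / 2), y * p / q = p / 2 * (q / 2) := by
  have hswap : #(((Icc 1 (q / 2)) ×ˢ (Icc 1 (p / 2))).filter fun x => x.2 * q ≤ x.1 * p) =
      #(((Icc 1 (p / 2)) ×ˢ (Icc 1 (q / 2))).filter fun x => x.1 * q ≤ x.2 * p) :=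
    Finset.card_equiv (Equiv.prodComm _ _) (fun ⟨_, _⟩ => by
      simp +contextual only [Finset.mem_filter, and_self_iff, Prod.swap_prod_mk,
        forall_true_iff, Finset.mem_product, Equiv.prodComm_apply, and_assoc, and_left_comm])
  have hdisj : Disjoint
      (((Icc 1 (p / 2)) ×ˢ (Icc 1 (q / 2))).filter fun x => x.2 * p ≤ x.1 * q)
      (((Icc 1 (p / 2)) ×ˢ (Icc 1 (q / 2))).filter fun x => x.1 * q ≤ x.2 * p) := by
    apply Finset.disjoint_filter.2
    intro x hx hle hge
    have heq : x.1 * q = x.2 * p := le_antisymm hge hle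
    rw [Finset.mem_product, mem_Icc, mem_Icc] at hx
    have hdvd : p ∣ x.1 * q := ⟨x.2, heq.trans (mul_comm _ _)⟩
    have hd1 : p ∣ x.1 := Nat.Coprime.dvd_of_dvd_mul_right hpq hdvd
    have hd2 := Nat.le_of_dvd (by omega) hd1
    have : p / 2 < p := Nat.div_lt_self hp0 one_lt_two
    omega
  have hunion : ((((Icc 1 (p / 2)) ×ˢ (Icc 1 (q / 2))).filter fun x => x.2 * p ≤ x.1 * q) ∪
      (((Icc 1 (p / 2)) ×ˢ (Icc 1 (q / 2))).filter fun x => x.1 * q ≤ x.2 * p)) =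
      (Icc 1 (p / 2)) ×ˢ (Icc 1 (q / 2)) := by
    ext x
    have := le_total (x.2 * p) (x.1 * q)
    simp only [Finset.mem_union, Finset.mem_filter]
    tauto
  rw [sum_Icc_eq_card_lt hp0, sum_Icc_eq_card_lt hq0, hswap,
    ← Finset.card_union_of_disjoint hdisj, hunion, Finset.card_product, Nat.card_Icc,
    Nat.card_Icc]
  simp

private lemma core : ∀ s : ℕ, s % 2 = 1 → ∀ c : ℕ, 0 < c → Nat.Coprime c s →
    (-1 : ℤ) ^ (∑ x ∈ Icc 1 (s / 2), 2 * c * x / s) = jacobiSym c s := by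
  intro s
  induction s using Nat.strong_induction_on with
  | _ s IH =>
    intro hs c hc0 hco
    rcases eq_or_ne s 1 with rfl | hs1
    · simp [jacobiSym.one_right]
    have hs3 : 3 ≤ s := by omega
    have hs0 : 0 < s := by omega
    have hsodd : Odd s := Nat.odd_iff.mpr hs
    -- the main case: small odd numerator
    have main : ∀ c' : ℕ, c' % 2 = 1 → 0 < c' → c' < s → Nat.Coprime c' s →
        (-1 : ℤ) ^ (∑ x ∈ Icc 1 (s / 2), 2 * c' * x / s) = jacobiSym c' s := by
      intro c' hodd' h0' hlt' hco'
      rcases eq_or_ne c' 1 with rfl | hne1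
      · have hz : ∀ x ∈ Icc 1 (s / 2), 2 * 1 * x / s = 0 := fun x hx =>
          Nat.div_eq_of_lt (by rw [mem_Icc] at hx; omega)
        rw [Finset.sum_congr rfl hz]
        simp [jacobiSym.one_left]
      · have hc3 : 3 ≤ c' := by omega
        have hc0' : 0 < c' := h0'
        have hA := lemA (s := s) (c := c') hs
        have hB := lemB hs hodd' hco'
        have hA' := lemA (s := c') (c := s) hodd'
        have hB' := lemB hodd' hs hco'.symm
        have hrec := recC hs0 hc0' hco'.symm
        have hconv1 : (∑ x ∈ Icc 1 (s / 2), x * c' / s) = ∑ x ∈ Icc 1 (s / 2), c' * x / s :=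
          Finset.sum_congr rfl fun x _ => by rw [mul_comm x c']
        have hconv2 : (∑ y ∈ Icc 1 (c' / 2), y * s / c') = ∑ y ∈ Icc 1 (c' / 2), s * y / c' :=
          Finset.sum_congr rfl fun y _ => by rw [mul_comm y s]
        rw [hconv1, hconv2] at hrec
        have hIH := IH c' hlt' hodd' s hs0 hco'.symm
        have h1 : (-1 : ℤ) ^ (∑ x ∈ Icc 1 (s / 2), 2 * c' * x / s) =
            (-1 : ℤ) ^ ((∑ x ∈ Icc 1 (s / 2), c' * x / s) + ∑ y ∈ Icc 1 (c' / 2), s * y / c')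
              * (-1 : ℤ) ^ (∑ y ∈ Icc 1 (c' / 2), s * y / c') := by
          rw [← pow_add]
          exact neg_one_pow_congr' (by omega)
        have h2 : (-1 : ℤ) ^ (∑ y ∈ Icc 1 (c' / 2), s * y / c') = jacobiSym (s : ℤ) c' := by
          calc (-1 : ℤ) ^ (∑ y ∈ Icc 1 (c' / 2), s * y / c')
              = (-1 : ℤ) ^ (∑ y ∈ Icc 1 (c' / 2), 2 * s * y / c') :=
                neg_one_pow_congr' (by omega)
            _ = jacobiSym (s : ℤ) c' := hIH
        rw [h1, h2, hrec, jacobiSym.quadratic_reciprocity (Nat.odd_iff.mpr hodd') hsodd,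
          Nat.mul_comm (s / 2) (c' / 2)]
    -- reduce c mod s
    have hbco : Nat.Coprime (c % s) s := by
      have h1 : Nat.gcd s c = Nat.gcd (c % s) s := Nat.gcd_rec s c
      have h2 : Nat.gcd s c = 1 := Nat.coprime_comm.mp hco
      unfold Nat.Coprime
      omega
    have hb0 : 0 < c % s := by
      rcases Nat.eq_zero_or_pos (c % s) with h0 | h
      · exfalso; rw [h0] at hbco; have := (Nat.coprime_zero_left s).mp hbco; omega
      · exact h
    have hbs : c % s < s := Nat.mod_lt _ hs0
    have hjb : jacobiSym (c : ℤ) s = jacobiSym ((c % s : ℕ) : ℤ) s := by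
      rw [jacobiSym.mod_left (c : ℤ) s]
      congr 1
    have hsum1 : (∑ x ∈ Icc 1 (s / 2), 2 * c * x / s) % 2
        = (∑ x ∈ Icc 1 (s / 2), 2 * (c % s) * x / s) % 2 := by
      have hpt : ∀ x ∈ Icc 1 (s / 2), 2 * c * x / s = 2 * (c % s) * x / s + 2 * (x * (c / s)) := by
        intro x _
        have hkey : 2 * c * x = 2 * (c % s) * x + (2 * (x * (c / s))) * s := by
          have h1 : s * (c / s) + c % s = c := Nat.div_add_mod c s
          calc 2 * c * x = 2 * (s * (c / s) + c % s) * x := by rw [h1]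
          _ = _ := by ring
        rw [hkey, Nat.add_mul_div_right _ _ hs0]
      rw [Finset.sum_congr rfl hpt, Finset.sum_add_distrib, ← Finset.mul_sum]
      omega
    rcases Nat.even_or_odd (c % s) with hbev | hbodd
    · -- even residue: use s - c % s
      rw [Nat.even_iff] at hbev
      have hc2odd : (s - c % s) % 2 = 1 := by omega
      have hc20 : 0 < s - c % s := by omega
      have hc2lt : s - c % s < s := by omega
      have hc2co : Nat.Coprime (s - c % s) s := by
        have h1 : IsCoprime ((c % s : ℕ) : ℤ) (s : ℤ) := Nat.isCoprime_iff_coprime.mpr hbco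
        have h2 : IsCoprime (-((c % s : ℕ) : ℤ) + (s : ℤ) * 1) (s : ℤ) :=
          (h1.neg_left).add_mul_left_left 1
        have h3 : (((s - c % s : ℕ)) : ℤ) = -((c % s : ℕ) : ℤ) + (s : ℤ) * 1 := by
          rw [Nat.cast_sub hbs.le]; ring
        exact Nat.isCoprime_iff_coprime.mp (h3 ▸ h2)
      have h2co : Nat.Coprime (2 * (c % s)) s :=
        Nat.Coprime.mul (Nat.coprime_two_left.mpr hsodd) hbco
      have hpt2 : ∀ x ∈ Icc 1 (s / 2),
          2 * (s - c % s) * x / s + 2 * (c % s) * x / s + 1 = 2 * x := by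
        intro x hx
        obtain ⟨hr1, hr2⟩ := res_pos hs h2co hx
        rw [mem_Icc] at hx
        have hq : s * (2 * (c % s) * x / s) + 2 * (c % s) * x % s = 2 * (c % s) * x :=
          Nat.div_add_mod _ s
        have hqlt : 2 * (c % s) * x / s < 2 * x := by
          rw [Nat.div_lt_iff_lt_mul hs0]
          calc 2 * (c % s) * x = 2 * x * (c % s) := by ring
          _ < 2 * x * s := mul_lt_mul_of_pos_left hbs (by omega)
        obtain ⟨k, hk⟩ : ∃ k, 2 * (c % s) * x / s + 1 + k = 2 * x :=
          ⟨2 * x - 2 * (c % s) * x / s - 1, by omega⟩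
        have h1 : 2 * (s - c % s) * x + 2 * (c % s) * x = 2 * s * x := by
          have he : (s - c % s) + c % s = s := by omega
          calc 2 * (s - c % s) * x + 2 * (c % s) * x = 2 * ((s - c % s) + c % s) * x := by ring
          _ = 2 * s * x := by rw [he]
        have h2 : s * (2 * (c % s) * x / s) + s + s * k = 2 * s * x := by
          calc s * (2 * (c % s) * x / s) + s + s * k = s * (2 * (c % s) * x / s + 1 + k) := by
                ring
          _ = s * (2 * x) := by rw [hk]
          _ = 2 * s * x := by ring
        have hks : k * s = s * k := Nat.mul_comm _ _
        have hks2 : (k + 1) * s = s * k + s := by ring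
        have hdivk : 2 * (s - c % s) * x / s = k := Nat.div_eq_of_lt_le (by omega) (by omega)
        omega
      have hsum2 : (∑ x ∈ Icc 1 (s / 2), 2 * (s - c % s) * x / s)
          + (∑ x ∈ Icc 1 (s / 2), 2 * (c % s) * x / s) + s / 2
          = 2 * (∑ x ∈ Icc 1 (s / 2), x) := by
        have h1 := Finset.sum_congr rfl hpt2
        rw [Finset.sum_add_distrib, Finset.sum_add_distrib, Finset.sum_const, smul_eq_mul,
          mul_one, Nat.card_Icc, ← Finset.mul_sum] at h1
        omega
      have hjneg : jacobiSym ((c % s : ℕ) : ℤ) s = jacobiSym (-((s - c % s : ℕ) : ℤ)) s := by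
        apply jacobiSym.mod_left'
        have h3 : ((c % s : ℕ) : ℤ) = -((s - c % s : ℕ) : ℤ) + (s : ℤ) * 1 := by
          rw [Nat.cast_sub hbs.le]; ring
        rw [h3, Int.add_mul_emod_self_left]
      have hχ : jacobiSym (-((s - c % s : ℕ) : ℤ)) s
          = (-1) ^ (s / 2) * jacobiSym ((s - c % s : ℕ) : ℤ) s := by
        rw [jacobiSym.neg _ hsodd, ZMod.χ₄_eq_neg_one_pow hs]
      have hmain := main (s - c % s) hc2odd hc20 hc2lt hc2co
      calc (-1 : ℤ) ^ (∑ x ∈ Icc 1 (s / 2), 2 * c * x / s)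
          = (-1) ^ (s / 2 + ∑ x ∈ Icc 1 (s / 2), 2 * (s - c % s) * x / s) :=
            neg_one_pow_congr' (by omega)
        _ = (-1) ^ (s / 2) * (-1) ^ (∑ x ∈ Icc 1 (s / 2), 2 * (s - c % s) * x / s) :=
            pow_add _ _ _
        _ = (-1) ^ (s / 2) * jacobiSym ((s - c % s : ℕ) : ℤ) s := by rw [hmain]
        _ = jacobiSym ((c % s : ℕ) : ℤ) s := by rw [hjneg, hχ]
        _ = jacobiSym (c : ℤ) s := hjb.symm
    · calc (-1 : ℤ) ^ (∑ x ∈ Icc 1 (s / 2), 2 * c * x / s)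
          = (-1) ^ (∑ x ∈ Icc 1 (s / 2), 2 * (c % s) * x / s) := neg_one_pow_congr' hsum1
        _ = jacobiSym ((c % s : ℕ) : ℤ) s := main (c % s) (Nat.odd_iff.mp hbodd) hb0 hbs hbco
        _ = jacobiSym (c : ℤ) s := hjb.symm

/-- Let `s` be a positive odd integer and `a` an integer with `gcd(a,s) = 1`.  Set
`K = ∑_{x=1}^{(s-1)/2} ⌊2ax/s⌋`.  Then `(-1)^K` equals the Jacobi symbol `(a/s)`. -/
theorem stmt3 (s : ℕ) (hs : 0 < s) (hodd : Odd s) (a : ℤ) (ha : IsCoprime a (s : ℤ)) :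
    (-1 : ℚ) ^ (∑ x ∈ Finset.Icc 1 ((s - 1) / 2), ⌊(2 * (a : ℚ) * (x : ℚ)) / (s : ℚ)⌋) =
      (jacobiSym a s : ℚ) := by
  have hs' : s % 2 = 1 := Nat.odd_iff.mp hodd
  rcases eq_or_ne s 1 with rfl | hs1
  · have : ((1 - 1) / 2 : ℕ) = 0 := rfl
    rw [this]
    rw [show (Finset.Icc 1 0 : Finset ℕ) = ∅ from rfl]
    simp [jacobiSym.one_right]
  · have hs3 : 3 ≤ s := by omega
    have hsz : ((s : ℤ)) ≠ 0 := by exact_mod_cast (by omega : s ≠ 0)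
    have hemod0 : (0 : ℤ) ≤ a % (s : ℤ) := Int.emod_nonneg a hsz
    have hbeq : (((a % (s : ℤ)).toNat : ℕ) : ℤ) = a % (s : ℤ) := Int.toNat_of_nonneg hemod0
    set b := (a % (s : ℤ)).toNat with hbdef
    have hblt : b < s := by
      have h1 : a % (s : ℤ) < (s : ℤ) := Int.emod_lt_of_pos a (by exact_mod_cast hs)
      omega
    have hco2 : IsCoprime ((b : ℕ) : ℤ) (s : ℤ) := by
      rw [hbeq, Int.emod_def, sub_eq_add_neg, ← mul_neg]
      exact ha.add_mul_left_left _
    have hbco : Nat.Coprime b s := Nat.isCoprime_iff_coprime.mp hco2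
    have hb0 : 0 < b := by
      rcases Nat.eq_zero_or_pos b with h0 | h
      · exfalso; rw [h0] at hbco; have := (Nat.coprime_zero_left s).mp hbco; omega
      · exact h
    have hpt : ∀ x ∈ Finset.Icc 1 ((s - 1) / 2),
        ⌊(2 * (a : ℚ) * (x : ℚ)) / (s : ℚ)⌋
          = ((2 * b * x / s : ℕ) : ℤ) + 2 * (a / (s : ℤ)) * (x : ℤ) := by
      intro x _
      have hax : (a : ℚ) = ((b : ℕ) : ℚ) + ((a / (s : ℤ) : ℤ) : ℚ) * (s : ℚ) := by
        have h1 : a = ((b : ℕ) : ℤ) + (a / (s : ℤ)) * s := by rw [hbeq, Int.emod_def]; ring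
        exact_mod_cast congrArg (fun z : ℤ => (z : ℚ)) h1
      have hsq : ((s : ℚ)) ≠ 0 := by exact_mod_cast (by omega : s ≠ 0)
      have hsplit : (2 * (a : ℚ) * (x : ℚ)) / (s : ℚ)
          = (2 * ((b : ℕ) : ℚ) * (x : ℚ)) / (s : ℚ)
            + ((2 * (a / (s : ℤ)) * (x : ℤ) : ℤ) : ℚ) := by
        rw [hax]; push_cast; field_simp
      rw [hsplit, Int.floor_add_intCast]
      congr 1
      have h2 : (2 * ((b : ℕ) : ℚ) * (x : ℚ)) / (s : ℚ)
          = (((2 * b * x : ℕ) : ℤ) : ℚ) / ((s : ℕ) : ℚ) := by push_cast; ring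
      rw [h2, Rat.floor_intCast_div_natCast]
      exact (Int.natCast_div (2 * b * x) s).symm
    have hK : (∑ x ∈ Finset.Icc 1 ((s - 1) / 2), ⌊(2 * (a : ℚ) * (x : ℚ)) / (s : ℚ)⌋)
        = ((∑ x ∈ Finset.Icc 1 ((s - 1) / 2), 2 * b * x / s : ℕ) : ℤ)
          + 2 * (a / (s : ℤ)) * (∑ x ∈ Finset.Icc 1 ((s - 1) / 2), (x : ℤ)) := by
      rw [Finset.sum_congr rfl hpt, Finset.sum_add_distrib, ← Finset.mul_sum, ← Nat.cast_sum]
    rw [hK]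
    have hs2 : (s - 1) / 2 = s / 2 := by omega
    calc (-1 : ℚ) ^ (((∑ x ∈ Finset.Icc 1 ((s - 1) / 2), 2 * b * x / s : ℕ) : ℤ)
          + 2 * (a / (s : ℤ)) * (∑ x ∈ Finset.Icc 1 ((s - 1) / 2), (x : ℤ)))
        = (-1 : ℚ) ^ (((∑ x ∈ Finset.Icc 1 ((s - 1) / 2), 2 * b * x / s : ℕ) : ℤ))
            * ((-1 : ℚ) ^ ((2 : ℤ))) ^ ((a / (s : ℤ)) * (∑ x ∈ Finset.Icc 1 ((s - 1) / 2), (x : ℤ))) := by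
          rw [← zpow_mul, ← zpow_add₀ (by norm_num : (-1 : ℚ) ≠ 0)]
          congr 1
          ring
      _ = (-1 : ℚ) ^ (((∑ x ∈ Finset.Icc 1 ((s - 1) / 2), 2 * b * x / s : ℕ) : ℤ)) := by
          norm_num
      _ = (((-1 : ℤ) ^ (∑ x ∈ Finset.Icc 1 ((s - 1) / 2), 2 * b * x / s) : ℤ) : ℚ) := by
          rw [zpow_natCast]; push_cast; ring
      _ = ((jacobiSym ((b : ℕ) : ℤ) s : ℤ) : ℚ) := by
          rw [hs2, core s hs' b hb0 hbco]
      _ = (jacobiSym a s : ℚ) := by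
          congr 1
          apply jacobiSym.mod_left'
          rw [hbeq, Int.emod_emod_of_dvd a dvd_rfl]
end

section
/- Let m ≥ 2 be an even integer and let a be a positive integer with gcd(a,m) = 1 (so a is odd). Then ∑_{x=1}^{(a−1)/2} ⌊2mx/a⌋ + ∑_{y=1}^{m} ⌊ay/(2m)⌋ = (a−1)m/2. -/
open Finset

/-!
Both sums count lattice points of the rectangle `[1, (a-1)/2] × [1, m]`: the first those on or
below the line `a y = 2 m x`, the second those on or above it. Since `a` is odd and coprime to
`m`, it is coprime to `2 m`, so no lattice point of the rectangle lies on the line, and the two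
counts add up to the number `(a-1)/2 · m` of all its points.
-/

theorem Nat.div_eq_card_filter_Icc {c b k : ℕ} (hb : 0 < b) (hk : c / b ≤ k) :
    c / b = #{y ∈ Icc 1 k | y * b ≤ c} := by
  rw [← Finset.Ico_add_one_right_eq_Icc]
  exact ZMod.div_eq_filter_card hb hk

theorem Nat.sum_Icc_mul_div_add_sum_Icc_mul_div {a b n k : ℕ} (ha : 0 < a) (hb : 0 < b)
    (hn : n * b / a ≤ k) (hk : k * a / b ≤ n)
    (hline : ∀ x ∈ Icc 1 n, ∀ y ∈ Icc 1 k, x * b ≠ y * a) :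
    ∑ x ∈ Icc 1 n, x * b / a + ∑ y ∈ Icc 1 k, y * a / b = n * k := by
  have below : ∀ x ∈ Icc 1 n, x * b / a = ∑ y ∈ Icc 1 k, if y * a ≤ x * b then 1 else 0 :=
    fun x hx ↦ by
      rw [← card_filter]
      refine Nat.div_eq_card_filter_Icc ha (le_trans ?_ hn)
      gcongr
      exact (mem_Icc.mp hx).2
  have above : ∀ y ∈ Icc 1 k, y * a / b = ∑ x ∈ Icc 1 n, if x * b ≤ y * a then 1 else 0 :=
    fun y hy ↦ by
      rw [← card_filter]
      refine Nat.div_eq_card_filter_Icc hb (le_trans ?_ hk)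
      gcongr
      exact (mem_Icc.mp hy).2
  rw [sum_congr rfl below, sum_congr rfl above, sum_comm (s := Icc 1 k), ← sum_add_distrib]
  calc ∑ x ∈ Icc 1 n, (∑ y ∈ Icc 1 k, (if y * a ≤ x * b then 1 else 0) +
          ∑ y ∈ Icc 1 k, if x * b ≤ y * a then 1 else 0)
      = ∑ x ∈ Icc 1 n, ∑ y ∈ Icc 1 k, 1 := by
        refine sum_congr rfl fun x hx ↦ ?_
        rw [← sum_add_distrib]
        refine sum_congr rfl fun y hy ↦ ?_
        have := hline x hx y hy
        split_ifs <;> omega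
    _ = n * k := by simp

theorem Nat.mul_ne_mul_of_coprime {a b x : ℕ} (hab : a.Coprime b) (hx : 0 < x) (hxa : x < a)
    (y : ℕ) : x * b ≠ y * a := fun h ↦
  absurd (Nat.le_of_dvd hx (hab.dvd_of_dvd_mul_right ⟨y, by rw [h, mul_comm]⟩)) (not_le.mpr hxa)

theorem Nat.odd_of_coprime_of_even {a m : ℕ} (hcop : a.Coprime m) (hm : Even m) : Odd a := by
  by_contra h
  exact Nat.not_coprime_of_dvd_of_dvd one_lt_two (Nat.not_odd_iff_even.mp h).two_dvd
    hm.two_dvd hcop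

/-- Let `m ≥ 2` be an even integer and `a` a positive integer with `gcd(a,m) = 1`
(so `a` is odd).  Then `∑_{x=1}^{(a-1)/2} ⌊2mx/a⌋ + ∑_{y=1}^{m} ⌊ay/(2m)⌋ = (a-1)m/2`. -/
theorem stmt5 (m a : ℕ) (hm : 2 ≤ m) (hmeven : Even m) (ha : 0 < a)
    (hcop : Nat.Coprime a m) :
    (∑ x ∈ Finset.Icc 1 ((a - 1) / 2), ⌊(2 * (m : ℚ) * (x : ℚ)) / (a : ℚ)⌋) +
      (∑ y ∈ Finset.Icc 1 m, ⌊((a : ℚ) * (y : ℚ)) / (2 * (m : ℚ))⌋) =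
      ((a : ℤ) - 1) * m / 2 := by
  obtain ⟨n, rfl⟩ := Nat.odd_of_coprime_of_even hcop hmeven
  have hcop2 : (2 * n + 1).Coprime (2 * m) :=
    (Nat.coprime_two_right.mpr (odd_two_mul_add_one n)).mul_right hcop
  have hn : n * (2 * m) / (2 * n + 1) ≤ m :=
    Nat.div_le_of_le_mul (by nlinarith)
  have hk : m * (2 * n + 1) / (2 * m) ≤ n := by
    rw [mul_comm 2 m, Nat.mul_div_mul_left _ _ (by omega : 0 < m)]
    omega
  have count := Nat.sum_Icc_mul_div_add_sum_Icc_mul_div ha (by omega : 0 < 2 * m) hn hk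
    fun x hx y _ ↦ Nat.mul_ne_mul_of_coprime hcop2 (mem_Icc.mp hx).1 (by grind) y
  have hhalf : (2 * n + 1 - 1) / 2 = n := by omega
  have floor_left (x : ℕ) : ⌊2 * (m : ℚ) * x / ((2 * n + 1 : ℕ) : ℚ)⌋ =
      ((x * (2 * m) / (2 * n + 1) : ℕ) : ℤ) := by
    rw [Int.natCast_div, ← Rat.floor_natCast_div_natCast]; push_cast; ring_nf
  have floor_right (y : ℕ) : ⌊((2 * n + 1 : ℕ) : ℚ) * y / (2 * m)⌋ =
      ((y * (2 * n + 1) / (2 * m) : ℕ) : ℤ) := by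
    rw [Int.natCast_div, ← Rat.floor_natCast_div_natCast]; push_cast; ring_nf
  simp only [hhalf, floor_left, floor_right]
  rw [← Nat.cast_sum, ← Nat.cast_sum, ← Nat.cast_add, count]
  push_cast
  rw [show (2 * (n : ℤ) + 1 - 1) * m = n * m * 2 by ring, Int.mul_ediv_cancel _ two_ne_zero]
end

section
/- Let m ≥ 2 be an even integer and let a be a positive integer with gcd(a,m) = 1 (so a is odd). Then (−1)^{(a−1)(m−2)/4 + N} equals the Jacobi symbol (2m/a), where N = #{x : 1 ≤ x ≤ (m−2)/2 and {ax}_{2m} > m}. -/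
/-!
Eisenstein's lemma holds for the Jacobi symbol: for odd coprime `a, b`,
`(b/a) = (-1)^{Σ_{1 ≤ y ≤ a/2} ⌊by/a⌋}`. It follows by induction on `a` from quadratic
reciprocity and the lattice-point count `Σ_{x ≤ X} ⌊qx/p⌋ + Σ_{y ≤ Y} ⌊py/q⌋ = XY`, after
reducing `b` modulo `2a` and, if needed, replacing it by `2a - b`.

For the theorem, `{ax}_{2m} > m` exactly when `⌊ax/m⌋` is odd, so
`N ≡ Σ_{x ≤ (m-2)/2} ⌊ax/m⌋`. The lattice-point count turns this into
`(a-1)(m-2)/4 + Σ_{y ≤ a/2} ⌊my/a⌋ (mod 2)`, and Eisenstein's lemma for `a + 2` and `a + m`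
gives `(2m/a) = (2/a)(m/a) = (-1)^{Σ_{y ≤ a/2} ⌊my/a⌋}`.
-/

open Finset
open scoped NumberTheorySymbols

theorem card_filter_Icc_mul_le {p n Y : ℕ} (hp : 0 < p) (hY : n / p ≤ Y) :
    #{y ∈ Icc 1 Y | p * y ≤ n} = n / p := by
  have : {y ∈ Icc 1 Y | p * y ≤ n} = Icc 1 (n / p) := by
    ext y
    simp only [mem_filter, mem_Icc, Nat.le_div_iff_mul_le hp, mul_comm p]
    constructor
    · rintro ⟨⟨h1, -⟩, h⟩
      exact ⟨h1, h⟩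
    · rintro ⟨h1, h⟩
      exact ⟨⟨h1, ((Nat.le_div_iff_mul_le hp).2 h).trans hY⟩, h⟩
  simp [this]

/-- Both sums count lattice points of the rectangle `[1, X] × [1, Y]`, on either side of the
line `p y = q x`. -/
theorem sum_div_add_sum_div_eq_mul {p q X Y : ℕ} (hp : 0 < p) (hq : 0 < q)
    (hX : q * X / p ≤ Y) (hY : p * Y / q ≤ X)
    (hne : ∀ x ∈ Icc 1 X, ∀ y ∈ Icc 1 Y, p * y ≠ q * x) :
    ∑ x ∈ Icc 1 X, q * x / p + ∑ y ∈ Icc 1 Y, p * y / q = X * Y := by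
  have below :
      ∑ x ∈ Icc 1 X, q * x / p = #{z ∈ Icc 1 X ×ˢ Icc 1 Y | p * z.2 ≤ q * z.1} := by
    rw [card_filter, sum_product]
    refine sum_congr rfl fun x hx => ?_
    rw [← card_filter, card_filter_Icc_mul_le hp ((Nat.div_le_div_right
      (Nat.mul_le_mul_left q (mem_Icc.1 hx).2)).trans hX)]
  have above :
      ∑ y ∈ Icc 1 Y, p * y / q = #{z ∈ Icc 1 X ×ˢ Icc 1 Y | ¬ p * z.2 ≤ q * z.1} := by
    rw [card_filter, sum_product_right]
    refine sum_congr rfl fun y hy => ?_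
    rw [← card_filter, ← card_filter_Icc_mul_le hq ((Nat.div_le_div_right
      (Nat.mul_le_mul_left p (mem_Icc.1 hy).2)).trans hY)]
    refine congrArg card (filter_congr fun x hx => ?_)
    have := hne x hx y hy
    dsimp only
    omega
  rw [below, above, card_filter_add_card_filter_not, card_product, Nat.card_Icc, Nat.card_Icc,
    Nat.add_sub_cancel, Nat.add_sub_cancel]

theorem mul_half_div_le_half {p : ℕ} (hp : 0 < p) (q : ℕ) :
    q * ((p - 1) / 2) / p ≤ (q - 1) / 2 := by
  refine Nat.le_of_lt_succ ((Nat.div_lt_iff_lt_mul hp).2 ?_)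
  have hX : 2 * ((p - 1) / 2) + 1 ≤ p := by omega
  have hY : q ≤ 2 * ((q - 1) / 2 + 1) := by omega
  nlinarith [Nat.mul_le_mul_left q hX, Nat.mul_le_mul_left p hY,
    Nat.mul_pos hp (Nat.succ_pos ((q - 1) / 2))]

theorem sum_div_add_sum_div_eq_of_coprime {p q : ℕ} (hp : 0 < p) (hq : 0 < q)
    (hpq : p.Coprime q) :
    ∑ x ∈ Icc 1 ((p - 1) / 2), q * x / p + ∑ y ∈ Icc 1 ((q - 1) / 2), p * y / q =
      (p - 1) / 2 * ((q - 1) / 2) := by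
  refine sum_div_add_sum_div_eq_mul hp hq (mul_half_div_le_half hp q) (mul_half_div_le_half hq p)
    fun x hx y _ hxy => ?_
  have hx := mem_Icc.1 hx
  have := Nat.le_of_dvd (by omega) (hpq.dvd_of_dvd_mul_left ⟨y, hxy.symm⟩)
  omega

theorem sum_add_mul_mul_div {a : ℕ} (ha : 0 < a) (s : Finset ℕ) (b k : ℕ) :
    ∑ y ∈ s, (b + k * a) * y / a = ∑ y ∈ s, b * y / a + k * ∑ y ∈ s, y := by
  rw [mul_sum, ← sum_add_distrib]
  refine sum_congr rfl fun y _ => ?_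
  rw [show (b + k * a) * y = b * y + a * (k * y) by ring, Nat.add_mul_div_left _ _ ha]

theorem div_add_sub_div_add_one {a n k : ℕ} (hn : ¬ a ∣ n) (hnk : n ≤ a * k) :
    n / a + (a * k - n) / a + 1 = k := by
  have ha : 0 < a := Nat.pos_of_ne_zero fun h => hn (by simp_all)
  have hr : 0 < n % a := Nat.pos_of_ne_zero fun h => hn (Nat.dvd_of_mod_eq_zero h)
  have hlt : n / a < k := (Nat.div_lt_iff_lt_mul ha).2 <| by
    rw [mul_comm]
    exact lt_of_le_of_ne hnk fun h => hn ⟨k, h⟩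
  obtain ⟨t, rfl⟩ : ∃ t, k = n / a + 1 + t := ⟨k - (n / a + 1), by omega⟩
  have hsub : a * (n / a + 1 + t) - n = a * t + (a - n % a) := by
    have := Nat.div_add_mod n a
    have := Nat.mod_lt n ha
    rw [mul_add, mul_add, mul_one]
    omega
  rw [hsub, Nat.mul_add_div ha, Nat.div_eq_of_lt (Nat.sub_lt ha hr)]
  omega

theorem sum_div_add_sum_sub_div {a b : ℕ} (hb : b ≤ 2 * a) (s : Finset ℕ)
    (hs : ∀ y ∈ s, ¬ a ∣ b * y) :
    ∑ y ∈ s, b * y / a + ∑ y ∈ s, (2 * a - b) * y / a + #s = 2 * ∑ y ∈ s, y := by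
  rw [card_eq_sum_ones, ← sum_add_distrib, ← sum_add_distrib, mul_sum]
  refine sum_congr rfl fun y hy => ?_
  have hsub : (2 * a - b) * y = a * (2 * y) - b * y := by
    rw [Nat.sub_mul]
    ring_nf
  rw [hsub, div_add_sub_div_add_one (hs y hy)]
  nlinarith

theorem jacobiSym_natCast_add_mul (b k a : ℕ) : J((b + k * a : ℕ) | a) = J(b | a) :=
  jacobiSym.mod_left' (by push_cast; exact Int.add_mul_emod_self_right _ _ _)

theorem neg_one_pow_sum_div_eq_neg_one_pow_mul_sum_sub_div {a r : ℕ} (ha : Odd a)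
    (hr : r ≤ 2 * a) (hcop : a.Coprime r) :
    (-1 : ℤ) ^ ∑ y ∈ Icc 1 (a / 2), r * y / a =
      (-1) ^ (a / 2) * (-1) ^ ∑ y ∈ Icc 1 (a / 2), (2 * a - r) * y / a := by
  have hsum := sum_div_add_sum_sub_div hr (Icc 1 (a / 2)) fun y hy hdvd => by
    have hy := mem_Icc.1 hy
    have := Nat.le_of_dvd (by omega) (hcop.dvd_of_dvd_mul_left hdvd)
    have := ha.pos
    omega
  rw [Nat.card_Icc, Nat.add_sub_cancel] at hsum
  rw [← pow_add]
  refine neg_one_pow_congr ?_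
  simp only [Nat.even_iff]
  omega

theorem jacobiSym_eq_neg_one_pow_mul_jacobiSym_two_mul_sub {a r : ℕ} (ha : Odd a)
    (hr : r ≤ 2 * a) :
    J(r | a) = (-1) ^ (a / 2) * J((2 * a - r : ℕ) | a) := by
  rw [← ZMod.χ₄_eq_neg_one_pow (Nat.odd_iff.1 ha), ← jacobiSym.at_neg_one ha,
    ← jacobiSym.mul_left]
  refine jacobiSym.mod_left' ?_
  push_cast [hr]
  rw [show -1 * (2 * (a : ℤ) - r) = r + (-2) * a by ring, Int.add_mul_emod_self_right]

theorem jacobiSym_eq_neg_one_pow_sum_div {a b : ℕ} (ha : Odd a) (hb : Odd b)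
    (hab : a.Coprime b) :
    J(b | a) = (-1) ^ ∑ y ∈ Icc 1 (a / 2), b * y / a := by
  induction a using Nat.strong_induction_on generalizing b with
  | _ a ih =>
  have ha0 : 0 < a := ha.pos
  have small : ∀ b < a, Odd b → a.Coprime b →
      J(b | a) = (-1) ^ ∑ y ∈ Icc 1 (a / 2), b * y / a := by
    intro b hba hb hab
    have hrect := sum_div_add_sum_div_eq_of_coprime ha0 hb.pos hab
    rw [show (a - 1) / 2 = a / 2 by obtain ⟨i, rfl⟩ := ha; omega,
      show (b - 1) / 2 = b / 2 by obtain ⟨j, rfl⟩ := hb; omega] at hrect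
    rw [jacobiSym.quadratic_reciprocity hb ha, ih b hba hb ha hab.symm, ← pow_add, mul_comm,
      ← hrect]
    refine neg_one_pow_congr ?_
    simp only [Nat.even_add]
    tauto
  rcases eq_or_ne a 1 with rfl | ha1
  · simp [jacobiSym.one_right]
  obtain ⟨r, k, rfl, hr, hrodd⟩ : ∃ r k, b = r + 2 * k * a ∧ r < 2 * a ∧ Odd r := by
    refine ⟨b % (2 * a), b / (2 * a), ?_, Nat.mod_lt _ (by omega), ?_⟩
    · rw [mul_right_comm, Nat.mod_add_div]
    · rwa [Nat.odd_iff, Nat.mod_mod_of_dvd _ (dvd_mul_right 2 a), ← Nat.odd_iff]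
  have hcop : a.Coprime r := (Nat.coprime_add_mul_right_right a r (2 * k)).1 hab
  rw [jacobiSym_natCast_add_mul, sum_add_mul_mul_div ha0, pow_add, mul_assoc, pow_mul,
    neg_one_sq, one_pow, mul_one]
  rcases lt_trichotomy r a with hlt | rfl | hgt
  · exact small r hlt hrodd hcop
  · exact absurd ((Nat.coprime_self _).1 hcop) ha1
  have hsodd : Odd (2 * a - r) := by
    obtain ⟨j, rfl⟩ := hrodd
    exact ⟨a - j - 1, by omega⟩
  have hscop : a.Coprime (2 * a - r) :=
    ((Nat.coprime_self_sub_right hr.le).2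
      ((Nat.coprime_two_left.2 hrodd).mul_left hcop)).coprime_mul_left
  rw [jacobiSym_eq_neg_one_pow_mul_jacobiSym_two_mul_sub ha hr.le, small _ (by omega) hsodd hscop,
    neg_one_pow_sum_div_eq_neg_one_pow_mul_sum_sub_div ha hr.le hcop]

theorem jacobiSym_eq_neg_one_pow_sum_div_add_sum {a b : ℕ} (ha : Odd a) (hb : Even b)
    (hab : a.Coprime b) :
    J(b | a) = (-1) ^ (∑ y ∈ Icc 1 (a / 2), b * y / a + ∑ y ∈ Icc 1 (a / 2), y) := by
  rw [← jacobiSym_natCast_add_mul b 1 a, jacobiSym_eq_neg_one_pow_sum_div ha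
    (by simpa using hb.add_odd ha) ((Nat.coprime_add_mul_right_right a b 1).2 hab),
    sum_add_mul_mul_div ha.pos, one_mul]

theorem lt_mod_two_mul_iff_odd_div {n k : ℕ} (hn : 0 < n) (hk : ¬ n ∣ k) :
    n < k % (2 * n) ↔ Odd (k / n) := by
  have hne : k % (2 * n) ≠ n := fun h => hk ⟨2 * (k / (2 * n)) + 1, by
    have := Nat.mod_add_div k (2 * n)
    rw [h] at this
    linarith⟩
  have hlt : k % (2 * n) / n < 2 :=
    (Nat.div_lt_iff_lt_mul hn).2 (by rw [mul_comm]; exact Nat.mod_lt _ (by omega))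
  rw [Nat.odd_iff, ← Nat.mod_mul_right_div_self, mul_comm n 2]
  constructor
  · intro h
    have := (Nat.le_div_iff_mul_le hn).2 (by omega : 1 * n ≤ k % (2 * n))
    omega
  · intro h
    have := (Nat.le_div_iff_mul_le hn).1 (by omega : 1 ≤ k % (2 * n) / n)
    omega

theorem neg_one_pow_sum_eq_neg_one_pow_card_filter_odd {ι R : Type*} [CommMonoid R]
    [HasDistribNeg R] (s : Finset ι) (f : ι → ℕ) :
    (-1 : R) ^ (∑ x ∈ s, f x) = (-1) ^ #{x ∈ s | Odd (f x)} := by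
  rw [← prod_pow_eq_pow_sum, ← prod_const, prod_filter]
  refine prod_congr rfl fun x _ => ?_
  split_ifs with h
  · exact h.neg_one_pow
  · exact (Nat.not_odd_iff_even.1 h).neg_one_pow

theorem neg_one_pow_card_filter_lt_mod_two_mul {ι : Type*} {n : ℕ} (hn : 0 < n) (s : Finset ι)
    (f : ι → ℕ) (hs : ∀ x ∈ s, ¬ n ∣ f x) :
    (-1 : ℤ) ^ #{x ∈ s | n < f x % (2 * n)} = (-1) ^ ∑ x ∈ s, f x / n := by
  rw [neg_one_pow_sum_eq_neg_one_pow_card_filter_odd]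
  exact congrArg _ (congrArg card (filter_congr fun x hx =>
    lt_mod_two_mul_iff_odd_div hn (hs x hx)))

theorem jacobiSym_two_eq_neg_one_pow_sum {a : ℕ} (ha : Odd a) :
    J(2 | a) = (-1) ^ ∑ y ∈ Icc 1 (a / 2), y := by
  have hzero : ∑ y ∈ Icc 1 (a / 2), 2 * y / a = 0 := sum_eq_zero fun y hy =>
    Nat.div_eq_of_lt (by obtain ⟨i, rfl⟩ := ha; have := mem_Icc.1 hy; omega)
  have := jacobiSym_eq_neg_one_pow_sum_div_add_sum ha even_two (Nat.coprime_two_right.2 ha)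
  rwa [hzero, zero_add, Nat.cast_two] at this

theorem sub_one_mul_sub_two_div_four {a m : ℕ} (ha : Odd a) (hm : Even m) :
    (a - 1) * (m - 2) / 4 = (m - 2) / 2 * (a / 2) := by
  obtain ⟨i, rfl⟩ := ha
  obtain ⟨j, rfl⟩ := hm
  rw [show 2 * i + 1 - 1 = 2 * i by omega, show (2 * i + 1) / 2 = i by omega,
    show j + j - 2 = 2 * (j - 1) by omega, show 2 * (j - 1) / 2 = j - 1 by omega,
    show 2 * i * (2 * (j - 1)) = 4 * ((j - 1) * i) by ring, Nat.mul_div_cancel_left _ four_pos]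

/-- Let `m ≥ 2` be an even integer and `a` a positive integer with `gcd(a,m) = 1`
(so `a` is odd).  Then `(-1)^{(a-1)(m-2)/4 + N}` equals the Jacobi symbol `(2m/a)`,
where `N = #{x : 1 ≤ x ≤ (m-2)/2 and {ax}_{2m} > m}` and `{y}_{2m}` denotes the residue
of `y` modulo `2m` in `[0, 2m-1]`. -/
theorem stmt6 (m a : ℕ) (hm : 2 ≤ m) (hmeven : Even m) (ha : 0 < a)
    (hcop : Nat.Coprime a m) :
    (-1 : ℤ) ^ ((a - 1) * (m - 2) / 4 +
        ((Finset.Icc 1 ((m - 2) / 2)).filter fun x => m < (a * x) % (2 * m)).card) =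
      jacobiSym (2 * m : ℤ) a := by
  have hodd : Odd a := Nat.coprime_two_right.1 (hcop.coprime_dvd_right hmeven.two_dvd)
  have hcount := neg_one_pow_card_filter_lt_mod_two_mul (n := m) (by omega) (Icc 1 ((m - 2) / 2))
    (a * ·) fun x hx hdvd => by
      have hx := mem_Icc.1 hx
      have := Nat.le_of_dvd (by omega) (hcop.symm.dvd_of_dvd_mul_left hdvd)
      omega
  have hrect := sum_div_add_sum_div_eq_of_coprime (by omega) ha hcop.symm
  rw [show (m - 1) / 2 = (m - 2) / 2 by obtain ⟨j, rfl⟩ := hmeven; omega,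
    show (a - 1) / 2 = a / 2 by obtain ⟨i, rfl⟩ := hodd; omega] at hrect
  rw [jacobiSym.mul_left, jacobiSym_two_eq_neg_one_pow_sum hodd,
    jacobiSym_eq_neg_one_pow_sum_div_add_sum hodd hmeven hcop, pow_add, hcount,
    sub_one_mul_sub_two_div_four hodd hmeven, ← hrect, ← pow_add, ← pow_add]
  refine neg_one_pow_congr ?_
  simp only [Nat.even_add]
  tauto
end

section
/- Let m ≥ 2 be an integer, let v = (c_0, c_1, …, c_{m−1}) ∈ ℂ^m, let ζ = e^{2πi/m}, and for l = 1, …, m set λ_l = ∑_{j=0}^{m−1} c_j·ζ^{lj} (these are exactly the eigenvalues of the circulant matrix [c_{(j−i) mod m}]_{0≤i,j≤m−1}). Then the almost circulant matrix W(v) = [c_{(j−i) mod m}]_{1≤i,j≤m−1} satisfies det W(v) = (1/m)·∑_{l=1}^{m} ∏_{k∈[1,m], k≠l} λ_k. In particular, if λ_m = 0 then det W(v) = (1/m)·λ_1·λ_2⋯λ_{m−1}. -/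
open Finset Real

open Fin.NatCast in
lemma auxSum7 (m : ℕ) [NeZero m] (f : ℕ → ℂ) (hf : ∀ a : ℕ, f a = f (a % m)) :
    ∑ l ∈ Finset.Icc 1 m, ∏ k ∈ (Finset.Icc 1 m).erase l, f k
      = ∑ l : Fin m, ∏ k ∈ Finset.univ.erase l, f k.val := by
  have hmpos : 0 < m := Nat.pos_of_ne_zero (NeZero.ne m)
  have hji : ∀ a ∈ Finset.Icc 1 m, (if ((a : Fin m)).val = 0 then m else ((a : Fin m)).val) = a := by
    intro a ha
    simp only [Finset.mem_Icc] at ha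
    rcases eq_or_lt_of_le ha.2 with rfl | hlt
    · simp [Fin.val_natCast, Nat.mod_self]
    · rw [Fin.val_natCast, Nat.mod_eq_of_lt hlt, if_neg (by omega)]
  have hij : ∀ b : Fin m, (((if b.val = 0 then m else b.val) : ℕ) : Fin m) = b := by
    intro b
    by_cases hb : b.val = 0
    · rw [if_pos hb]
      apply Fin.ext
      rw [Fin.val_natCast, Nat.mod_self, hb]
    · rw [if_neg hb, Fin.cast_val_eq_self]
  have hinj : ∀ x ∈ Finset.Icc 1 m, ∀ y ∈ Finset.Icc 1 m, (x : Fin m) = (y : Fin m) → x = y := by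
    intro x hx y hy h
    rw [← hji x hx, ← hji y hy, h]
  have hjmem : ∀ b : Fin m, (if b.val = 0 then m else b.val) ∈ Finset.Icc 1 m := by
    intro b
    by_cases hb : b.val = 0
    · simp only [hb, if_pos]
      exact Finset.mem_Icc.2 ⟨hmpos, le_refl m⟩
    · rw [if_neg hb]
      exact Finset.mem_Icc.2 ⟨by omega, le_of_lt b.isLt⟩
  refine Finset.sum_nbij' (i := fun a => (a : Fin m))
    (j := fun b => if b.val = 0 then m else b.val)
    (fun a _ => Finset.mem_univ _) (fun b _ => hjmem b) hji (fun b _ => hij b) ?_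
  intro a ha
  refine Finset.prod_nbij' (i := fun k => (k : Fin m))
    (j := fun b => if b.val = 0 then m else b.val) ?_ ?_ ?_ ?_ ?_
  · intro k hk
    rw [Finset.mem_erase] at hk ⊢
    exact ⟨fun h => hk.1 (hinj _ hk.2 _ ha h), Finset.mem_univ _⟩
  · intro b hb
    rw [Finset.mem_erase] at hb ⊢
    refine ⟨fun h => hb.1 ?_, hjmem b⟩
    rw [← hij b, h]
  · exact fun k hk => hji k (Finset.mem_erase.1 hk).2
  · exact fun b _ => hij b
  · intro k hk
    rw [hf k, Fin.val_natCast]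


/-- Let `m ≥ 2`, let `v = (c_0, …, c_{m-1}) ∈ ℂ^m`, let `ζ = e^{2πi/m}`, and for
`l = 1, …, m` let `λ_l = ∑_{j=0}^{m-1} c_j ζ^{lj}` (the eigenvalues of the circulant matrix
of `v`).  Then the almost circulant matrix `W(v) = [c_{(j-i) mod m}]_{1 ≤ i,j ≤ m-1}`
satisfies `det W(v) = (1/m) ∑_{l=1}^{m} ∏_{k ∈ [1,m], k ≠ l} λ_k`; in particular, if
`λ_m = 0` then `det W(v) = (1/m) λ_1 λ_2 ⋯ λ_{m-1}`. -/
theorem stmt7 (m : ℕ) (hm : 2 ≤ m) [NeZero m] (c : ZMod m → ℂ)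
    (ζ : ℂ) (hζ : ζ = Complex.exp (2 * Real.pi * Complex.I / m))
    (lam : ℕ → ℂ) (hlam : ∀ l : ℕ, lam l = ∑ j : ZMod m, c j * ζ ^ (l * j.val))
    (W : Matrix (Fin (m - 1)) (Fin (m - 1)) ℂ)
    (hW : W = Matrix.of fun i j : Fin (m - 1) =>
      c ((((j : ℕ) : ZMod m)) - (((i : ℕ) : ZMod m)))) :
    (W.det = (1 / (m : ℂ)) * ∑ l ∈ Finset.Icc 1 m, ∏ k ∈ (Finset.Icc 1 m).erase l, lam k) ∧
      (lam m = 0 → W.det = (1 / (m : ℂ)) * ∏ k ∈ Finset.Icc 1 (m - 1), lam k) := by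
  obtain ⟨n, rfl⟩ : ∃ n, m = n + 1 := ⟨m - 1, by omega⟩
  have hm0 : (n + 1 : ℕ) ≠ 0 := Nat.succ_ne_zero n
  have hcne : (((n + 1 : ℕ) : ℂ)) ≠ 0 := Nat.cast_ne_zero.2 hm0
  have hprim : IsPrimitiveRoot ζ (n + 1) := by
    rw [hζ]; exact Complex.isPrimitiveRoot_exp (n + 1) hm0
  have hζ0 : ζ ≠ 0 := by rw [hζ]; exact Complex.exp_ne_zero _
  have hζ1 : ζ ^ (n + 1) = 1 := hprim.pow_eq_one
  have hpowmod : ∀ a : ℕ, ζ ^ a = ζ ^ (a % (n + 1)) := by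
    intro a
    conv_lhs => rw [← Nat.div_add_mod a (n + 1)]
    rw [pow_add, pow_mul, hζ1, one_pow, one_mul]
  have hmodeq : ∀ a b : ℕ, a % (n + 1) = b % (n + 1) → ζ ^ a = ζ ^ b := fun a b h => by
    rw [hpowmod a, hpowmod b, h]
  set C : Matrix (Fin (n + 1)) (Fin (n + 1)) ℂ :=
    Matrix.of (fun i j => c (((j : ℕ) : ZMod (n + 1)) - ((i : ℕ) : ZMod (n + 1)))) with hC
  set F : Matrix (Fin (n + 1)) (Fin (n + 1)) ℂ :=
    Matrix.of (fun i l : Fin (n + 1) => ζ ^ ((i : ℕ) * (l : ℕ))) with hF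
  set G : Matrix (Fin (n + 1)) (Fin (n + 1)) ℂ :=
    Matrix.of (fun l j : Fin (n + 1) =>
      (((n + 1 : ℕ) : ℂ))⁻¹ * (ζ ^ ((l : ℕ) * (j : ℕ)))⁻¹) with hG
  set D : Matrix (Fin (n + 1)) (Fin (n + 1)) ℂ :=
    Matrix.diagonal (fun l : Fin (n + 1) => lam (l : ℕ)) with hD
  have hFG : F * G = 1 := by
    ext j j'
    rw [Matrix.mul_apply, Matrix.one_apply]
    have hterm : ∀ l : Fin (n + 1), F j l * G l j'
        = (((n + 1 : ℕ) : ℂ))⁻¹ * (ζ ^ (j : ℕ) * (ζ ^ (j' : ℕ))⁻¹) ^ (l : ℕ) := by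
      intro l
      simp only [hF, hG, Matrix.of_apply]
      have e1 : ζ ^ ((j : ℕ) * (l : ℕ)) = (ζ ^ (j : ℕ)) ^ (l : ℕ) := pow_mul ζ _ _
      have e2 : ζ ^ ((l : ℕ) * (j' : ℕ)) = (ζ ^ (j' : ℕ)) ^ (l : ℕ) := by
        rw [mul_comm]; exact pow_mul ζ _ _
      rw [e1, e2, mul_pow, ← inv_pow]
      ring
    rw [Finset.sum_congr rfl fun l _ => hterm l, ← Finset.mul_sum]
    have hsum : ∑ l : Fin (n + 1), (ζ ^ (j : ℕ) * (ζ ^ (j' : ℕ))⁻¹) ^ (l : ℕ)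
        = ∑ i ∈ Finset.range (n + 1), (ζ ^ (j : ℕ) * (ζ ^ (j' : ℕ))⁻¹) ^ i :=
      Fin.sum_univ_eq_sum_range _ _
    rw [hsum]
    by_cases hjj : j = j'
    · subst hjj
      rw [mul_inv_cancel₀ (pow_ne_zero _ hζ0), if_pos rfl]
      simp only [one_pow, Finset.sum_const, Finset.card_range, nsmul_eq_mul, mul_one]
      rw [inv_mul_cancel₀ hcne]
    · have hx1 : ζ ^ (j : ℕ) * (ζ ^ (j' : ℕ))⁻¹ ≠ 1 := by
        intro h
        have : ζ ^ (j : ℕ) = ζ ^ (j' : ℕ) := by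
          field_simp at h; exact h
        exact hjj (Fin.ext (hprim.pow_inj j.isLt j'.isLt this))
      have hxm : (ζ ^ (j : ℕ) * (ζ ^ (j' : ℕ))⁻¹) ^ (n + 1) = 1 := by
        rw [mul_pow, ← pow_mul, mul_comm (j : ℕ) (n + 1), pow_mul, hζ1, one_pow, one_mul,
          inv_pow, ← pow_mul, mul_comm (j' : ℕ) (n + 1), pow_mul, hζ1, one_pow, inv_one]
      rw [geom_sum_eq hx1, hxm, sub_self, zero_div, mul_zero, if_neg hjj]
  have hGF : G * F = 1 := mul_eq_one_comm.mp hFG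
  have hbij : Function.Bijective (fun j : Fin (n + 1) => ((j : ℕ) : ZMod (n + 1))) := by
    rw [Fintype.bijective_iff_injective_and_card]
    refine ⟨fun a b h => ?_, by simp [ZMod.card]⟩
    have := congrArg ZMod.val h
    simpa [ZMod.val_natCast, Nat.mod_eq_of_lt a.isLt, Nat.mod_eq_of_lt b.isLt, Fin.ext_iff]
      using this
  have hCF : C * F = F * D := by
    ext i l
    rw [Matrix.mul_apply, hD, Matrix.mul_diagonal, hlam]
    have lhs1 : ∑ j : Fin (n + 1), C i j * F j l
        = ∑ k : ZMod (n + 1), c (k - ((i : ℕ) : ZMod (n + 1))) * ζ ^ (k.val * (l : ℕ)) := by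
      refine Fintype.sum_bijective _ hbij _ _ fun j => ?_
      simp only [hC, hF, Matrix.of_apply]
      congr 2
      rw [ZMod.val_natCast, Nat.mod_eq_of_lt j.isLt]
    rw [lhs1]
    have lhs2 : ∑ k : ZMod (n + 1), c (k - ((i : ℕ) : ZMod (n + 1))) * ζ ^ (k.val * (l : ℕ))
        = ∑ k : ZMod (n + 1), c k * ζ ^ ((k + ((i : ℕ) : ZMod (n + 1))).val * (l : ℕ)) := by
      refine (Fintype.sum_equiv (Equiv.addRight ((i : ℕ) : ZMod (n + 1))) _ _ fun k => ?_).symm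
      simp only [Equiv.coe_addRight]
      rw [add_sub_cancel_right]
    rw [lhs2, hF, Matrix.of_apply, Finset.mul_sum]
    refine Finset.sum_congr rfl fun k _ => ?_
    have hexp : ζ ^ ((k + ((i : ℕ) : ZMod (n + 1))).val * (l : ℕ))
        = ζ ^ ((k.val + (i : ℕ)) * (l : ℕ)) := by
      apply hmodeq
      apply Nat.ModEq.mul_right
      calc ((k + ((i : ℕ) : ZMod (n + 1))).val : ℕ)
          ≡ k.val + ((i : ℕ) : ZMod (n + 1)).val [MOD n + 1] := by
            rw [ZMod.val_add]; exact Nat.mod_modEq _ _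
        _ ≡ k.val + (i : ℕ) [MOD n + 1] :=
            Nat.ModEq.add_left _ (by rw [ZMod.val_natCast]; exact Nat.mod_modEq _ _)
    rw [hexp]
    rw [mul_comm (ζ ^ ((i : ℕ) * (l : ℕ))), mul_assoc, ← pow_add]
    congr 2
    ring
  have hCeq : C = F * D * G := by
    calc C = C * (F * G) := by rw [hFG, Matrix.mul_one]
    _ = C * F * G := by rw [Matrix.mul_assoc]
    _ = F * D * G := by rw [hCF]
  have hdet : G.det * F.det = 1 := by rw [← Matrix.det_mul, hGF, Matrix.det_one]
  have hadjF : Matrix.adjugate F = F.det • G := by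
    calc Matrix.adjugate F = G * F * Matrix.adjugate F := by rw [hGF, Matrix.one_mul]
    _ = G * (F * Matrix.adjugate F) := by rw [Matrix.mul_assoc]
    _ = G * (F.det • 1) := by rw [Matrix.mul_adjugate]
    _ = F.det • G := by rw [Matrix.mul_smul, Matrix.mul_one]
  have hadjG : Matrix.adjugate G = G.det • F := by
    calc Matrix.adjugate G = F * G * Matrix.adjugate G := by rw [hFG, Matrix.one_mul]
    _ = F * (G * Matrix.adjugate G) := by rw [Matrix.mul_assoc]
    _ = F * (G.det • 1) := by rw [Matrix.mul_adjugate]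
    _ = G.det • F := by rw [Matrix.mul_smul, Matrix.mul_one]
  have hadjC : Matrix.adjugate C = F * Matrix.adjugate D * G := by
    rw [hCeq, Matrix.adjugate_mul_distrib, Matrix.adjugate_mul_distrib, hadjF, hadjG,
      Matrix.smul_mul, Matrix.mul_smul, Matrix.mul_smul, smul_smul, hdet, one_smul,
      Matrix.mul_assoc]
  have hlammod : ∀ a : ℕ, lam a = lam (a % (n + 1)) := by
    intro a
    rw [hlam, hlam]
    refine Finset.sum_congr rfl fun j _ => ?_
    congr 1
    exact hmodeq _ _ ((Nat.mod_modEq a (n + 1)).symm.mul_right j.val)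
  have hsubW : C.submatrix Fin.succ Fin.succ = W := by
    rw [hW]
    ext a b
    simp only [Matrix.submatrix_apply, hC, Matrix.of_apply, Fin.val_succ]
    congr 1
    push_cast
    ring
  have hW00 : W.det = Matrix.adjugate C 0 0 := by
    rw [Matrix.adjugate_apply, Matrix.det_succ_row_zero]
    rw [Finset.sum_eq_single (0 : Fin (n + 1))]
    · simp only [Fin.val_zero, pow_zero, one_mul, Matrix.updateRow_self, Fin.succAbove_zero,
        Pi.single_eq_same]
      rw [← hsubW]
      congr 1
    · intro j _ hj
      simp only [Matrix.updateRow_self]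
      rw [Pi.single_eq_of_ne hj, mul_zero, zero_mul]
    · intro h; exact absurd (Finset.mem_univ _) h
  have hval : Matrix.adjugate C 0 0
      = (((n + 1 : ℕ) : ℂ))⁻¹ * ∑ l : Fin (n + 1), ∏ k ∈ Finset.univ.erase l, lam (k : ℕ) := by
    rw [hadjC, hD, Matrix.adjugate_diagonal, Matrix.mul_apply]
    have hterm : ∀ l : Fin (n + 1),
        (F * Matrix.diagonal fun i : Fin (n + 1) => ∏ k ∈ Finset.univ.erase i, lam (k : ℕ)) 0 l
            * G l 0
          = (((n + 1 : ℕ) : ℂ))⁻¹ * ∏ k ∈ Finset.univ.erase l, lam (k : ℕ) := by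
      intro l
      rw [Matrix.mul_diagonal]
      simp only [hF, hG, Matrix.of_apply, Fin.val_zero, zero_mul, mul_zero, pow_zero, inv_one,
        mul_one, one_mul]
      ring
    rw [Finset.sum_congr rfl fun l _ => hterm l, ← Finset.mul_sum]
  have hfirst : W.det = (1 / ((n + 1 : ℕ) : ℂ)) *
      ∑ l ∈ Finset.Icc 1 (n + 1), ∏ k ∈ (Finset.Icc 1 (n + 1)).erase l, lam k := by
    rw [hW00, hval, ← auxSum7 (n + 1) lam hlammod, one_div]
  refine ⟨hfirst, fun h0 => ?_⟩
  rw [hfirst]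
  congr 1
  rw [Finset.sum_eq_single (n + 1)]
  · rw [Finset.Icc_erase_right, Finset.Ico_add_one_right_eq_Icc]
    norm_num
  · intro l hl hne
    exact Finset.prod_eq_zero
      (Finset.mem_erase.2 ⟨fun h => hne h.symm, Finset.mem_Icc.2 ⟨by omega, le_refl _⟩⟩) h0
  · intro h
    exact absurd (Finset.mem_Icc.2 ⟨by omega, le_refl _⟩) h
end

section
/- Let q = 2n+1 be an odd prime power, let χ be a generator of the group of ℂ-valued multiplicative characters of F_q^×, and let d ∈ F_q^×. Then the characteristic polynomial of the n×n complex matrix M_q(d) = [φ(s_i + d·s_j)]_{1≤i,j≤n} equals ∏_{k=1}^{n} (X − λ_k(d)); that is, λ_1(d), λ_2(d), …, λ_n(d) are exactly all the eigenvalues of M_q(d), counted with multiplicity. -/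
/-! Let `T` be the set of nonzero squares of `F`, so `#T = n` and `φ = 1` on `T`.
Substituting `y ↦ x y` in `∑_{y ∈ T} φ(x + d y) ψ(y)` shows that for every multiplicative
character `ψ` the vector `(ψ(x))_{x ∈ T}` is an eigenvector of `M_q(d)` with eigenvalue
`∑_{y ∈ T} φ(1 + d y) ψ(y)`, which is `λ_k(d)` for `ψ = χ^k` because `ψ(0) = 0`. As `χ`
has order `2n`, the characters `χ^k χ^{-l}` with `1 ≤ k ≠ l ≤ n` are nontrivial on `T`, so by
orthogonality the eigenvectors for `χ^1, …, χ^n` form an invertible matrix, which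
diagonalises `M_q(d)`. -/

open Finset Polynomial

/-- The quadratic character of a finite field `F`, viewed as a `ℂ`-valued
multiplicative character. -/
noncomputable def phiC (F : Type*) [Field F] [Fintype F] [DecidableEq F] : MulChar F ℂ :=
  (quadraticChar F).ringHomComp (Int.castRingHom ℂ)

theorem Matrix.charpoly_eq_prod_of_mul_eq_mul_diagonal {R ι : Type*} [CommRing R] [Fintype ι]
    [DecidableEq ι] {M P Q : Matrix ι ι R} {v : ι → R} (hQP : Q * P = 1)
    (hMP : M * P = P * diagonal v) : M.charpoly = ∏ i, (X - C (v i)) := by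
  have hM : M = P * diagonal v * Q := by
    rw [← hMP, mul_assoc, mul_eq_one_comm.mp hQP, mul_one]
  rw [hM, charpoly_mul_comm, ← mul_assoc, hQP, one_mul, charpoly_diagonal]

theorem pow_succ_inv_mul_pow_succ_sq_ne_one {G : Type*} [CommGroup G] {g : G} {n : ℕ}
    (hg : orderOf g = 2 * n) {k l : ℕ} (hk : k < n) (hl : l < n) (hkl : k ≠ l) :
    ((g ^ (k + 1))⁻¹ * g ^ (l + 1)) ^ 2 ≠ 1 := by
  intro h
  rw [mul_pow, inv_pow, inv_mul_eq_one, ← pow_mul, ← pow_mul, add_mul, add_mul, pow_add,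
    pow_add, mul_left_inj] at h
  have := pow_injOn_Iio_orderOf (x := g) (by simp [hg]; omega) (by simp [hg]; omega) h
  omega

theorem MulChar.orderOf_eq_card_sub_one {F : Type*} [Field F] [Fintype F]
    {χ : MulChar F ℂ} (hχ : ∀ ψ : MulChar F ℂ, ψ ∈ Subgroup.zpowers χ) :
    orderOf χ = Fintype.card F - 1 := by
  rw [orderOf_eq_card_of_forall_mem_zpowers hχ, card_eq_card_units_of_hasEnoughRootsOfUnity,
    Nat.card_units, Nat.card_eq_fintype_card]

theorem injective_comp_succ {α : Type*} {n : ℕ} {s : ℕ → α}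
    (hsinj : Set.InjOn s (Set.Iic n)) :
    Function.Injective fun j : Fin n ↦ s (j + 1) := fun i j hij ↦
  Fin.ext <| Nat.succ_injective <| hsinj (Set.mem_Iic.mpr i.2) (Set.mem_Iic.mpr j.2) hij

section NonzeroSquares

variable {F : Type*} [Field F] [Fintype F] [DecidableEq F]

variable (F) in
def nonzeroSquares : Finset F := {x | IsSquare x ∧ x ≠ 0}

theorem mem_nonzeroSquares {x : F} : x ∈ nonzeroSquares F ↔ IsSquare x ∧ x ≠ 0 := by
  simp [nonzeroSquares]

theorem MulChar.sum_isSquare_mul_eq_sum_nonzeroSquares {R : Type*} [CommRing R] [Nontrivial R]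
    (ψ : MulChar F R) (f : F → R) :
    ∑ x ∈ univ.filter fun x : F ↦ IsSquare x, f x * ψ x =
      ∑ x ∈ nonzeroSquares F, f x * ψ x := by
  have hsq : (univ.filter fun x : F ↦ IsSquare x) = insert 0 (nonzeroSquares F) := by
    ext x
    by_cases hx : x = 0 <;> simp [mem_nonzeroSquares, hx]
  rw [hsq, sum_insert (by simp [mem_nonzeroSquares]), MulChar.map_zero, mul_zero, zero_add]

theorem sum_nonzeroSquares_comp_mul_left {M : Type*} [AddCommMonoid M] {u : F}
    (hu : u ∈ nonzeroSquares F) (f : F → M) :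
    ∑ x ∈ nonzeroSquares F, f (u * x) = ∑ x ∈ nonzeroSquares F, f x := by
  obtain ⟨hu, hu0⟩ := mem_nonzeroSquares.mp hu
  refine sum_nbij' (u * ·) (u⁻¹ * ·) (fun x hx ↦ ?_) (fun x hx ↦ ?_)
    (fun x _ ↦ inv_mul_cancel_left₀ hu0 x) (fun x _ ↦ mul_inv_cancel_left₀ hu0 x)
    (fun _ _ ↦ rfl) <;> simp only [mem_nonzeroSquares] at hx ⊢
  · exact ⟨hu.mul hx.1, mul_ne_zero hu0 hx.2⟩
  · exact ⟨hu.inv.mul hx.1, mul_ne_zero (inv_ne_zero hu0) hx.2⟩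

theorem MulChar.sum_nonzeroSquares_eq_zero {R : Type*} [CommRing R] [IsDomain R]
    {ψ : MulChar F R} (hψ : ψ ^ 2 ≠ 1) : ∑ x ∈ nonzeroSquares F, ψ x = 0 := by
  obtain ⟨a, ha⟩ := MulChar.ne_one_iff.mp hψ
  have hsq : (a : F) * a ∈ nonzeroSquares F :=
    mem_nonzeroSquares.mpr ⟨⟨a, rfl⟩, mul_ne_zero a.ne_zero a.ne_zero⟩
  have hfix : ψ (a * a) * ∑ x ∈ nonzeroSquares F, ψ x = ∑ x ∈ nonzeroSquares F, ψ x := by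
    simp_rw [mul_sum, ← map_mul]
    exact sum_nonzeroSquares_comp_mul_left hsq ψ
  refine (mul_left_eq_self₀.mp hfix).resolve_left fun h ↦ ha ?_
  rwa [map_mul, ← sq, ← MulChar.pow_apply_coe] at h

theorem MulChar.sum_nonzeroSquares_pow_succ_inv_mul {R : Type*} [CommRing R] [IsDomain R]
    {χ : MulChar F R} {n : ℕ} (hχ : orderOf χ = 2 * n) {k l : ℕ} (hk : k < n) (hl : l < n) :
    ∑ x ∈ nonzeroSquares F, ((χ ^ (k + 1))⁻¹ * χ ^ (l + 1)) x =
      if k = l then (#(nonzeroSquares F) : R) else 0 := by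
  split_ifs with hkl
  · subst hkl
    rw [inv_mul_cancel, card_eq_sum_ones, Nat.cast_sum, Nat.cast_one]
    exact sum_congr rfl fun x hx ↦
      MulChar.one_apply (isUnit_iff_ne_zero.mpr (mem_nonzeroSquares.mp hx).2)
  · exact MulChar.sum_nonzeroSquares_eq_zero (pow_succ_inv_mul_pow_succ_sq_ne_one hχ hk hl hkl)

theorem phiC_eq_one_of_mem_nonzeroSquares {x : F} (hx : x ∈ nonzeroSquares F) :
    phiC F x = 1 := by
  rw [mem_nonzeroSquares] at hx
  simp [phiC, (quadraticChar_one_iff_isSquare hx.2).mpr hx.1]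

theorem sum_nonzeroSquares_phiC_add_mul (ψ : MulChar F ℂ) (d : F) {x : F}
    (hx : x ∈ nonzeroSquares F) :
    ∑ y ∈ nonzeroSquares F, phiC F (x + d * y) * ψ y =
      ψ x * ∑ y ∈ nonzeroSquares F, phiC F (1 + d * y) * ψ y := by
  rw [← sum_nonzeroSquares_comp_mul_left hx, mul_sum]
  refine sum_congr rfl fun y _ ↦ ?_
  rw [show x + d * (x * y) = x * (1 + d * y) by ring, map_mul, map_mul,
    phiC_eq_one_of_mem_nonzeroSquares hx]
  ring

theorem image_comp_succ_eq_nonzeroSquares {n : ℕ} {s : ℕ → F} (hs0 : s 0 = 0)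
    (hsinj : Set.InjOn s (Set.Iic n)) (hsim : s '' Set.Iic n = {x : F | IsSquare x}) :
    univ.image (fun j : Fin n ↦ s (j + 1)) = nonzeroSquares F := by
  ext x
  have hsq : IsSquare x ↔ x ∈ s '' Set.Iic n := by rw [hsim]; rfl
  simp only [mem_image, mem_univ, true_and, mem_nonzeroSquares, hsq]
  constructor
  · rintro ⟨j, rfl⟩
    refine ⟨⟨j + 1, Set.mem_Iic.mpr j.2, rfl⟩, fun h ↦ ?_⟩
    rw [← hs0] at h
    exact Nat.succ_ne_zero _ (hsinj (Set.mem_Iic.mpr j.2) (by simp) h)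
  · rintro ⟨⟨m, hm, rfl⟩, hm0⟩
    obtain ⟨j, rfl⟩ : ∃ j, m = j + 1 :=
      Nat.exists_eq_succ_of_ne_zero (by rintro rfl; exact hm0 hs0)
    exact ⟨⟨j, by simpa using hm⟩, rfl⟩

variable {n : ℕ} {e : Fin n → F}

theorem sum_comp_eq_sum_nonzeroSquares {M : Type*} [AddCommMonoid M]
    (he_inj : Function.Injective e) (he : univ.image e = nonzeroSquares F) (f : F → M) :
    ∑ j, f (e j) = ∑ x ∈ nonzeroSquares F, f x := by
  rw [← he, sum_image fun i _ j _ h ↦ he_inj h]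

variable (e) in
noncomputable def charPowMatrix (χ : MulChar F ℂ) : Matrix (Fin n) (Fin n) ℂ :=
  Matrix.of fun j k ↦ (χ ^ (k + 1 : ℕ)) (e j)

theorem mul_charPowMatrix (he_inj : Function.Injective e)
    (he : univ.image e = nonzeroSquares F) (χ : MulChar F ℂ) (d : F) :
    Matrix.of (fun i j ↦ phiC F (e i + d * e j)) * charPowMatrix e χ =
      charPowMatrix e χ * Matrix.diagonal fun k : Fin n ↦
        ∑ y ∈ nonzeroSquares F, phiC F (1 + d * y) * (χ ^ (k + 1 : ℕ)) y := by
  ext i k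
  have hei : e i ∈ nonzeroSquares F := he ▸ mem_image_of_mem e (mem_univ i)
  rw [Matrix.mul_diagonal]
  simp only [Matrix.mul_apply, Matrix.of_apply, charPowMatrix]
  rw [sum_comp_eq_sum_nonzeroSquares he_inj he fun y ↦
      phiC F (e i + d * y) * (χ ^ (k + 1 : ℕ)) y,
    sum_nonzeroSquares_phiC_add_mul _ _ hei]

theorem inv_mul_charPowMatrix (he_inj : Function.Injective e)
    (he : univ.image e = nonzeroSquares F) {χ : MulChar F ℂ} (hχ : orderOf χ = 2 * n) :
    (n : ℂ)⁻¹ • Matrix.of (fun k j : Fin n ↦ (χ ^ (k + 1 : ℕ))⁻¹ (e j)) *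
      charPowMatrix e χ = 1 := by
  ext k l
  have hcard : #(nonzeroSquares F) = n := by
    rw [← he, card_image_of_injective _ he_inj, card_univ, Fintype.card_fin]
  rw [Matrix.smul_mul, Matrix.smul_apply, Matrix.mul_apply]
  simp only [Matrix.of_apply, charPowMatrix, ← MulChar.mul_apply]
  rw [sum_comp_eq_sum_nonzeroSquares he_inj he fun x ↦
      ((χ ^ (k + 1 : ℕ))⁻¹ * χ ^ (l + 1 : ℕ)) x,
    MulChar.sum_nonzeroSquares_pow_succ_inv_mul hχ k.2 l.2, Matrix.one_apply, hcard]
  simp [Fin.val_inj, apply_ite, (Fin.pos k).ne']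

end NonzeroSquares

theorem stmt9_general (F : Type*) [Field F] [Fintype F] [DecidableEq F]
    (q n : ℕ) (hq : q = Fintype.card F) (hqn : q = 2 * n + 1)
    (χ : MulChar F ℂ) (hχ : ∀ ψ : MulChar F ℂ, ψ ∈ Subgroup.zpowers χ)
    (d : F)
    (s : ℕ → F) (hs0 : s 0 = 0)
    (hsinj : Set.InjOn s (Set.Iic n))
    (hsim : s '' (Set.Iic n) = {x : F | IsSquare x})
    (lam : ℕ → ℂ)
    (hlam : ∀ k : ℕ, lam k =
      ∑ x ∈ Finset.univ.filter fun x : F => IsSquare x, phiC F (1 + d * x) * (χ ^ k) x) :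
    (Matrix.of fun i j : Fin n =>
        phiC F (s ((i : ℕ) + 1) + d * s ((j : ℕ) + 1))).charpoly =
      ∏ k ∈ Finset.Icc 1 n, (Polynomial.X - Polynomial.C (lam k)) := by
  have horder : orderOf χ = 2 * n := by
    rw [MulChar.orderOf_eq_card_sub_one hχ, ← hq, hqn, Nat.add_sub_cancel]
  have he_inj := injective_comp_succ hsinj
  have he := image_comp_succ_eq_nonzeroSquares hs0 hsinj hsim
  rw [Matrix.charpoly_eq_prod_of_mul_eq_mul_diagonal (inv_mul_charPowMatrix he_inj he horder)
      (mul_charPowMatrix he_inj he χ d),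
    ← Ico_add_one_right_eq_Icc, prod_Ico_eq_prod_range, Nat.add_sub_cancel,
    ← Fin.prod_univ_eq_prod_range]
  refine prod_congr rfl fun k _ ↦ ?_
  rw [add_comm 1, hlam, MulChar.sum_isSquare_mul_eq_sum_nonzeroSquares]

/-- Let `q = 2n+1` be an odd prime power, `χ` a generator of the group of `ℂ`-valued
multiplicative characters of `F_q`, and `d ∈ F_q^×`.  Then the characteristic polynomial
of the `n × n` matrix `M_q(d) = [φ(s_i + d s_j)]_{1 ≤ i,j ≤ n}` equals
`∏_{k=1}^{n} (X - λ_k(d))`, where `λ_k(d) = ∑_{s ∈ S_q} φ(1 + d s) χ^k(s)`; that is,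
`λ_1(d), …, λ_n(d)` are exactly the eigenvalues of `M_q(d)` with multiplicity. -/
theorem stmt9 (F : Type*) [Field F] [Fintype F] [DecidableEq F]
    (q n : ℕ) (hq : q = Fintype.card F) (hqn : q = 2 * n + 1)
    (χ : MulChar F ℂ) (hχ : ∀ ψ : MulChar F ℂ, ψ ∈ Subgroup.zpowers χ)
    (d : F) (hd : d ≠ 0)
    (s : ℕ → F) (hs0 : s 0 = 0) (hs1 : s 1 = 1)
    (hsinj : Set.InjOn s (Set.Iic n))
    (hsim : s '' (Set.Iic n) = {x : F | IsSquare x})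
    (lam : ℕ → ℂ)
    (hlam : ∀ k : ℕ, lam k =
      ∑ x ∈ Finset.univ.filter fun x : F => IsSquare x, phiC F (1 + d * x) * (χ ^ k) x) :
    (Matrix.of fun i j : Fin n =>
        phiC F (s ((i : ℕ) + 1) + d * s ((j : ℕ) + 1))).charpoly =
      ∏ k ∈ Finset.Icc 1 n, (Polynomial.X - Polynomial.C (lam k)) :=
  stmt9_general F q n hq hqn χ hχ d s hs0 hsinj hsim lam hlam
end

section
/- Let q = 2n+1 be an odd prime power, let χ be a generator of the group of ℂ-valued multiplicative characters of F_q^×, and let d ∈ F_q^× be a nonsquare. Then for every k = 1, 2, …, n, χ^k(d)·λ_k(d) = ((−1)^k/2)·(J_q(φ,χ^k) − J_q(φ,χ^{−k})). -/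
open Finset

section Aux

variable {F : Type*} [Field F] [Fintype F] [DecidableEq F]

lemma phiC_eq_neg_one {a : F} (ha : ¬ IsSquare a) : phiC F a = -1 := by
  simp only [phiC, MulChar.ringHomComp_apply,
    quadraticChar_neg_one_iff_not_isSquare.mpr ha]
  norm_num

lemma phiC_eq_one {a : F} (ha0 : a ≠ 0) (ha : IsSquare a) : phiC F a = 1 := by
  simp only [phiC, MulChar.ringHomComp_apply,
    (quadraticChar_one_iff_isSquare ha0).mpr ha]
  norm_num

lemma phiC_zero : phiC F (0 : F) = 0 :=
  (phiC F).map_nonunit not_isUnit_zero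

lemma phiC_sq {a : F} (ha : a ≠ 0) : phiC F a * phiC F a = 1 := by
  have h := quadraticChar_sq_one (F := F) ha
  simp only [phiC, MulChar.ringHomComp_apply]
  rw [← map_mul, ← sq, h, map_one]

lemma phiC_inv (a : F) : phiC F a⁻¹ = phiC F a := by
  rcases eq_or_ne a 0 with rfl | ha
  · rw [inv_zero]
  · have h1 : phiC F a⁻¹ * phiC F a = 1 := by
      rw [← map_mul, inv_mul_cancel₀ ha, map_one]
    calc phiC F a⁻¹ = phiC F a⁻¹ * (phiC F a * phiC F a) := by rw [phiC_sq ha, mul_one]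
      _ = (phiC F a⁻¹ * phiC F a) * phiC F a := by ring
      _ = phiC F a := by rw [h1, one_mul]

/-- The key transformation: `∑ t, φ(1+t) ψ(t) = ψ(-1) ⬝ J(ψ, φ)`. -/
lemma sum_phiC_one_add (ψ : MulChar F ℂ) :
    ∑ t : F, phiC F (1 + t) * ψ t = ψ (-1) * jacobiSum ψ (phiC F) := by
  rw [jacobiSum, Finset.mul_sum]
  refine Fintype.sum_equiv (Equiv.neg F) _ _ fun x => ?_
  simp only [Equiv.neg_apply]
  rw [show (1 : F) - -x = 1 + x by ring, show (-x : F) = -1 * x by ring, map_mul]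
  have hs : ψ (-1) * ψ (-1) = 1 := by rw [← map_mul, neg_mul_neg, one_mul, map_one]
  ring_nf
  rw [sq, hs]
  ring

/-- Inversion trick: `∑ t, φ(t) φ(1+t) ψ(t) = ∑ t, φ(1+t) ψ⁻¹(t)`. -/
lemma sum_inv_trick (ψ : MulChar F ℂ) :
    ∑ t : F, phiC F t * phiC F (1 + t) * ψ t = ∑ t : F, phiC F (1 + t) * ψ⁻¹ t := by
  refine Fintype.sum_bijective (·⁻¹) inv_involutive.bijective _ _ fun t => ?_
  rcases eq_or_ne t 0 with rfl | ht
  · simp [phiC_zero, (ψ⁻¹).map_nonunit not_isUnit_zero]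
  · have h1 : (1 : F) + t⁻¹ = (1 + t) * t⁻¹ := by
      field_simp
      ring
    rw [h1, map_mul, phiC_inv, MulChar.inv_apply', inv_inv]
    ring

end Aux

/-- Let `q = 2n+1` be an odd prime power, `χ` a generator of the group of `ℂ`-valued
multiplicative characters of `F_q`, and `d ∈ F_q^×` a nonsquare.  Then for every
`k = 1, …, n`, `χ^k(d) · λ_k(d) = ((-1)^k / 2) · (J_q(φ, χ^k) - J_q(φ, χ^{-k}))`,
where `λ_k(d) = ∑_{s ∈ S_q} φ(1 + d s) χ^k(s)` and `S_q` is the set of squares of `F_q`. -/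
theorem stmt10 (F : Type*) [Field F] [Fintype F] [DecidableEq F]
    (q n : ℕ) (hq : q = Fintype.card F) (hqn : q = 2 * n + 1)
    (χ : MulChar F ℂ) (hχ : ∀ ψ : MulChar F ℂ, ψ ∈ Subgroup.zpowers χ)
    (d : F) (hd : d ≠ 0) (hd' : ¬ IsSquare d)
    (lam : ℕ → ℂ)
    (hlam : ∀ k : ℕ, lam k =
      ∑ x ∈ Finset.univ.filter fun x : F => IsSquare x, phiC F (1 + d * x) * (χ ^ k) x) :
    ∀ k : ℕ, 1 ≤ k → k ≤ n →
      (χ ^ k) d * lam k =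
        ((-1 : ℂ) ^ k / 2) *
          (jacobiSum (phiC F) (χ ^ (k : ℤ)) - jacobiSum (phiC F) (χ ^ (-(k : ℤ)))) := by
  -- the characteristic is odd
  have hchar : ringChar F ≠ 2 := by
    intro h
    have := FiniteField.even_card_iff_char_two.mp h
    rw [← hq, hqn] at this
    omega
  have hn1 : (-1 : F) ≠ 1 := Ring.neg_one_ne_one_of_char_ne_two hchar
  -- χ(-1) = -1
  have hχneg : χ (-1) = -1 := by
    have hsq : χ (-1) * χ (-1) = 1 := by
      rw [← map_mul, neg_mul_neg, one_mul, map_one]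
    rcases mul_self_eq_one_iff.mp hsq with h | h
    · exfalso
      haveI : NeZero ((Monoid.exponent Fˣ : ℂ)) :=
        ⟨Nat.cast_ne_zero.mpr Monoid.exponent_ne_zero_of_finite⟩
      obtain ⟨ψ, hψ⟩ :=
        MulChar.exists_apply_ne_one_of_hasEnoughRootsOfUnity F ℂ hn1
      obtain ⟨m, hm⟩ := Submonoid.mem_powers_iff ψ χ |>.mp
        (mem_powers_iff_mem_zpowers.mpr (hχ ψ))
      apply hψ
      rcases Nat.eq_zero_or_pos m with rfl | hm0
      · rw [← hm]
        simp [MulChar.one_apply (isUnit_one.neg)]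
      · rw [← hm, MulChar.pow_apply' χ hm0.ne' (-1), h, one_pow]
    · exact h
  intro k hk1 hkn
  set ψ : MulChar F ℂ := χ ^ k with hψdef
  have hψ0 : ψ 0 = 0 := ψ.map_nonunit not_isUnit_zero
  have hψneg : ψ (-1) = (-1 : ℂ) ^ k := by
    rw [hψdef, MulChar.pow_apply' χ (by omega) (-1), hχneg]
  have hψineg : ψ⁻¹ (-1) = (-1 : ℂ) ^ k := by
    rw [MulChar.inv_apply_eq_inv', hψneg, ← inv_pow, inv_neg, inv_one]
  have hd2 : phiC F d = -1 := phiC_eq_neg_one hd'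
  -- main identity
  have split : ∑ x : F, (1 + phiC F x) * (phiC F (1 + d * x) * ψ (d * x))
      = ∑ x ∈ univ.filter (fun x : F => IsSquare x),
          2 * (phiC F (1 + d * x) * (ψ d * ψ x)) := by
    rw [← Finset.sum_filter_add_sum_filter_not univ (fun x : F => IsSquare x)]
    have h2 : ∑ x ∈ univ.filter (fun x : F => ¬ IsSquare x),
        (1 + phiC F x) * (phiC F (1 + d * x) * ψ (d * x)) = 0 := by
      refine Finset.sum_eq_zero fun x hx => ?_
      rw [Finset.mem_filter] at hx
      rw [phiC_eq_neg_one hx.2]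
      ring
    rw [h2, add_zero]
    refine Finset.sum_congr rfl fun x hx => ?_
    rw [Finset.mem_filter] at hx
    rcases eq_or_ne x 0 with rfl | hx0
    · simp [hψ0]
    · rw [phiC_eq_one hx0 hx.2, map_mul]
      ring
  have key : 2 * (ψ d * lam k)
      = (∑ t : F, phiC F (1 + t) * ψ t)
        - ∑ t : F, phiC F t * phiC F (1 + t) * ψ t := by
    calc 2 * (ψ d * lam k)
        = ∑ x ∈ univ.filter (fun x : F => IsSquare x),
            2 * (phiC F (1 + d * x) * (ψ d * ψ x)) := by
          rw [hlam k, Finset.mul_sum, Finset.mul_sum]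
          exact Finset.sum_congr rfl fun x _ => by ring
      _ = ∑ x : F, (1 + phiC F x) * (phiC F (1 + d * x) * ψ (d * x)) := split.symm
      _ = ∑ x : F, (1 - phiC F (d * x)) * (phiC F (1 + d * x) * ψ (d * x)) := by
          refine Finset.sum_congr rfl fun x _ => ?_
          rw [map_mul (phiC F), hd2]
          ring
      _ = ∑ u : F, (1 - phiC F u) * (phiC F (1 + u) * ψ u) := by
          refine Fintype.sum_equiv (Equiv.mulLeft₀ d hd) _ _ fun x => ?_
          rfl
      _ = (∑ t : F, phiC F (1 + t) * ψ t)
            - ∑ t : F, phiC F t * phiC F (1 + t) * ψ t := by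
          rw [← Finset.sum_sub_distrib]
          exact Finset.sum_congr rfl fun t _ => by ring
  have hA : ∑ t : F, phiC F (1 + t) * ψ t
      = (-1 : ℂ) ^ k * jacobiSum (phiC F) ψ := by
    rw [sum_phiC_one_add, hψneg, jacobiSum_comm]
  have hB : ∑ t : F, phiC F t * phiC F (1 + t) * ψ t
      = (-1 : ℂ) ^ k * jacobiSum (phiC F) ψ⁻¹ := by
    rw [sum_inv_trick, sum_phiC_one_add, hψineg, jacobiSum_comm]
  rw [hA, hB] at key
  rw [show χ ^ (k : ℤ) = ψ by rw [hψdef, zpow_natCast],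
    show χ ^ (-(k : ℤ)) = ψ⁻¹ by rw [hψdef, zpow_neg, zpow_natCast]]
  linear_combination key / 2
end

section
/- Let q = 2n+1 be an odd prime power with q ≡ 1 (mod 4), let χ be a generator of the group of ℂ-valued multiplicative characters of F_q^×, and let d ∈ F_q^× be a nonsquare. Then the characteristic polynomial of the (n+1)×(n+1) complex matrix T_q(d) = [φ(s_i + d·s_j)]_{0≤i,j≤n} equals (X^2 + n)·∏_{k=1}^{n−1} (X − λ_k(d)); that is, the n+1 numbers √(−n), −√(−n), λ_1(d), …, λ_{n−1}(d) are exactly all the eigenvalues of T_q(d), counted with multiplicity. -/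
open Finset Polynomial

set_option maxHeartbeats 4000000 in
/-- Let `q = 2n+1` be an odd prime power with `q ≡ 1 (mod 4)`, `χ` a generator of the group
of `ℂ`-valued multiplicative characters of `F_q`, and `d ∈ F_q^×` a nonsquare.  Then the
characteristic polynomial of the `(n+1) × (n+1)` matrix `T_q(d) = [φ(s_i + d s_j)]_{0 ≤ i,j ≤ n}`
equals `(X^2 + n) · ∏_{k=1}^{n-1} (X - λ_k(d))`; that is, the `n+1` numbers
`√(-n), -√(-n), λ_1(d), …, λ_{n-1}(d)` are exactly the eigenvalues of `T_q(d)` with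
multiplicity. -/
theorem stmt11 (F : Type*) [Field F] [Fintype F] [DecidableEq F]
    (q n : ℕ) (hq : q = Fintype.card F) (hqn : q = 2 * n + 1) (hq4 : q % 4 = 1)
    (χ : MulChar F ℂ) (hχ : ∀ ψ : MulChar F ℂ, ψ ∈ Subgroup.zpowers χ)
    (d : F) (hd : d ≠ 0) (hd' : ¬ IsSquare d)
    (s : ℕ → F) (hs0 : s 0 = 0) (hs1 : s 1 = 1)
    (hsinj : Set.InjOn s (Set.Iic n))
    (hsim : s '' (Set.Iic n) = {x : F | IsSquare x})
    (lam : ℕ → ℂ)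
    (hlam : ∀ k : ℕ, lam k =
      ∑ x ∈ Finset.univ.filter fun x : F => IsSquare x, phiC F (1 + d * x) * (χ ^ k) x) :
    (Matrix.of fun i j : Fin (n + 1) =>
        phiC F (s (i : ℕ) + d * s (j : ℕ))).charpoly =
      (Polynomial.X ^ 2 + Polynomial.C (n : ℂ)) *
        ∏ k ∈ Finset.Icc 1 (n - 1), (Polynomial.X - Polynomial.C (lam k)) := by
  classical

  have hcard : Fintype.card F = 2 * n + 1 := by rw [← hq, hqn]
  have h2q : 2 ≤ q := hq ▸ Fintype.one_lt_card
  have hn2 : 2 ≤ n := by omega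
  have hchar : ringChar F ≠ 2 := by
    intro h
    have := (FiniteField.even_card_iff_char_two).mp h
    rw [hcard] at this; omega
  set φ : MulChar F ℂ := phiC F with hφdef
  have hφint : ∀ x : F, φ x = ((quadraticChar F x : ℤ) : ℂ) := fun x => rfl
  have hφd : φ d = -1 := by
    rw [hφint, quadraticChar_neg_one_iff_not_isSquare.mpr hd']; norm_num
  have hφsq : ∀ x : F, x ≠ 0 → IsSquare x → φ x = 1 := by
    intro x hx hsq
    rw [hφint, (quadraticChar_one_iff_isSquare hx).mpr hsq]; norm_num
  have hφns : ∀ x : F, ¬ IsSquare x → φ x = -1 := by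
    intro x hx
    rw [hφint, quadraticChar_neg_one_iff_not_isSquare.mpr hx]; norm_num
  have hφ0 : φ (0 : F) = 0 := by rw [hφint, quadraticChar_zero]; norm_num
  have hφsum : ∑ x : F, φ x = 0 := by
    simp only [hφint]
    rw [← Int.cast_sum]
    norm_cast
    simpa using quadraticChar_sum_zero hchar
  have hφmul1 : ∀ x : F, x ≠ 0 → φ x * φ x = 1 := by
    intro x hx
    rw [← map_mul]
    exact hφsq _ (mul_ne_zero hx hx) ⟨x, rfl⟩
  have hφne : ∀ x : F, x ≠ 0 → φ x ≠ 0 := by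
    intro x hx h
    have := hφmul1 x hx
    rw [h, mul_zero] at this; exact zero_ne_one this
  have hφinv : ∀ x : F, φ x⁻¹ = φ x := by
    intro x
    rcases eq_or_ne x 0 with rfl | hx
    · rw [inv_zero]
    · have h1 : φ x * φ x⁻¹ = 1 := by rw [← map_mul, mul_inv_cancel₀ hx, map_one]
      have h2 := hφmul1 x hx
      exact mul_left_cancel₀ (hφne x hx) (h1.trans h2.symm)
  set Sq : Finset F := univ.filter (fun x => IsSquare x) with hSq
  have hmem : ∀ x : F, x ∈ Sq ↔ IsSquare x := by intro x; simp [hSq]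
  have h0Sq : (0 : F) ∈ Sq := (hmem 0).mpr ⟨0, by ring⟩
  have hsq_mem : ∀ i : ℕ, i ≤ n → IsSquare (s i) := by
    intro i hi
    have : s i ∈ s '' Set.Iic n := ⟨i, hi, rfl⟩
    rw [hsim] at this; exact this
  have hs_ne : ∀ i : ℕ, i ≤ n → i ≠ 0 → s i ≠ 0 := by
    intro i hi hi0 h
    exact hi0 (hsinj (Set.mem_Iic.mpr hi) (Set.mem_Iic.mpr (Nat.zero_le n)) (by rw [h, hs0]))
  have hscard : Sq.card = n + 1 := by
    have : (Finset.Iic n).card = Sq.card := by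
      apply Finset.card_nbij s
      · intro a ha
        exact (hmem _).mpr (hsq_mem a (Finset.mem_Iic.mp ha))
      · intro a ha b hb hab
        exact hsinj (by simpa using ha) (by simpa using hb) hab
      · intro x hx
        have : x ∈ s '' Set.Iic n := by
          rw [hsim]; exact (hmem x).mp (by simpa using hx)
        obtain ⟨i, hi, hix⟩ := this
        exact ⟨i, by simpa using hi, hix⟩
    rw [← this, Nat.card_Iic]
  have hsum_erase : ∀ a : F, ∑ x ∈ univ.erase a, φ x = - φ a := by
    intro a
    have h := Finset.sum_erase_add univ φ (mem_univ a)
    rw [hφsum] at h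
    linear_combination h
  have hKey1 : ∑ x : F, φ (1 + d * x) = 0 := by
    rw [Fintype.sum_bijective (fun x : F => 1 + d * x) ?_ _ φ (fun x => rfl)]
    · exact hφsum
    · apply Finite.injective_iff_bijective.mp
      intro x y hxy
      simp only [add_right_inj] at hxy
      exact mul_left_cancel₀ hd hxy
  have hKey2 : ∑ x : F, φ x * φ (1 + d * x) = 1 := by
    have h0 := Finset.sum_erase_add univ (fun x => φ x * φ (1 + d * x)) (mem_univ (0 : F))
    simp only [hφ0, zero_mul, add_zero] at h0
    rw [← h0]
    have hcongr : ∀ x ∈ univ.erase (0 : F), φ x * φ (1 + d * x) = φ (d + x⁻¹) := by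
      intro x hx
      have hx0 : x ≠ 0 := (Finset.mem_erase.mp hx).1
      rw [← hφinv x, ← map_mul]
      congr 1
      field_simp
      ring
    rw [Finset.sum_congr rfl hcongr]
    rw [Finset.sum_nbij' (i := fun x => d + x⁻¹) (j := fun z => (z - d)⁻¹)
      (t := univ.erase d) (g := φ) ?_ ?_ ?_ ?_ ?_]
    · rw [hsum_erase d, hφd]; norm_num
    · intro a ha
      have ha0 : a ≠ 0 := (Finset.mem_erase.mp ha).1
      simp only [Finset.mem_erase, mem_univ, and_true]
      intro h
      exact inv_ne_zero ha0 (by linear_combination h)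
    · intro z hz
      have hz0 : z ≠ d := (Finset.mem_erase.mp hz).1
      simp only [Finset.mem_erase, mem_univ, and_true]
      exact inv_ne_zero (sub_ne_zero.mpr hz0)
    · intro a ha
      have ha0 : a ≠ 0 := (Finset.mem_erase.mp ha).1
      simp
    · intro z hz
      have hz0 : z ≠ d := (Finset.mem_erase.mp hz).1
      have : z - d ≠ 0 := sub_ne_zero.mpr hz0
      field_simp
      ring
    · intro a ha; rfl
  have hS : ∑ x ∈ Sq, φ (1 + d * x) = 1 := by
    set S := ∑ x ∈ Sq, φ (1 + d * x) with hSdef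
    have hsplit : ∑ x ∈ Sq, φ x * φ (1 + d * x) = S - 1 := by
      have h1 := Finset.sum_erase_add Sq (fun x => φ x * φ (1 + d * x)) h0Sq
      have h2 := Finset.sum_erase_add Sq (fun x => φ (1 + d * x)) h0Sq
      simp only [hφ0, zero_mul, add_zero] at h1
      simp only [mul_zero, add_zero, map_one] at h2
      rw [← h1]
      have : ∀ x ∈ Sq.erase 0, φ x * φ (1 + d * x) = φ (1 + d * x) := by
        intro x hx
        rw [hφsq x (Finset.mem_erase.mp hx).1 ((hmem x).mp (Finset.mem_erase.mp hx).2), one_mul]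
      rw [Finset.sum_congr rfl this]
      rw [← hSdef] at h2
      linear_combination h2
    have hext : ∑ x ∈ Sq, (1 + φ x) * φ (1 + d * x) = ∑ x : F, (1 + φ x) * φ (1 + d * x) := by
      apply Finset.sum_subset (subset_univ Sq)
      intro x _ hx
      rw [hφns x (fun hsq => hx ((hmem x).mpr hsq))]
      ring
    have h1 : ∑ x ∈ Sq, (1 + φ x) * φ (1 + d * x) = S + (S - 1) := by
      simp only [add_mul, one_mul]
      rw [Finset.sum_add_distrib, hsplit]
    have h2 : ∑ x : F, (1 + φ x) * φ (1 + d * x) = 0 + 1 := by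
      simp only [add_mul, one_mul]
      rw [Finset.sum_add_distrib, hKey1, hKey2]
    have h3 := h1.symm.trans (hext.trans h2)
    linear_combination h3 / 2
  have hords : orderOf χ = 2 * n := by
    have hu : Fintype.card Fˣ = 2 * n := by rw [Fintype.card_units, hcard]; omega
    obtain ⟨ψ, hψ⟩ := MulChar.exists_mulChar_orderOf_eq_card_units F (R := ℂ)
      (Complex.isPrimitiveRoot_exp _ (by rw [hu]; omega))
    obtain ⟨m, hm⟩ := Subgroup.mem_zpowers_iff.mp (hχ ψ)
    have h1 : orderOf χ ∣ 2 * n := by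
      have := MulChar.orderOf_dvd_card_sub_one F χ
      rwa [hcard, show 2 * n + 1 - 1 = 2 * n from rfl] at this
    have h2 : 2 * n ∣ orderOf χ := by
      rw [← hu, ← hψ, ← hm]
      apply orderOf_dvd_of_pow_eq_one
      rw [← zpow_natCast (χ ^ m), ← zpow_mul, mul_comm, zpow_mul, zpow_natCast,
        pow_orderOf_eq_one, one_zpow]
    exact Nat.dvd_antisymm h1 h2
  have hχpow_ne : ∀ m : ℕ, 0 < m → m < 2 * n → χ ^ m ≠ 1 := by
    intro m h1 h2 h
    have := orderOf_dvd_of_pow_eq_one h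
    rw [hords] at this
    exact absurd (Nat.le_of_dvd h1 this) (by omega)
  have hχ2n : χ ^ (2 * n) = 1 := by rw [← hords]; exact pow_orderOf_eq_one χ
  have hφχ : φ = χ ^ n := by
    obtain ⟨m, hm⟩ := Subgroup.mem_zpowers_iff.mp (hχ φ)
    have hφ2 : φ ^ 2 = 1 := by
      apply MulChar.ext; intro a
      rw [MulChar.pow_apply_coe, MulChar.one_apply_coe, pow_two]
      exact hφmul1 _ a.ne_zero
    have hφne1 : φ ≠ 1 := by
      intro h
      have hone : φ d = 1 := by rw [h, MulChar.one_apply (isUnit_iff_ne_zero.mpr hd)]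
      rw [hφd] at hone; norm_num at hone
    have h2m : χ ^ (m * 2) = 1 := by
      have : (χ ^ m) ^ (2 : ℕ) = 1 := by rw [hm, hφ2]
      rwa [← zpow_natCast (χ ^ m) 2, ← zpow_mul] at this
    have hdvd : ((2 * n : ℕ) : ℤ) ∣ m * 2 := by
      rw [← hords]; exact orderOf_dvd_iff_zpow_eq_one.mpr h2m
    obtain ⟨c, hc⟩ := hdvd
    have hnm : m = (n : ℤ) * c := by
      push_cast at hc
      have h2 : m * 2 = ((n : ℤ) * c) * 2 := by linarith
      exact mul_right_cancel₀ two_ne_zero h2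
    rcases Int.even_or_odd c with ⟨t, ht⟩ | ⟨t, ht⟩
    · exfalso; apply hφne1
      rw [← hm, hnm, ht]
      have he : (n : ℤ) * (t + t) = ((2 * n : ℕ) : ℤ) * t := by push_cast; ring
      rw [he, zpow_mul, zpow_natCast, hχ2n, one_zpow]
    · rw [← hm, hnm, ht]
      have he : (n : ℤ) * (2 * t + 1) = ((2 * n : ℕ) : ℤ) * t + (n : ℕ) := by push_cast; ring
      rw [he, zpow_add, zpow_mul, zpow_natCast, hχ2n, one_zpow, one_mul, zpow_natCast]
  have hmulchar_sum : ∀ k : ℕ, 1 ≤ k → k ≤ n - 1 → ∑ x ∈ Sq, (χ ^ k) x = 0 := by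
    intro k hk1 hk2
    have hz : (χ ^ k) (0 : F) = 0 := MulChar.map_zero _
    have hl : ∑ x ∈ Sq, (1 + φ x) * (χ ^ k) x = 2 * ∑ x ∈ Sq, (χ ^ k) x := by
      rw [Finset.mul_sum]
      apply Finset.sum_congr rfl
      intro x hx
      rcases eq_or_ne x 0 with rfl | h
      · rw [hz]; ring
      · rw [hφsq x h ((hmem x).mp hx)]; ring
    have hsub : ∑ x ∈ Sq, (1 + φ x) * (χ ^ k) x = ∑ x : F, (1 + φ x) * (χ ^ k) x := by
      apply Finset.sum_subset (subset_univ _)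
      intro x _ hx
      rw [hφns x (fun hsq => hx ((hmem x).mpr hsq))]
      ring
    have hr : ∑ x : F, (1 + φ x) * (χ ^ k) x = 0 := by
      simp only [add_mul, one_mul]
      rw [Finset.sum_add_distrib]
      have e1 : ∑ x : F, (χ ^ k) x = 0 :=
        MulChar.sum_eq_zero_of_ne_one (hχpow_ne k (by omega) (by omega))
      have e2 : ∑ x : F, φ x * (χ ^ k) x = 0 := by
        have hp : ∀ x : F, φ x * (χ ^ k) x = (χ ^ (n + k)) x := by
          intro x
          rw [pow_add, MulChar.mul_apply, hφχ]
        simp only [hp]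
        exact MulChar.sum_eq_zero_of_ne_one (hχpow_ne (n + k) (by omega) (by omega))
      rw [e1, e2, add_zero]
    have h := hl.symm.trans (hsub.trans hr)
    exact mul_left_cancel₀ two_ne_zero (by rw [mul_zero]; exact h)
  have hlam0 : lam 0 = 0 := by
    rw [hlam 0]
    have h1 := Finset.sum_erase_add Sq (fun x => φ (1 + d * x) * (χ ^ 0) x) h0Sq
    have h2 := Finset.sum_erase_add Sq (fun x => φ (1 + d * x)) h0Sq
    simp only [MulChar.map_zero, mul_zero, add_zero] at h1
    simp only [mul_zero, add_zero, map_one] at h2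
    rw [hS] at h2
    rw [← h1]
    have hcongr : ∀ x ∈ Sq.erase 0, φ (1 + d * x) * (χ ^ 0) x = φ (1 + d * x) := by
      intro x hx
      rw [pow_zero, MulChar.one_apply (isUnit_iff_ne_zero.mpr (Finset.mem_erase.mp hx).1), mul_one]
    rw [Finset.sum_congr rfl hcongr]
    linear_combination h2
  have hGa : ∀ a : F, a ≠ 0 → IsSquare a → ∀ k : ℕ,
      ∑ x ∈ Sq, φ (a + d * x) * (χ ^ k) x = (χ ^ k) a * lam k := by
    intro a ha hasq k
    rw [hlam k, Finset.mul_sum]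
    apply Finset.sum_nbij' (i := fun y => a⁻¹ * y) (j := fun x => a * x)
    · intro y hy
      rcases hasq with ⟨r, hr⟩
      have : IsSquare a⁻¹ := ⟨r⁻¹, by rw [hr]; rw [mul_inv]⟩
      exact (hmem _).mpr (this.mul ((hmem y).mp hy))
    · intro x hx
      exact (hmem _).mpr (hasq.mul ((hmem x).mp hx))
    · intro y hy; field_simp
    · intro x hx; field_simp
    · intro y hy
      have h1 : a * (1 + d * (a⁻¹ * y)) = a + d * y := by field_simp
      calc φ (a + d * y) * (χ ^ k) y
          = (φ a * φ (1 + d * (a⁻¹ * y))) * ((χ ^ k) a * (χ ^ k) (a⁻¹ * y)) := by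
            rw [← map_mul, ← map_mul, h1, mul_inv_cancel_left₀ ha]
        _ = (χ ^ k) a * (φ (1 + d * (a⁻¹ * y)) * (χ ^ k) (a⁻¹ * y)) := by
            rw [hφsq a ha hasq]; ring
  have hGz1 : ∑ x ∈ Sq, φ ((0 : F) + d * x) * (χ ^ 0) x = -(n : ℂ) := by
    have h1 := Finset.sum_erase_add Sq (fun x => φ ((0 : F) + d * x) * (χ ^ 0) x) h0Sq
    simp only [MulChar.map_zero, mul_zero, add_zero] at h1
    rw [← h1]
    have hcongr : ∀ x ∈ Sq.erase 0, φ ((0 : F) + d * x) * (χ ^ 0) x = -1 := by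
      intro x hx
      have hx0 : x ≠ 0 := (Finset.mem_erase.mp hx).1
      rw [pow_zero, MulChar.one_apply (isUnit_iff_ne_zero.mpr hx0), mul_one, zero_add, map_mul,
        hφd, hφsq x hx0 ((hmem x).mp (Finset.mem_erase.mp hx).2)]
      ring
    rw [Finset.sum_congr rfl hcongr, Finset.sum_const, Finset.card_erase_of_mem h0Sq, hscard]
    simp
  have hGz : ∀ k : ℕ, 1 ≤ k → k ≤ n - 1 → ∑ x ∈ Sq, φ ((0 : F) + d * x) * (χ ^ k) x = 0 := by
    intro k hk1 hk2
    have hcongr : ∀ x ∈ Sq, φ ((0 : F) + d * x) * (χ ^ k) x = -(χ ^ k) x := by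
      intro x hx
      rcases eq_or_ne x 0 with rfl | hx0
      · rw [MulChar.map_zero]; ring
      · rw [zero_add, map_mul, hφd, hφsq x hx0 ((hmem x).mp hx)]; ring
    rw [Finset.sum_congr rfl hcongr, Finset.sum_neg_distrib, hmulchar_sum k hk1 hk2, neg_zero]
  have hsum_trans : ∀ f : F → ℂ, ∑ j : Fin (n + 1), f (s (j : ℕ)) = ∑ x ∈ Sq, f x := by
    intro f
    apply Finset.sum_bij (i := fun (j : Fin (n + 1)) (_ : j ∈ univ) => s (j : ℕ))
    · intro j _
      exact (hmem _).mpr (hsq_mem _ (by omega))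
    · intro a _ b _ hab
      exact Fin.ext (hsinj (Set.mem_Iic.mpr (by omega)) (Set.mem_Iic.mpr (by omega)) hab)
    · intro x hx
      have : x ∈ s '' Set.Iic n := by rw [hsim]; exact (hmem x).mp hx
      obtain ⟨i, hi, hix⟩ := this
      exact ⟨⟨i, by simp at hi; omega⟩, mem_univ _, hix⟩
    · intro j _; rfl
  set T : Matrix (Fin (n + 1)) (Fin (n + 1)) ℂ :=
    Matrix.of (fun i j : Fin (n + 1) => φ (s (i : ℕ) + d * s (j : ℕ))) with hTdef
  set P : Matrix (Fin (n + 1)) (Fin (n + 1)) ℂ :=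
    Matrix.of (fun i c : Fin (n + 1) =>
      if (c : ℕ) = 0 then (if (i : ℕ) = 0 then 1 else 0)
      else (χ ^ ((c : ℕ) - 1)) (s (i : ℕ))) with hPdef
  set D : Matrix (Fin (n + 1)) (Fin (n + 1)) ℂ :=
    Matrix.of (fun r c : Fin (n + 1) =>
      if (c : ℕ) = 0 then (if (r : ℕ) = 1 then 1 else 0)
      else if (c : ℕ) = 1 then (if (r : ℕ) = 0 then -(n : ℂ) else 0)
      else if r = c then lam ((c : ℕ) - 1) else 0) with hDdef
  have hTapp : ∀ i j : Fin (n + 1), T i j = φ (s (i : ℕ) + d * s (j : ℕ)) := fun _ _ => rfl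
  have hPapp : ∀ i c : Fin (n + 1), P i c =
      if (c : ℕ) = 0 then (if (i : ℕ) = 0 then 1 else 0)
      else (χ ^ ((c : ℕ) - 1)) (s (i : ℕ)) := fun _ _ => rfl
  have hDapp : ∀ r c : Fin (n + 1), D r c =
      if (c : ℕ) = 0 then (if (r : ℕ) = 1 then 1 else 0)
      else if (c : ℕ) = 1 then (if (r : ℕ) = 0 then -(n : ℂ) else 0)
      else if r = c then lam ((c : ℕ) - 1) else 0 := fun _ _ => rfl
  have hTP : T * P = P * D := by
    ext i c
    rw [Matrix.mul_apply, Matrix.mul_apply]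
    rcases Nat.lt_or_ge (c : ℕ) 1 with hc0 | hc1
    · -- case (c : ℕ) = 0
      have hc0 : (c : ℕ) = 0 := by omega
      have hLHS : ∑ j, T i j * P j c = φ (s (i : ℕ)) := by
        rw [Finset.sum_eq_single_of_mem (⟨0, by omega⟩ : Fin (n + 1)) (mem_univ _)]
        · rw [hTapp, hPapp, if_pos hc0, if_pos rfl, mul_one]
          show φ (s (i : ℕ) + d * s 0) = _
          rw [hs0, mul_zero, add_zero]
        · intro r _ hr
          have : (r : ℕ) ≠ 0 := fun h => hr (Fin.ext h)
          rw [hPapp, if_pos hc0, if_neg this, mul_zero]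
      have hRHS : ∑ r, P i r * D r c = (χ ^ 0) (s (i : ℕ)) := by
        rw [Finset.sum_eq_single_of_mem (⟨1, by omega⟩ : Fin (n + 1)) (mem_univ _)]
        · have h1 : P i ⟨1, by omega⟩ = (χ ^ 0) (s (i : ℕ)) := by
            rw [hPapp]; exact if_neg one_ne_zero
          have h2 : D ⟨1, by omega⟩ c = 1 := by
            rw [hDapp, if_pos hc0]; exact if_pos rfl
          rw [h1, h2, mul_one]
        · intro r _ hr
          have hrv : (r : ℕ) ≠ 1 := fun h => hr (Fin.ext h)
          have h2 : D r c = 0 := by rw [hDapp, if_pos hc0]; exact if_neg hrv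
          rw [h2, mul_zero]
      rw [hLHS, hRHS]
      rcases eq_or_ne (i : ℕ) 0 with hi0 | hi0
      · rw [hi0, hs0, hφ0, MulChar.map_zero]
      · have hne := hs_ne (i : ℕ) (by omega) hi0
        rw [hφsq _ hne (hsq_mem _ (by omega)), pow_zero,
          MulChar.one_apply (isUnit_iff_ne_zero.mpr hne)]
    · -- case (c : ℕ) ≥ 1
      have hck : (c : ℕ) - 1 ≤ n - 1 := by have := c.isLt; omega
      have hLHS : ∑ j, T i j * P j c =
          ∑ x ∈ Sq, φ (s (i : ℕ) + d * x) * (χ ^ ((c : ℕ) - 1)) x := by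
        rw [← hsum_trans (fun x => φ (s (i : ℕ) + d * x) * (χ ^ ((c : ℕ) - 1)) x)]
        apply Finset.sum_congr rfl
        intro j _
        rw [hTapp, hPapp, if_neg (by omega)]
      rw [hLHS]
      rcases Nat.lt_or_ge (c : ℕ) 2 with hc1' | hc2
      · -- (c : ℕ) = 1
        have hc1'' : (c : ℕ) = 1 := by omega
        have hRHS : ∑ r, P i r * D r c = (if (i : ℕ) = 0 then (1 : ℂ) else 0) * (-(n : ℂ)) := by
          rw [Finset.sum_eq_single_of_mem (⟨0, by omega⟩ : Fin (n + 1)) (mem_univ _)]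
          · have h1 : P i ⟨0, by omega⟩ = (if (i : ℕ) = 0 then (1 : ℂ) else 0) := by
              rw [hPapp]; exact if_pos rfl
            have h2 : D ⟨0, by omega⟩ c = -(n : ℂ) := by
              rw [hDapp, if_neg (by omega), if_pos hc1'']; exact if_pos rfl
            rw [h1, h2]
          · intro r _ hr
            have hrv : (r : ℕ) ≠ 0 := fun h => hr (Fin.ext h)
            have h2 : D r c = 0 := by
              rw [hDapp, if_neg (by omega), if_pos hc1'']; exact if_neg hrv
            rw [h2, mul_zero]
        rw [hRHS]
        rcases eq_or_ne (i : ℕ) 0 with hi0 | hi0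
        · rw [if_pos hi0, one_mul, hi0, hs0]
          have hk0 : (c : ℕ) - 1 = 0 := by omega
          rw [hk0]
          exact hGz1
        · rw [if_neg hi0, zero_mul]
          have hne := hs_ne (i : ℕ) (by omega) hi0
          rw [hGa _ hne (hsq_mem _ (by omega)) _]
          have hk0 : (c : ℕ) - 1 = 0 := by omega
          rw [hk0, hlam0, mul_zero]
      · -- (c : ℕ) ≥ 2
        have hRHS : ∑ r, P i r * D r c = (χ ^ ((c : ℕ) - 1)) (s (i : ℕ)) * lam ((c : ℕ) - 1) := by
          rw [Finset.sum_eq_single_of_mem c (mem_univ _)]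
          · have h1 : P i c = (χ ^ ((c : ℕ) - 1)) (s (i : ℕ)) := by
              rw [hPapp]; exact if_neg (by omega)
            have h2 : D c c = lam ((c : ℕ) - 1) := by
              rw [hDapp, if_neg (by omega), if_neg (by omega)]; exact if_pos rfl
            rw [h1, h2]
          · intro r _ hr
            have h2 : D r c = 0 := by
              rw [hDapp, if_neg (by omega), if_neg (by omega)]; exact if_neg hr
            rw [h2, mul_zero]
        rw [hRHS]
        rcases eq_or_ne (i : ℕ) 0 with hi0 | hi0
        · rw [hi0, hs0, MulChar.map_zero, zero_mul]
          exact hGz _ (by omega) hck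
        · exact hGa _ (hs_ne (i : ℕ) (by omega) hi0) (hsq_mem _ (by omega)) _
  have hdetP : P.det ≠ 0 := by
    intro hdet
    obtain ⟨v, hv0, hv⟩ := Matrix.exists_mulVec_eq_zero_iff.mpr hdet
    apply hv0
    have hrow : ∀ i : Fin (n + 1), ∑ c, P i c * v c = 0 := by
      intro i
      have h := congrFun hv i
      simpa [Matrix.mulVec, dotProduct] using h
    -- v 0 = 0
    have hvz : v ⟨0, by omega⟩ = 0 := by
      have h := hrow ⟨0, by omega⟩
      rw [Finset.sum_eq_single_of_mem (⟨0, by omega⟩ : Fin (n + 1)) (mem_univ _)] at h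
      · have h1 : P (⟨0, by omega⟩ : Fin (n + 1)) ⟨0, by omega⟩ = 1 := by
          rw [hPapp]; rw [if_pos rfl]; exact if_pos rfl
        rwa [h1, one_mul] at h
      · intro r _ hr
        have hrv : (r : ℕ) ≠ 0 := fun hh => hr (Fin.ext hh)
        have h1 : P (⟨0, by omega⟩ : Fin (n + 1)) r = 0 := by
          rw [hPapp, if_neg hrv, hs0, MulChar.map_zero]
        rw [h1, zero_mul]
    -- the subgroup of squares in Fˣ
    obtain ⟨g, hg⟩ := IsCyclic.exists_generator (α := Fˣ)
    set H : Subgroup Fˣ := Subgroup.zpowers (g ^ 2) with hH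
    have hkey : ∀ m : ℤ, (g ^ 2) ^ m = (g ^ m) ^ 2 := by
      intro m
      rw [← zpow_natCast g 2, ← zpow_mul, ← zpow_natCast (g ^ (m : ℤ)) 2, ← zpow_mul, mul_comm]
    have hHmem : ∀ u : Fˣ, u ∈ H ↔ IsSquare (u : F) := by
      intro u
      constructor
      · intro hu
        obtain ⟨m, hm⟩ := Subgroup.mem_zpowers_iff.mp hu
        refine ⟨((g ^ m : Fˣ) : F), ?_⟩
        rw [← hm, hkey]
        push_cast [sq]
        ring
      · rintro ⟨r, hr⟩
        have hr0 : r ≠ 0 := by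
          rintro rfl
          exact u.ne_zero (by rw [hr, mul_zero])
        obtain ⟨m, hm⟩ := Subgroup.mem_zpowers_iff.mp (hg (Units.mk0 r hr0))
        refine Subgroup.mem_zpowers_iff.mpr ⟨m, ?_⟩
        rw [hkey]
        apply Units.ext
        push_cast [sq, hm]
        simp only [Units.val_mk0]
        exact hr.symm
    -- the characters
    set ψ : ℕ → (H →* ℂ) := fun k =>
      (χ ^ k).toMonoidHom.comp ((Units.coeHom F).comp H.subtype) with hψ
    have hψapp : ∀ (k : ℕ) (u : H), ψ k u = (χ ^ k) ((u : Fˣ) : F) := fun _ _ => rfl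
    have hψinj : Function.Injective (fun k : Fin n => ψ (k : ℕ)) := by
      intro k k' hkk'
      have h2 : χ ^ (2 * (k : ℕ)) = χ ^ (2 * (k' : ℕ)) := by
        apply MulChar.ext
        intro u
        have hu2 : (u ^ 2 : Fˣ) ∈ H := by
          rw [hHmem]
          exact ⟨(u : F), by push_cast [sq]; ring⟩
        have he : ψ (k : ℕ) ⟨u ^ 2, hu2⟩ = ψ (k' : ℕ) ⟨u ^ 2, hu2⟩ :=
          DFunLike.congr_fun (show ψ (k : ℕ) = ψ (k' : ℕ) from hkk') _
        rw [hψapp, hψapp] at he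
        have hval : ∀ m : ℕ, (χ ^ m) (((u ^ 2 : Fˣ) : F)) = (χ ^ (2 * m)) ((u : F)) := by
          intro m
          calc (χ ^ m) (((u ^ 2 : Fˣ) : F)) = (χ (((u ^ 2 : Fˣ) : F))) ^ m :=
                MulChar.pow_apply_coe χ m (u ^ 2)
            _ = ((χ ((u : F))) ^ 2) ^ m := by rw [Units.val_pow_eq_pow_val, map_pow]
            _ = (χ ((u : F))) ^ (2 * m) := by rw [← pow_mul, mul_comm]
            _ = (χ ^ (2 * m)) ((u : F)) := (MulChar.pow_apply_coe χ (2 * m) u).symm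
        rw [hval, hval] at he
        exact he
      have hk := k.isLt
      have hk' := k'.isLt
      have hmod := pow_eq_pow_iff_modEq.mp h2
      rw [hords] at hmod
      have hm1 : 2 * (k : ℕ) % (2 * n) = 2 * (k : ℕ) := Nat.mod_eq_of_lt (by omega)
      have hm2 : 2 * (k' : ℕ) % (2 * n) = 2 * (k' : ℕ) := Nat.mod_eq_of_lt (by omega)
      unfold Nat.ModEq at hmod
      rw [hm1, hm2] at hmod
      exact Fin.ext (by omega)
    have hli := (linearIndependent_monoidHom H ℂ).comp (fun k : Fin n => ψ (k : ℕ)) hψinj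
    have hcoef := Fintype.linearIndependent_iff.mp hli (fun k : Fin n => v k.succ)
    have hzero : ∀ k : Fin n, v k.succ = 0 := by
      apply hcoef
      funext u
      simp only [Finset.sum_apply, Pi.smul_apply, smul_eq_mul, Pi.zero_apply]
      -- find the row index
      have husq : IsSquare (((u : Fˣ) : F)) := (hHmem _).mp u.2
      have : ((u : Fˣ) : F) ∈ s '' Set.Iic n := by rw [hsim]; exact husq
      obtain ⟨i, hi, hix⟩ := this
      have hi' : i ≤ n := Set.mem_Iic.mp hi
      have hine : i ≠ 0 := by
        intro h
        have : s i = 0 := by rw [h, hs0]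
        rw [hix] at this
        exact Units.ne_zero _ this
      have h := hrow ⟨i, by omega⟩
      rw [Fin.sum_univ_succ] at h
      have h1 : P (⟨i, by omega⟩ : Fin (n + 1)) 0 = 0 := by
        rw [hPapp]
        rw [if_pos (by simp)]
        exact if_neg (by simpa using hine)
      rw [h1, zero_mul, zero_add] at h
      rw [← h]
      apply Finset.sum_congr rfl
      intro k _
      have h2 : P (⟨i, by omega⟩ : Fin (n + 1)) k.succ = (χ ^ (k : ℕ)) ((u : Fˣ) : F) := by
        rw [hPapp, if_neg (by simp [Fin.val_succ])]
        have : ((k.succ : Fin (n + 1)) : ℕ) - 1 = (k : ℕ) := by simp [Fin.val_succ]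
        rw [this]
        show (χ ^ (k : ℕ)) (s i) = _
        rw [hix]
      rw [h2]
      show v k.succ * (ψ (k : ℕ)) u = (χ ^ (k : ℕ)) ((u : Fˣ) : F) * v k.succ
      rw [hψapp]
      ring
    -- conclude v = 0
    funext j
    refine Fin.cases ?_ ?_ j
    · exact hvz
    · exact hzero
  have hcm : ∀ M : Matrix (Fin (n + 1)) (Fin (n + 1)) ℂ,
      Matrix.charmatrix M = Matrix.diagonal (fun _ : Fin (n + 1) => (X : ℂ[X])) -
        M.map (⇑(C : ℂ →+* ℂ[X])) := by
    intro M
    ext i j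
    rcases eq_or_ne i j with rfl | h
    · rw [Matrix.charmatrix_apply_eq]
      simp [Matrix.sub_apply, Matrix.diagonal_apply_eq, Matrix.map_apply]
    · rw [Matrix.charmatrix_apply_ne _ _ _ h]
      simp [Matrix.sub_apply, Matrix.diagonal_apply_ne _ h, Matrix.map_apply]
  have hswap : ∀ M : Matrix (Fin (n + 1)) (Fin (n + 1)) ℂ[X],
      Matrix.diagonal (fun _ : Fin (n + 1) => (X : ℂ[X])) * M =
      M * Matrix.diagonal (fun _ : Fin (n + 1) => (X : ℂ[X])) := by
    intro M
    ext i j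
    rw [Matrix.diagonal_mul, Matrix.mul_diagonal, mul_comm]
  have hconj : Matrix.charmatrix T * P.map (⇑(C : ℂ →+* ℂ[X])) =
      P.map (⇑(C : ℂ →+* ℂ[X])) * Matrix.charmatrix D := by
    rw [hcm, hcm, sub_mul, mul_sub, hswap, ← Matrix.map_mul, ← Matrix.map_mul, hTP]
  have hchar : T.charpoly = D.charpoly := by
    have hdet := congrArg Matrix.det hconj
    rw [Matrix.det_mul, Matrix.det_mul] at hdet
    have hPdet : (P.map (⇑(C : ℂ →+* ℂ[X]))).det = C P.det := by
      have h := (RingHom.map_det (C : ℂ →+* ℂ[X]) P).symm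
      rwa [RingHom.mapMatrix_apply] at h
    rw [hPdet] at hdet
    rw [Matrix.charpoly, Matrix.charpoly]
    have hCne : (C P.det : ℂ[X]) ≠ 0 := fun h => hdetP (by simpa using h)
    apply mul_right_cancel₀ hCne
    rw [hdet]; ring
  rw [hchar]
  have he2 : 2 + (n - 1) = n + 1 := by omega
  set e : Fin 2 ⊕ Fin (n - 1) ≃ Fin (n + 1) := finSumFinEquiv.trans (finCongr he2) with hedef
  have he1v : ∀ i : Fin 2, ((e (Sum.inl i)) : ℕ) = (i : ℕ) := by
    intro i; simp [hedef]
  have he2v : ∀ k : Fin (n - 1), ((e (Sum.inr k)) : ℕ) = 2 + (k : ℕ) := by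
    intro k; simp [hedef]
  have hre : (Matrix.reindex e.symm e.symm D).charpoly = D.charpoly :=
    Matrix.charpoly_reindex e.symm D
  rw [← hre]
  have hblock : Matrix.reindex e.symm e.symm D =
      Matrix.fromBlocks !![0, -(n : ℂ); 1, 0] 0 0
        (Matrix.diagonal fun k : Fin (n - 1) => lam ((k : ℕ) + 1)) := by
    ext a b
    rcases a with i | i <;> rcases b with j | j <;>
      simp only [Matrix.reindex_apply, Matrix.submatrix_apply, Equiv.symm_symm] <;>
      rw [hDapp]
    · fin_cases i <;> fin_cases j <;> simp [he1v, Matrix.fromBlocks]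
    · have h1 := he1v i
      have h2 := he2v j
      have hi2 := i.isLt
      rw [if_neg (by omega), if_neg (by omega),
        if_neg (fun hh => by rw [hh] at h1; omega)]
      simp [Matrix.fromBlocks]
    · have h1 := he2v i
      have h2 := he1v j
      have hj2 := j.isLt
      rcases Nat.lt_or_ge (j : ℕ) 1 with hj0 | hj1
      · rw [if_pos (by omega), if_neg (by omega)]
        simp [Matrix.fromBlocks]
      · rw [if_neg (by omega), if_pos (by omega), if_neg (by omega)]
        simp [Matrix.fromBlocks]
    · have h1 := he2v i
      have h2 := he2v j
      rcases eq_or_ne i j with rfl | hij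
      · rw [if_neg (by omega), if_neg (by omega), if_pos rfl, h1,
          show 2 + (i : ℕ) - 1 = (i : ℕ) + 1 from by omega]
        simp [Matrix.fromBlocks]
      · rw [if_neg (by omega), if_neg (by omega),
          if_neg (fun hh => hij (by simpa using e.injective hh))]
        simp [Matrix.fromBlocks, Matrix.diagonal_apply_ne _ hij]
  rw [hblock, Matrix.charpoly_fromBlocks_zero₁₂]
  congr 1
  · rw [Matrix.charpoly, Matrix.det_fin_two]
    rw [Matrix.charmatrix_apply_eq, Matrix.charmatrix_apply_eq,
      Matrix.charmatrix_apply_ne _ _ _ (by decide : (0 : Fin 2) ≠ 1),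
      Matrix.charmatrix_apply_ne _ _ _ (by decide : (1 : Fin 2) ≠ 0)]
    simp only [Matrix.cons_val', Matrix.cons_val_zero, Matrix.cons_val_one, Matrix.head_cons,
      Matrix.empty_val', Matrix.cons_val_fin_one, Matrix.head_fin_const, Matrix.of_apply,
      Matrix.cons_val_fin_one]
    simp only [map_zero, map_neg, map_one]
    ring
  · rw [Matrix.charpoly]
    have hdiag : Matrix.charmatrix (Matrix.diagonal fun k : Fin (n - 1) => lam ((k : ℕ) + 1)) =
        Matrix.diagonal (fun k : Fin (n - 1) => (X : ℂ[X]) - C (lam ((k : ℕ) + 1))) := by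
      ext i j
      rcases eq_or_ne i j with rfl | h
      · rw [Matrix.charmatrix_apply_eq, Matrix.diagonal_apply_eq, Matrix.diagonal_apply_eq]
      · rw [Matrix.charmatrix_apply_ne _ _ _ h, Matrix.diagonal_apply_ne _ h,
          Matrix.diagonal_apply_ne _ h, map_zero, neg_zero]
    rw [hdiag, Matrix.det_diagonal]
    rw [Fin.prod_univ_eq_prod_range (fun k => (X : ℂ[X]) - C (lam (k + 1))) (n - 1)]
    apply Finset.prod_nbij (i := fun k => k + 1)
    · intro a ha
      simp only [Finset.mem_range] at ha
      simp only [Finset.mem_Icc]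
      omega
    · intro a _ b _ hab
      simp only [] at hab
      omega
    · intro b hb
      simp only [Finset.coe_Icc, Set.mem_Icc] at hb
      refine ⟨b - 1, ?_, ?_⟩
      · simp only [Finset.coe_range, Set.mem_Iio]
        omega
      · show b - 1 + 1 = b
        omega
    · intro a _; rfl
end

section
/- Let p ≡ 1 (mod 4) be a prime and set B_p = ∏_{k=1}^{(p−1)/4} C(2k,k), where C(2k,k) is the central binomial coefficient. Then the Legendre symbol (B_p/p) equals the Legendre symbol (2/p). -/
open Finset Nat

namespace Stmt12T


private lemma mergeL (f : ℕ → ℤ) (N : ℕ) :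
    ∏ j ∈ range (2*N), f j = (∏ i ∈ range N, f (2*i)) * ∏ i ∈ range N, f (2*i+1) := by
  induction N with
  | zero => simp
  | succ n ih =>
      rw [show 2*(n+1) = (2*n) + 1 + 1 by ring, prod_range_succ, prod_range_succ, ih,
        prod_range_succ, prod_range_succ]
      ring

private lemma pairL (g : ℕ → ℤ) (h0 : g 0 = 1) (N : ℕ) :
    ∏ k ∈ range N, g (k+1) = ∏ t ∈ range ((N+1)/2), (g (N - 2*t - 1) * g (N - 2*t)) := by
  induction N using Nat.twoStepInduction with
  | zero => simp
  | one => simp [h0]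
  | more n ih _ =>
      have hhalf : (n+2+1)/2 = (n+1)/2 + 1 := by omega
      rw [show n+2 = n+1+1 from rfl, prod_range_succ, prod_range_succ, ih, hhalf,
        prod_range_succ']
      have hc : ∀ t ∈ range ((n+1)/2),
          g (n+1+1 - 2*(t+1) - 1) * g (n+1+1 - 2*(t+1)) = g (n - 2*t - 1) * g (n - 2*t) := by
        intro t ht
        have h1 := mem_range.mp ht
        rw [show n+1+1 - 2*(t+1) - 1 = n - 2*t - 1 by omega,
          show n+1+1 - 2*(t+1) = n - 2*t by omega]
      rw [Finset.prod_congr rfl hc, show n+1+1 - 2*0 - 1 = n+1 by omega,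
        show n+1+1 - 2*0 = n+1+1 by omega]
      ring

variable (p : ℕ) [Fact (Nat.Prime p)]

private lemma leg_one : legendreSym p 1 = 1 := by
  simp [legendreSym]

private lemma leg_prod {α : Type*} (s : Finset α) (f : α → ℤ) :
    legendreSym p (∏ i ∈ s, f i) = ∏ i ∈ s, legendreSym p (f i) := by
  classical
  induction s using Finset.induction_on with
  | empty => simp [legendreSym]
  | insert _ _ hns ih => rw [Finset.prod_insert hns, legendreSym.mul, ih, Finset.prod_insert hns]

private lemma leg_congr {a b : ℤ} (h : ((a : ZMod p)) = (b : ZMod p)) :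
    legendreSym p a = legendreSym p b := by
  simp only [legendreSym, h]

private lemma nat_ne_zero {j : ℕ} (h1 : ¬ p ∣ j) : (((j : ℕ) : ℤ) : ZMod p) ≠ 0 := by
  rw [Int.cast_natCast]
  simpa [ZMod.natCast_eq_zero_iff] using h1

private lemma leg_sq_nat {j : ℕ} (h1 : ¬ p ∣ j) :
    legendreSym p (j : ℤ) * legendreSym p (j : ℤ) = 1 := by
  have := legendreSym.sq_one p (a := (j : ℤ)) (nat_ne_zero p h1)
  rwa [pow_two] at this

private lemma Icc_to_range (f : ℕ → ℤ) (m : ℕ) :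
    ∏ k ∈ Icc 1 m, f k = ∏ k ∈ range m, f (k+1) := by
  induction m with
  | zero => simp
  | succ n ih => rw [Finset.prod_Icc_succ_top (by omega), ih, prod_range_succ]

end Stmt12T

open Stmt12T

/-- Let `p ≡ 1 (mod 4)` be a prime and set `B_p = ∏_{k=1}^{(p-1)/4} C(2k, k)`, the product
of central binomial coefficients.  Then the Legendre symbol `(B_p/p)` equals `(2/p)`. -/
theorem stmt12 (p : ℕ) [Fact (Nat.Prime p)] (hp4 : p % 4 = 1) :
    legendreSym p (∏ k ∈ Finset.Icc 1 ((p - 1) / 4), (Nat.choose (2 * k) k : ℤ)) =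
      legendreSym p 2 := by
  have hp : p.Prime := Fact.out
  have h2le := hp.two_le
  set m := (p - 1) / 4 with hmdef
  have hpm : p = 4*m+1 := by omega
  have hm1 : 1 ≤ m := by omega
  have hnd : ∀ j : ℕ, 1 ≤ j → j ≤ 4*m → ¬ p ∣ j := by
    intro j hj1 hj2 hd
    have := Nat.le_of_dvd (by omega) hd
    omega
  have hsqn : ∀ j : ℕ, 1 ≤ j → j ≤ 4*m →
      legendreSym p (j : ℤ) * legendreSym p (j : ℤ) = 1 := by
    intro j hj1 hj2
    exact leg_sq_nat p (hnd j hj1 hj2)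
  have hsqf : ∀ k : ℕ, k ≤ 4*m →
      legendreSym p ((k ! : ℕ) : ℤ) * legendreSym p ((k ! : ℕ) : ℤ) = 1 := by
    intro k hk
    refine leg_sq_nat p ?_
    rw [hp.dvd_factorial]
    omega
  have s2 : legendreSym p 2 * legendreSym p 2 = 1 := by
    have h := hsqn 2 (by omega) (by omega)
    norm_num at h
    exact h
  have hneg1 : legendreSym p (-1) = 1 := by
    have hne : ((-1 : ℤ) : ZMod p) ≠ 0 := by
      simp only [Int.cast_neg, Int.cast_one, ne_eq, neg_eq_zero]
      exact one_ne_zero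
    rw [legendreSym.eq_one_iff p hne]
    have hc : ((-1 : ℤ) : ZMod p) = -1 := by push_cast; ring
    rw [hc]
    exact ZMod.exists_sq_eq_neg_one_iff.mpr (by omega)
  have hneg8 : legendreSym p (-8) = legendreSym p 2 := by
    rw [show (-8 : ℤ) = -1 * (2 * (2 * 2)) by norm_num, legendreSym.mul, legendreSym.mul,
      legendreSym.mul, hneg1, s2, one_mul, mul_one]
  -- the key function
  set g : ℕ → ℤ := fun k => legendreSym p (((2*k)! : ℕ) : ℤ) with hg
  have hg0 : g 0 = 1 := by
    simp only [hg]
    norm_num [legendreSym]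
  -- Step 1 : reduce choose to factorials
  have step1 : legendreSym p (∏ k ∈ Finset.Icc 1 m, (Nat.choose (2 * k) k : ℤ))
      = ∏ k ∈ range m, g (k+1) := by
    rw [leg_prod, Icc_to_range (fun k => legendreSym p ((Nat.choose (2*k) k : ℤ)))]
    apply Finset.prod_congr rfl
    intro k hk
    have hkm : k + 1 ≤ m := mem_range.mp hk
    set i := k + 1 with hi
    have hfac : (((2*i)! : ℕ) : ℤ)
        = ((Nat.choose (2*i) i : ℕ) : ℤ) * ((i ! : ℕ) : ℤ) * ((i ! : ℕ) : ℤ) := by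
      have h := Nat.choose_mul_factorial_mul_factorial (show i ≤ 2*i by omega)
      rw [show 2*i - i = i by omega] at h
      exact_mod_cast (congrArg (fun x : ℕ => (x : ℤ)) h).symm
    have : g i = legendreSym p ((Nat.choose (2*i) i : ℕ) : ℤ)
        * (legendreSym p ((i ! : ℕ) : ℤ) * legendreSym p ((i ! : ℕ) : ℤ)) := by
      simp only [hg]
      rw [hfac, legendreSym.mul, legendreSym.mul]
      ring
    rw [hsqf i (by omega), mul_one] at this
    rw [← this]
  rw [step1, pairL g hg0 m]
  -- Step 2 : pairs to products of consecutive numbers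
  have hpair : ∀ t ∈ range ((m+1)/2), g (m - 2*t - 1) * g (m - 2*t)
      = legendreSym p ((((2*(m - 2*t) - 1) * (2*(m - 2*t))) : ℕ) : ℤ) := by
    intro t ht
    have htm : 2*t + 1 ≤ m := by
      have h := mem_range.mp ht
      omega
    set i := m - 2*t with hi
    have hi1 : 1 ≤ i := by omega
    have him : i ≤ m := by omega
    have hkey : (((2*i)! : ℕ) : ℤ)
        = (((2*(i-1))! : ℕ) : ℤ) * ((((2*i-1) * (2*i)) : ℕ) : ℤ) := by
      have hnat : (2*i)! = (2*(i-1))! * ((2*i-1) * (2*i)) := by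
        have h2 : 2*i = (2*(i-1)) + 1 + 1 := by omega
        rw [h2, Nat.factorial_succ, Nat.factorial_succ]
        rw [show 2*(i-1)+1 = 2*i-1 by omega]
        rw [show 2*i-1+1 = 2*i by omega]
        ring
      exact_mod_cast congrArg (fun x : ℕ => (x : ℤ)) hnat
    have hgg : g i = g (i-1) * legendreSym p ((((2*i-1) * (2*i)) : ℕ) : ℤ) := by
      simp only [hg]
      rw [hkey, legendreSym.mul]
    have hs : g (i-1) * g (i-1) = 1 := by
      simp only [hg]
      exact hsqf (2*(i-1)) (by omega)
    rw [show m - 2*t - 1 = i - 1 from rfl]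
    calc g (i-1) * g i = (g (i-1) * g (i-1)) * legendreSym p ((((2*i-1) * (2*i)) : ℕ) : ℤ) := by
          rw [hgg]; ring
      _ = legendreSym p ((((2*i-1) * (2*i)) : ℕ) : ℤ) := by rw [hs, one_mul]
  rw [Finset.prod_congr rfl hpair]
  rcases Nat.even_or_odd m with hme | hmo
  · -- even case : m = 2*n
    obtain ⟨n, hn⟩ := hme
    have hn1 : 1 ≤ n := by omega
    have hp8 : p = 8*n+1 := by omega
    have hhalf : (m+1)/2 = n := by omega
    rw [hhalf]
    have hrefl : ∏ t ∈ range n,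
        legendreSym p ((((2*(m - 2*t) - 1) * (2*(m - 2*t))) : ℕ) : ℤ)
        = ∏ j ∈ range n, legendreSym p ((((4*j+3)*(4*j+4)) : ℕ) : ℤ) := by
      rw [← Finset.prod_range_reflect (fun j => legendreSym p ((((4*j+3)*(4*j+4)) : ℕ) : ℤ)) n]
      apply Finset.prod_congr rfl
      intro t ht
      have h := mem_range.mp ht
      rw [show 2*(m - 2*t) - 1 = 4*(n-1-t)+3 by omega,
        show 2*(m - 2*t) = 4*(n-1-t)+4 by omega]
    rw [hrefl]
    have hterm : ∀ j ∈ range n, legendreSym p ((((4*j+3)*(4*j+4)) : ℕ) : ℤ)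
        = legendreSym p 2 * legendreSym p ((4*n-2*j-1 : ℕ) : ℤ)
          * legendreSym p ((j+1 : ℕ) : ℤ) := by
      intro j hj
      have hjn : j < n := mem_range.mp hj
      set w : ℕ := 4*n-2*j-1 with hw
      have hwp : (4*j+3) + 2*w = p := by omega
      have hcast : (((((4*j+3)*(4*j+4)) : ℕ) : ℤ) : ZMod p)
          = (((-8) * ((w : ℕ) : ℤ) * ((j+1 : ℕ) : ℤ) : ℤ) : ZMod p) := by
        have h1 : 4*(j : ZMod p)+3+2*(w : ZMod p) = 0 := by
          have h := congrArg (fun x : ℕ => (x : ZMod p)) hwp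
          push_cast at h
          rw [h]
          exact ZMod.natCast_self p
        push_cast
        linear_combination (4*(j : ZMod p)+4) * h1
      rw [leg_congr p hcast, legendreSym.mul, legendreSym.mul, hneg8]
    rw [Finset.prod_congr rfl hterm]
    rw [Finset.prod_mul_distrib, Finset.prod_mul_distrib, Finset.prod_const, Finset.card_range]
    have hWrefl : ∏ j ∈ range n, legendreSym p ((4*n-2*j-1 : ℕ) : ℤ)
        = ∏ i ∈ range n, legendreSym p ((2*n+1+2*i : ℕ) : ℤ) := by
      rw [← Finset.prod_range_reflect (fun i => legendreSym p ((2*n+1+2*i : ℕ) : ℤ)) n]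
      apply Finset.prod_congr rfl
      intro t ht
      have h := mem_range.mp ht
      rw [show 2*n+1+2*(n-1-t) = 4*n-2*t-1 by omega]
    rw [hWrefl]
    -- abstract algebra
    have key2 : ∀ c2 O Yn Y2 Vn Wh Ot Vt Om : ℤ,
        c2*c2 = 1 → O*O = 1 → Yn*Yn = 1 →
        Om = Ot * Vt → Ot = O * Wh → Vt = c2^(2*n) * Y2 →
        Y2 = O * Vn → Vn = c2^n * Yn → Om = 1 →
        c2^n * Wh * Yn = 1 := by
      intro c2 O Yn Y2 Vn Wh Ot Vt Om s2' sO sYn g1 g2 g3 g4 g5 g6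
      have scn : c2^n*c2^n = 1 := by rw [← mul_pow, s2', one_pow]
      have sc2n : c2^(2*n) = 1 := by
        rw [show 2*n = n+n by ring, pow_add, scn]
      have hWh : Wh = O * Ot := by
        calc Wh = (O*O)*Wh := by rw [sO, one_mul]
          _ = O * Ot := by rw [g2]; ring
      have hOt : Ot = Vt := by
        have sVt : Vt*Vt = 1 := by
          calc Vt*Vt = c2^(2*n)*c2^(2*n)*((O*O)*((c2^n*c2^n)*(Yn*Yn))) := by
                rw [g3, g4, g5]; ring
            _ = 1 := by rw [sc2n, sO, scn, sYn]; ring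
        calc Ot = Ot*(Vt*Vt) := by rw [sVt, mul_one]
          _ = Om*Vt := by rw [g1]; ring
          _ = Vt := by rw [g6, one_mul]
      calc c2^n * Wh * Yn = c2^n * (O * Vt) * Yn := by rw [hWh, hOt]
        _ = c2^n * (O * (c2^(2*n) * (O * (c2^n*Yn)))) * Yn := by rw [g3, g4, g5]
        _ = (c2^n*c2^n) * c2^(2*n) * (O*O) * (Yn*Yn) := by ring
        _ = 1 := by rw [scn, sc2n, sO, sYn]; ring
    -- concrete identities
    have hev : ∀ N : ℕ, ∀ i ∈ range N, legendreSym p ((2*i+1+1 : ℕ) : ℤ)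
        = legendreSym p ((2*i+2 : ℕ) : ℤ) := by
      intro N i _
      rw [show 2*i+1+1 = 2*i+2 by omega]
    have g1c : (∏ i ∈ range (4*n), legendreSym p ((i+1 : ℕ) : ℤ))
        = (∏ i ∈ range (2*n), legendreSym p ((2*i+1 : ℕ) : ℤ))
          * (∏ i ∈ range (2*n), legendreSym p ((2*i+2 : ℕ) : ℤ)) := by
      have hmerge := mergeL (fun j => legendreSym p ((j+1 : ℕ) : ℤ)) (2*n)
      rw [Finset.prod_congr rfl (hev (2*n)), show 2*(2*n) = 4*n by ring] at hmerge
      exact hmerge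
    have g2c : (∏ i ∈ range (2*n), legendreSym p ((2*i+1 : ℕ) : ℤ))
        = (∏ i ∈ range n, legendreSym p ((2*i+1 : ℕ) : ℤ))
          * (∏ i ∈ range n, legendreSym p ((2*n+1+2*i : ℕ) : ℤ)) := by
      have hsplit := Finset.prod_range_add (fun i => legendreSym p ((2*i+1 : ℕ) : ℤ)) n n
      have e2 : ∀ i ∈ range n, legendreSym p ((2*(n+i)+1 : ℕ) : ℤ)
          = legendreSym p ((2*n+1+2*i : ℕ) : ℤ) := by
        intro i _
        rw [show 2*(n+i)+1 = 2*n+1+2*i by omega]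
      rw [Finset.prod_congr rfl e2, show n+n = 2*n by omega] at hsplit
      exact hsplit
    have g3c : (∏ i ∈ range (2*n), legendreSym p ((2*i+2 : ℕ) : ℤ))
        = legendreSym p 2 ^(2*n) * ∏ i ∈ range (2*n), legendreSym p ((i+1 : ℕ) : ℤ) := by
      have hVt : ∀ i ∈ range (2*n), legendreSym p ((2*i+2 : ℕ) : ℤ)
          = legendreSym p 2 * legendreSym p ((i+1 : ℕ) : ℤ) := by
        intro i _
        rw [← legendreSym.mul]
        apply leg_congr
        push_cast
        ring
      rw [Finset.prod_congr rfl hVt, Finset.prod_mul_distrib, Finset.prod_const,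
        Finset.card_range]
    have g4c : (∏ i ∈ range (2*n), legendreSym p ((i+1 : ℕ) : ℤ))
        = (∏ i ∈ range n, legendreSym p ((2*i+1 : ℕ) : ℤ))
          * (∏ i ∈ range n, legendreSym p ((2*i+2 : ℕ) : ℤ)) := by
      have hmerge := mergeL (fun j => legendreSym p ((j+1 : ℕ) : ℤ)) n
      rw [Finset.prod_congr rfl (hev n)] at hmerge
      exact hmerge
    have g5c : (∏ i ∈ range n, legendreSym p ((2*i+2 : ℕ) : ℤ))
        = legendreSym p 2 ^n * ∏ i ∈ range n, legendreSym p ((i+1 : ℕ) : ℤ) := by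
      have hVt : ∀ i ∈ range n, legendreSym p ((2*i+2 : ℕ) : ℤ)
          = legendreSym p 2 * legendreSym p ((i+1 : ℕ) : ℤ) := by
        intro i _
        rw [← legendreSym.mul]
        apply leg_congr
        push_cast
        ring
      rw [Finset.prod_congr rfl hVt, Finset.prod_mul_distrib, Finset.prod_const,
        Finset.card_range]
    -- Wilson: the product over 1..4n is 1
    have g6c : (∏ i ∈ range (4*n), legendreSym p ((i+1 : ℕ) : ℤ)) = 1 := by
      have hfc : (((4*n)! : ℕ) : ℤ) = ∏ i ∈ range (4*n), ((i+1 : ℕ) : ℤ) := by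
        rw [← Finset.prod_range_add_one_eq_factorial]
        push_cast
        rfl
      have hto : (∏ i ∈ range (4*n), legendreSym p ((i+1 : ℕ) : ℤ))
          = legendreSym p (((4*n)! : ℕ) : ℤ) := by
        rw [hfc, leg_prod]
      rw [hto]
      -- now show χ((4n)!) = 1 using ((4n)!)² ≡ -1 and m even
      have hfcZ : (((4*n)! : ℕ) : ZMod p) = ∏ i ∈ range (4*n), ((i+1 : ℕ) : ZMod p) := by
        rw [← Finset.prod_range_add_one_eq_factorial]
        push_cast
        rfl
      have hX : (((4*n)! : ℕ) : ZMod p) * (((4*n)! : ℕ) : ZMod p) = -1 := by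
        have hw := ZMod.wilsons_lemma p
        rw [show p - 1 = 8*n by omega] at hw
        have hfc8 : (((8*n)! : ℕ) : ZMod p) = ∏ i ∈ range (8*n), ((i+1 : ℕ) : ZMod p) := by
          rw [← Finset.prod_range_add_one_eq_factorial]
          push_cast
          rfl
        rw [hfc8, show 8*n = 4*n+4*n by ring, Finset.prod_range_add] at hw
        have e4 : ∀ i ∈ range (4*n), ((4*n+i+1 : ℕ) : ZMod p)
            = (-1) * ((4*n-i : ℕ) : ZMod p) := by
          intro i hi
          have hi4 : i < 4*n := mem_range.mp hi
          have hsum : (4*n+i+1) + (4*n-i) = p := by omega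
          have h := congrArg (fun x : ℕ => (x : ZMod p)) hsum
          push_cast at h
          rw [ZMod.natCast_self] at h
          push_cast
          linear_combination h
        rw [Finset.prod_congr rfl e4, Finset.prod_mul_distrib, Finset.prod_const,
          Finset.card_range, show (4*n) = 2*(2*n) by ring, pow_mul, neg_one_sq, one_pow,
          one_mul] at hw
        have hrefl4 : (∏ i ∈ range (2*(2*n)), ((2*(2*n)-i : ℕ) : ZMod p))
            = ∏ i ∈ range (2*(2*n)), ((i+1 : ℕ) : ZMod p) := by
          rw [← Finset.prod_range_reflect (fun i => ((i+1 : ℕ) : ZMod p)) (2*(2*n))]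
          apply Finset.prod_congr rfl
          intro t ht
          have h := mem_range.mp ht
          rw [show 2*(2*n)-1-t+1 = 2*(2*n)-t by omega]
        rw [hrefl4] at hw
        rw [hfcZ, show 4*n = 2*(2*n) by ring]
        exact hw
      have hvv : legendreSym p (((4*n)! : ℕ) : ℤ) * legendreSym p (((4*n)! : ℕ) : ℤ) = 1 := by
        apply leg_sq_nat
        rw [hp.dvd_factorial]
        omega
      have hvcast : ((legendreSym p (((4*n)! : ℕ) : ℤ) : ℤ) : ZMod p) = 1 := by
        rw [legendreSym.eq_pow]
        have hcc : ((((4*n)! : ℕ) : ℤ) : ZMod p) = (((4*n)! : ℕ) : ZMod p) := by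
          push_cast
          rfl
        rw [hcc, show p / 2 = 2*(2*n) by omega, pow_mul, pow_two, hX, pow_mul, neg_one_sq, one_pow]
      rcases Int.isUnit_iff.mp (IsUnit.of_mul_eq_one _ hvv) with hv | hv
      · exact hv
      · exfalso
        rw [hv] at hvcast
        have h2z : ((2 : ℕ) : ZMod p) = 0 := by
          push_cast at hvcast ⊢
          linear_combination -hvcast
        rw [ZMod.natCast_eq_zero_iff] at h2z
        have := Nat.le_of_dvd (by norm_num) h2z
        omega
    have hc2one : legendreSym p 2 = 1 := by
      have hne : ((2 : ℤ) : ZMod p) ≠ 0 := by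
        have := nat_ne_zero p (j := 2) (hnd 2 (by omega) (by omega))
        push_cast at this ⊢
        exact this
      rw [legendreSym.eq_one_iff p hne]
      have hc : ((2 : ℤ) : ZMod p) = (2 : ZMod p) := by push_cast; rfl
      rw [hc]
      exact (ZMod.exists_sq_eq_two_iff (by omega : p ≠ 2)).mpr (Or.inl (by omega))
    have E1 := key2 (legendreSym p 2)
      (∏ i ∈ range n, legendreSym p ((2*i+1 : ℕ) : ℤ))
      (∏ i ∈ range n, legendreSym p ((i+1 : ℕ) : ℤ))
      (∏ i ∈ range (2*n), legendreSym p ((i+1 : ℕ) : ℤ))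
      (∏ i ∈ range n, legendreSym p ((2*i+2 : ℕ) : ℤ))
      (∏ i ∈ range n, legendreSym p ((2*n+1+2*i : ℕ) : ℤ))
      (∏ i ∈ range (2*n), legendreSym p ((2*i+1 : ℕ) : ℤ))
      (∏ i ∈ range (2*n), legendreSym p ((2*i+2 : ℕ) : ℤ))
      (∏ i ∈ range (4*n), legendreSym p ((i+1 : ℕ) : ℤ))
      s2 ?_ ?_ g1c g2c g3c g4c g5c g6c
    · exact E1.trans hc2one.symm
    · rw [← Finset.prod_mul_distrib]
      apply Finset.prod_eq_one
      intro s hs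
      have := mem_range.mp hs
      exact hsqn (2*s+1) (by omega) (by omega)
    · rw [← Finset.prod_mul_distrib]
      apply Finset.prod_eq_one
      intro s hs
      have := mem_range.mp hs
      exact hsqn (s+1) (by omega) (by omega)
  · -- odd case : m = 2*n+1
    obtain ⟨n, hn⟩ := hmo
    have hp8 : p = 8*n+5 := by omega
    have hhalf : (m+1)/2 = n+1 := by omega
    rw [hhalf]
    have hrefl : ∏ t ∈ range (n+1),
        legendreSym p ((((2*(m - 2*t) - 1) * (2*(m - 2*t))) : ℕ) : ℤ)
        = ∏ s ∈ range (n+1), legendreSym p ((((4*s+1)*(4*s+2)) : ℕ) : ℤ) := by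
      rw [← Finset.prod_range_reflect (fun s => legendreSym p ((((4*s+1)*(4*s+2)) : ℕ) : ℤ)) (n+1)]
      apply Finset.prod_congr rfl
      intro t ht
      have h := mem_range.mp ht
      rw [show 2*(m - 2*t) - 1 = 4*(n+1-1-t)+1 by omega,
        show 2*(m - 2*t) = 4*(n+1-1-t)+2 by omega]
    rw [hrefl]
    have hterm : ∀ s ∈ range (n+1), legendreSym p ((((4*s+1)*(4*s+2)) : ℕ) : ℤ)
        = legendreSym p 2 * legendreSym p ((2*n+1-s : ℕ) : ℤ)
          * legendreSym p ((2*s+1 : ℕ) : ℤ) := by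
      intro s hs
      have hsn : s ≤ n := by
        have := mem_range.mp hs
        omega
      set w : ℕ := 2*n+1-s with hw
      have hwp : (4*s+1) + 4*w = p := by omega
      have hcast : (((((4*s+1)*(4*s+2)) : ℕ) : ℤ) : ZMod p)
          = (((-8) * ((w : ℕ) : ℤ) * ((2*s+1 : ℕ) : ℤ) : ℤ) : ZMod p) := by
        have h1 : 4*(s : ZMod p)+1+4*(w : ZMod p) = 0 := by
          have h := congrArg (fun x : ℕ => (x : ZMod p)) hwp
          push_cast at h
          rw [h]
          exact ZMod.natCast_self p
        push_cast
        linear_combination (4*(s : ZMod p)+2) * h1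
      rw [leg_congr p hcast, legendreSym.mul, legendreSym.mul, hneg8]
    rw [Finset.prod_congr rfl hterm]
    rw [Finset.prod_mul_distrib, Finset.prod_mul_distrib, Finset.prod_const, Finset.card_range]
    have hZrefl : ∏ s ∈ range (n+1), legendreSym p ((2*n+1-s : ℕ) : ℤ)
        = ∏ s ∈ range (n+1), legendreSym p ((n+1+s : ℕ) : ℤ) := by
      rw [← Finset.prod_range_reflect (fun s => legendreSym p ((n+1+s : ℕ) : ℤ)) (n+1)]
      apply Finset.prod_congr rfl
      intro t ht
      have h := mem_range.mp ht
      rw [show n+1+(n+1-1-t) = 2*n+1-t by omega]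
    rw [hZrefl]
    -- abstract algebra step
    have key : ∀ c2 cm Y Z W V U : ℤ,
        c2*c2 = 1 → Y*Y = 1 → U*U = 1 → cm*cm = 1 →
        V = c2^(n+1)*Y → W*V = U*(c2*cm) → Y*Z = cm*U →
        c2^(n+1)*Z*W = c2 := by
      intro c2 cm Y Z W V U s2' sY sU sc f1 f2 f4
      have sA : c2^(n+1)*c2^(n+1) = 1 := by rw [← mul_pow, s2', one_pow]
      have sV : V*V = 1 := by
        calc V*V = (c2^(n+1)*c2^(n+1))*(Y*Y) := by rw [f1]; ring
          _ = 1 := by rw [sA, sY, mul_one]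
      calc c2^(n+1)*Z*W = c2^(n+1)*Z*(W*(V*V)) := by rw [sV, mul_one]
        _ = c2^(n+1)*Z*((W*V)*V) := by ring
        _ = c2^(n+1)*Z*((U*(c2*cm))*(c2^(n+1)*Y)) := by rw [f2, f1]
        _ = (c2^(n+1)*c2^(n+1))*c2*((Y*Z)*U*cm) := by ring
        _ = (c2^(n+1)*c2^(n+1))*c2*((cm*U)*U*cm) := by rw [f4]
        _ = (c2^(n+1)*c2^(n+1))*c2*((U*U)*(cm*cm)) := by ring
        _ = c2 := by rw [sA, sU, sc]; ring
    -- the concrete products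
    have f1 : (∏ s ∈ range (n+1), legendreSym p ((2*s+2 : ℕ) : ℤ))
        = legendreSym p 2 ^(n+1) * ∏ s ∈ range (n+1), legendreSym p ((s+1 : ℕ) : ℤ) := by
      have hVt : ∀ s ∈ range (n+1), legendreSym p ((2*s+2 : ℕ) : ℤ)
          = legendreSym p 2 * legendreSym p ((s+1 : ℕ) : ℤ) := by
        intro s hs
        rw [← legendreSym.mul]
        apply leg_congr
        push_cast
        ring
      rw [Finset.prod_congr rfl hVt, Finset.prod_mul_distrib, Finset.prod_const,
        Finset.card_range]
    have f2 : (∏ s ∈ range (n+1), legendreSym p ((2*s+1 : ℕ) : ℤ))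
          * (∏ s ∈ range (n+1), legendreSym p ((2*s+2 : ℕ) : ℤ))
        = (∏ j ∈ range (2*n+1), legendreSym p ((j+1 : ℕ) : ℤ))
          * (legendreSym p 2 * legendreSym p ((n+1 : ℕ) : ℤ)) := by
      have hmerge := mergeL (fun j => legendreSym p ((j+1 : ℕ) : ℤ)) (n+1)
      have e1 : ∀ i ∈ range (n+1), legendreSym p ((2*i+1+1 : ℕ) : ℤ)
          = legendreSym p ((2*i+2 : ℕ) : ℤ) := by
        intro i _
        rw [show 2*i+1+1 = 2*i+2 by omega]
      rw [Finset.prod_congr rfl e1, show 2*(n+1) = 2*n+1+1 by ring, prod_range_succ] at hmerge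
      rw [← hmerge]
      congr 1
      rw [← legendreSym.mul]
      apply leg_congr
      push_cast
      ring
    have f4 : (∏ s ∈ range (n+1), legendreSym p ((s+1 : ℕ) : ℤ))
          * (∏ s ∈ range (n+1), legendreSym p ((n+1+s : ℕ) : ℤ))
        = legendreSym p ((n+1 : ℕ) : ℤ) * ∏ j ∈ range (2*n+1), legendreSym p ((j+1 : ℕ) : ℤ) := by
      have hUsplit := Finset.prod_range_add (fun j => legendreSym p ((j+1 : ℕ) : ℤ)) (n+1) n
      have e2 : ∀ i ∈ range n, legendreSym p ((n+1+i+1 : ℕ) : ℤ)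
          = legendreSym p ((n+2+i : ℕ) : ℤ) := by
        intro i _
        rw [show n+1+i+1 = n+2+i by omega]
      rw [Finset.prod_congr rfl e2, show n+1+n = 2*n+1 by omega] at hUsplit
      have hZsplit : (∏ s ∈ range (n+1), legendreSym p ((n+1+s : ℕ) : ℤ))
          = (∏ s ∈ range n, legendreSym p ((n+2+s : ℕ) : ℤ)) * legendreSym p ((n+1 : ℕ) : ℤ) := by
        rw [prod_range_succ' (fun s => legendreSym p ((n+1+s : ℕ) : ℤ)) n]
        have e3 : ∀ s ∈ range n, legendreSym p ((n+1+(s+1) : ℕ) : ℤ)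
            = legendreSym p ((n+2+s : ℕ) : ℤ) := by
          intro s _
          rw [show n+1+(s+1) = n+2+s by omega]
        rw [Finset.prod_congr rfl e3, show n+1+0 = n+1 by omega]
      rw [hZsplit, hUsplit]
      ring
    have sY : (∏ s ∈ range (n+1), legendreSym p ((s+1 : ℕ) : ℤ))
        * (∏ s ∈ range (n+1), legendreSym p ((s+1 : ℕ) : ℤ)) = 1 := by
      rw [← Finset.prod_mul_distrib]
      apply Finset.prod_eq_one
      intro s hs
      have := mem_range.mp hs
      exact hsqn (s+1) (by omega) (by omega)
    have sU : (∏ j ∈ range (2*n+1), legendreSym p ((j+1 : ℕ) : ℤ))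
        * (∏ j ∈ range (2*n+1), legendreSym p ((j+1 : ℕ) : ℤ)) = 1 := by
      rw [← Finset.prod_mul_distrib]
      apply Finset.prod_eq_one
      intro s hs
      have := mem_range.mp hs
      exact hsqn (s+1) (by omega) (by omega)
    have sc : legendreSym p ((n+1 : ℕ) : ℤ) * legendreSym p ((n+1 : ℕ) : ℤ) = 1 :=
      hsqn (n+1) (by omega) (by omega)
    exact key (legendreSym p 2) (legendreSym p ((n+1 : ℕ) : ℤ)) _ _ _ _ _ s2 sY sU sc f1 f2 f4
end

section
/- Let q = 2n+1 be an odd prime power with q ≡ 3 (mod 4), let χ be a generator of the group of ℂ-valued multiplicative characters of F_q^×, and let a be an integer with gcd(a, q−1) = 1. Then ∏_{k∈ℤ, 0<k<n/2} (J_q(φ,χ^{ak}) − J_q(φ,χ^{−ak})) = (a/n)·I_q(χ), where (a/n) is the Jacobi symbol. (Equivalently, the Galois automorphism σ_a of ℚ(ζ_{q−1}) with σ_a(ζ_{q−1}) = ζ_{q−1}^a satisfies σ_a(I_q(χ)) = (a/n)·I_q(χ).) -/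
open Finset

/-- `I_q(χ) = ∏_{k ∈ ℤ, 0 < k < n/2} (J_q(φ, χ^k) - J_q(φ, χ^{-k}))`. -/
noncomputable def Iq {F : Type*} [Field F] [Fintype F] [DecidableEq F]
    (n : ℕ) (χ : MulChar F ℂ) : ℂ :=
  ∏ k ∈ (Finset.range n).filter fun k => 0 < k ∧ 2 * k < n,
    (jacobiSum (phiC F) (χ ^ (k : ℤ)) - jacobiSum (phiC F) (χ ^ (-(k : ℤ))))

namespace JS13

def rr (a : ℤ) (n k : ℕ) : ℤ := a * k % (n : ℤ)

noncomputable def eps (a : ℤ) (n k : ℕ) : ℤ := if rr a n k ≤ (n / 2 : ℕ) then 1 else -1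

noncomputable def G (a : ℤ) (n : ℕ) : ℤ := ∏ k ∈ Finset.Icc 1 (n / 2), eps a n k

noncomputable def fold (a : ℤ) (n k : ℕ) : ℕ :=
  (if rr a n k ≤ (n / 2 : ℕ) then rr a n k else (n : ℤ) - rr a n k).toNat

variable {a b : ℤ} {n k : ℕ}

lemma rr_nonneg (hn : 0 < n) : 0 ≤ rr a n k :=
  Int.emod_nonneg _ (by exact_mod_cast hn.ne')

lemma rr_lt (hn : 0 < n) : rr a n k < n :=
  Int.emod_lt_of_pos _ (by exact_mod_cast hn)

lemma rr_pos (hco : IsCoprime a (n : ℤ)) (hk1 : 1 ≤ k) (hk2 : k < n) :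
    0 < rr a n k := by
  have h0 : 0 ≤ rr a n k := rr_nonneg (by omega)
  rcases h0.lt_or_eq with h | h
  · exact h
  · exfalso
    have hdvd : (n : ℤ) ∣ a * k := Int.dvd_of_emod_eq_zero h.symm
    have h2 : (n : ℤ) ∣ (k : ℤ) :=
      (hco.symm).dvd_of_dvd_mul_right (by rwa [mul_comm] at hdvd)
    have := Int.le_of_dvd (by exact_mod_cast hk1) h2
    omega

lemma rr_modeq (h : Int.ModEq n a b) : rr a n k = rr b n k :=
  h.mul_right (k : ℤ)

lemma fold_cast (hn : 0 < n) :
    (fold a n k : ℤ) = if rr a n k ≤ (n / 2 : ℕ) then rr a n k else (n : ℤ) - rr a n k := by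
  have h0 : 0 ≤ rr a n k := rr_nonneg hn
  have h1 : rr a n k < n := rr_lt hn
  unfold fold
  split <;> rw [Int.toNat_of_nonneg (by omega)]

lemma fold_mem (hn : n % 2 = 1) (hco : IsCoprime a (n : ℤ))
    (hk : k ∈ Finset.Icc 1 (n / 2)) : fold a n k ∈ Finset.Icc 1 (n / 2) := by
  simp only [Finset.mem_Icc] at hk ⊢
  have hn0 : 0 < n := by omega
  have h0 : 0 < rr a n k := rr_pos hco hk.1 (by omega)
  have h1 : rr a n k < n := rr_lt hn0
  have hc := fold_cast (a := a) (k := k) hn0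
  constructor
  · suffices h : (1 : ℤ) ≤ (fold a n k : ℤ) by exact_mod_cast h
    rw [hc]; split <;> omega
  · suffices h : (fold a n k : ℤ) ≤ ((n / 2 : ℕ) : ℤ) by exact_mod_cast h
    rw [hc]
    split <;> omega

-- a * k ≡ a * k' and k,k' in (0, n) with k + k' < n type arguments
lemma cancel_eq (hco : IsCoprime a (n : ℤ)) {k k' : ℕ}
    (hk : k < n) (hk' : k' < n) (h : rr a n k = rr a n k') : k = k' := by
  have hdvd : (n : ℤ) ∣ a * k' - a * k := Int.ModEq.dvd h
  have h2 : (n : ℤ) ∣ ((k' : ℤ) - k) := by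
    have : a * ((k' : ℤ) - k) = a * k' - a * k := by ring
    exact (hco.symm).dvd_of_dvd_mul_right (by rwa [mul_comm ((k':ℤ) - k), this])
  have hz : (k' : ℤ) - k = 0 := by
    by_contra h0
    have h3 := Int.le_of_dvd (abs_pos.mpr h0) ((dvd_abs _ _).mpr h2)
    have h4 : |(k' : ℤ) - k| < n := by
      rw [abs_lt]
      constructor <;> [omega; omega]
    omega
  have : (k' : ℤ) = k := by omega
  exact_mod_cast this.symm

lemma cancel_add (hco : IsCoprime a (n : ℤ)) {k k' : ℕ}
    (hk1 : 1 ≤ k) (hk' : 1 ≤ k') (hsum : k + k' < n)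
    (h : rr a n k + rr a n k' = n) : False := by
  have hn0 : 0 < n := by omega
  have hdvd : (n : ℤ) ∣ a * (k + k' : ℕ) := by
    apply Int.dvd_of_emod_eq_zero
    have : (a * ((k : ℕ) + (k' : ℕ) : ℕ) : ℤ) = a * k + a * k' := by push_cast; ring
    rw [this, Int.add_emod]
    show (rr a n k + rr a n k') % n = 0
    rw [h]
    simp
  have h2 : (n : ℤ) ∣ ((k + k' : ℕ) : ℤ) :=
    (hco.symm).dvd_of_dvd_mul_right (by rwa [mul_comm] at hdvd)
  have hpos : (0:ℤ) < ((k + k' : ℕ) : ℤ) := by exact_mod_cast (by omega : 0 < k + k')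
  have hle := Int.le_of_dvd hpos h2
  have : n ≤ k + k' := by exact_mod_cast hle
  omega

lemma fold_injOn (hn : n % 2 = 1) (hco : IsCoprime a (n : ℤ)) :
    Set.InjOn (fold a n) (Finset.Icc 1 (n / 2)) := by
  intro k hk k' hk' h
  simp only [Finset.coe_Icc, Set.mem_Icc] at hk hk'
  have hn0 : 0 < n := by omega
  have hb : ∀ j : ℕ, 1 ≤ j → j ≤ n / 2 → 0 < rr a n j ∧ rr a n j < n := fun j h1 h2 =>
    ⟨rr_pos hco h1 (by omega), rr_lt hn0⟩
  obtain ⟨hr0, hr1⟩ := hb k hk.1 hk.2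
  obtain ⟨hr0', hr1'⟩ := hb k' hk'.1 hk'.2
  have h' : (fold a n k : ℤ) = fold a n k' := by exact_mod_cast h
  rw [fold_cast hn0, fold_cast hn0] at h'
  split_ifs at h' with h1 h2 h2
  · exact cancel_eq hco (by omega) (by omega) h'
  · exfalso
    have hs : rr a n k + rr a n k' = n := by omega
    exact cancel_add hco hk.1 hk'.1 (by omega) hs
  · exfalso
    have hs : rr a n k' + rr a n k = n := by omega
    exact cancel_add hco hk'.1 hk.1 (by omega) hs
  · have : rr a n k = rr a n k' := by omega
    exact cancel_eq hco (by omega) (by omega) this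

lemma fold_image (hn : n % 2 = 1) (hco : IsCoprime a (n : ℤ)) :
    (Finset.Icc 1 (n / 2)).image (fold a n) = Finset.Icc 1 (n / 2) := by
  apply Finset.eq_of_subset_of_card_le
  · intro j hj
    obtain ⟨k, hk, rfl⟩ := Finset.mem_image.mp hj
    exact fold_mem hn hco hk
  · rw [Finset.card_image_of_injOn (fold_injOn hn hco)]

lemma fold_surjOn (hn : n % 2 = 1) (hco : IsCoprime a (n : ℤ)) :
    Set.SurjOn (fold a n) (Finset.Icc 1 (n / 2)) (Finset.Icc 1 (n / 2)) := by
  intro j hj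
  rw [← fold_image hn hco] at hj
  simpa [Finset.coe_image] using
    (by exact_mod_cast hj : j ∈ (Finset.Icc 1 (n / 2)).image (fold a n))

end JS13

namespace JS13two
open JS13

variable {a b : ℤ} {n k : ℕ}

lemma per_int {R : Type*} (f : ℤ → R) (n : ℕ) (hper : ∀ x, f (x + n) = f x) :
    ∀ (t : ℤ) (x : ℤ), f (x + n * t) = f x := by
  intro t
  induction t using Int.induction_on with
  | zero => simp
  | succ i ih =>
      intro x
      have h1 : x + (n : ℤ) * (i + 1) = (x + n * i) + n := by ring
      rw [h1, hper, ih]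
  | pred i ih =>
      intro x
      have h1 : x + (n : ℤ) * (-i - 1) + n = x + n * (-i) := by ring
      have := hper (x + (n : ℤ) * (-i - 1))
      rw [h1] at this
      rw [← this, ih]

lemma f_step {R : Type*} [CommRing R] (hn : n % 2 = 1) (hco : IsCoprime a (n : ℤ))
    (f : ℤ → R) (hper : ∀ x, f (x + n) = f x) (hodd : ∀ x, f (-x) = -f x)
    (hk : k ∈ Finset.Icc 1 (n / 2)) :
    f (a * k) = (eps a n k : R) * f (fold a n k) := by
  simp only [Finset.mem_Icc] at hk
  have hn0 : 0 < n := by omega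
  have hr0 : 0 < rr a n k := rr_pos hco hk.1 (by omega)
  have hr1 : rr a n k < n := rr_lt hn0
  have hak : f (a * k) = f (rr a n k) := by
    have h1 : a * k = rr a n k + (n : ℤ) * (a * k / n) := by
      have := Int.mul_ediv_add_emod (a * (k : ℤ)) (n : ℤ)
      unfold rr
      omega
    rw [h1, per_int f n hper]
  rw [hak, eps, fold_cast hn0]
  split_ifs with h
  · rw [Int.cast_one, one_mul]
  · rw [Int.cast_neg, Int.cast_one]
    have h2 : f ((n : ℤ) - rr a n k) = - f (rr a n k) := by
      have h3 : (n : ℤ) - rr a n k = -(rr a n k) + n * 1 := by ring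
      rw [h3, per_int f n hper, hodd]
    rw [h2]
    ring

lemma prod_fold {R : Type*} [CommRing R] (hn : n % 2 = 1) (hco : IsCoprime a (n : ℤ))
    (f : ℤ → R) (hper : ∀ x, f (x + n) = f x) (hodd : ∀ x, f (-x) = -f x) :
    ∏ k ∈ Finset.Icc 1 (n / 2), f (a * k) =
      (G a n : R) * ∏ k ∈ Finset.Icc 1 (n / 2), f k := by
  have h1 : ∏ k ∈ Finset.Icc 1 (n / 2), f (a * k) =
      ∏ k ∈ Finset.Icc 1 (n / 2), ((eps a n k : R) * f (fold a n k)) :=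
    Finset.prod_congr rfl fun k hk => f_step hn hco f hper hodd hk
  rw [h1, Finset.prod_mul_distrib]
  congr 1
  · rw [G]; push_cast; rfl
  · exact Finset.prod_nbij (fold a n) (fun k hk => fold_mem hn hco hk)
      (fold_injOn hn hco) (fold_surjOn hn hco) (fun k hk => rfl)

lemma sum_fold (hn : n % 2 = 1) (hco : IsCoprime a (n : ℤ)) :
    ∑ k ∈ Finset.Icc 1 (n / 2), fold a n k = ∑ k ∈ Finset.Icc 1 (n / 2), k :=
  Finset.sum_nbij (fold a n) (fun k hk => fold_mem hn hco hk)
    (fold_injOn hn hco) (fold_surjOn hn hco) (fun k hk => rfl)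

/-- Eisenstein sum -/
def SN (A n : ℕ) : ℕ := ∑ k ∈ Finset.Icc 1 (n / 2), A * k / n

lemma G_eq_pow (hn : n % 2 = 1) {A : ℕ} (hA : A % 2 = 1) (hco : IsCoprime (A : ℤ) n) :
    G (A : ℤ) n = (-1) ^ (SN A n) := by
  classical
  have hn0 : 0 < n := by omega
  set s := Finset.Icc 1 (n / 2) with hs
  set P : ℕ → Prop := fun k => rr (A : ℤ) n k ≤ ((n / 2 : ℕ) : ℤ) with hP
  set N : ℕ := (s.filter fun k => ¬ P k).card with hN
  have hG : G (A : ℤ) n = (-1) ^ N := by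
    rw [G, ← hs]
    unfold eps
    rw [Finset.prod_ite (p := P) (f := fun _ => (1 : ℤ)) (g := fun _ => (-1 : ℤ))]
    simp [hN, hP]
  set T : ℤ := ∑ k ∈ s, (k : ℤ) with hT
  set S : ℤ := ∑ k ∈ s, ((A : ℤ) * k / n) with hS
  set R : ℤ := ∑ k ∈ s, rr (A : ℤ) n k with hR
  set L : ℤ := ∑ k ∈ s.filter (fun k => ¬ P k), rr (A : ℤ) n k with hL
  have h1 : (A : ℤ) * T = n * S + R := by
    rw [hT, hS, hR, Finset.mul_sum, Finset.mul_sum, ← Finset.sum_add_distrib]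
    refine Finset.sum_congr rfl fun k hk => ?_
    have := Int.mul_ediv_add_emod ((A : ℤ) * (k : ℤ)) (n : ℤ)
    unfold rr
    omega
  have h2 : ∑ k ∈ s, (fold (A : ℤ) n k : ℤ) = T := by
    rw [hT, hs, ← Nat.cast_sum, ← Nat.cast_sum]
    exact congrArg _ (sum_fold hn hco)
  have h3 : ∑ k ∈ s, (fold (A : ℤ) n k : ℤ) = R + (N : ℤ) * n - 2 * L := by
    have hfp : ∀ k ∈ s.filter P, (fold (A : ℤ) n k : ℤ) = rr (A : ℤ) n k := by
      intro k hk
      rw [fold_cast hn0, if_pos (Finset.mem_filter.mp hk).2]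
    have hfn : ∀ k ∈ s.filter (fun k => ¬ P k), (fold (A : ℤ) n k : ℤ) =
        (n : ℤ) - rr (A : ℤ) n k := by
      intro k hk
      rw [fold_cast hn0, if_neg (Finset.mem_filter.mp hk).2]
    have e1 : ∑ k ∈ s.filter P, (fold (A : ℤ) n k : ℤ) =
        ∑ k ∈ s.filter P, rr (A : ℤ) n k := Finset.sum_congr rfl hfp
    have e2 : ∑ k ∈ s.filter (fun k => ¬ P k), (fold (A : ℤ) n k : ℤ) =
        ∑ k ∈ s.filter (fun k => ¬ P k), ((n : ℤ) - rr (A : ℤ) n k) :=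
      Finset.sum_congr rfl hfn
    have e3 : ∑ k ∈ s.filter (fun k => ¬ P k), ((n : ℤ) - rr (A : ℤ) n k) =
        (N : ℤ) * n - L := by
      rw [Finset.sum_sub_distrib, Finset.sum_const, nsmul_eq_mul, ← hL, ← hN]
    have e4 := Finset.sum_filter_add_sum_filter_not s P (fun k => (fold (A : ℤ) n k : ℤ))
    have e5 := Finset.sum_filter_add_sum_filter_not s P (fun k => rr (A : ℤ) n k)
    linarith [e1, e2, e3, e4, e5, hL, hR]
  have hSN : S = (SN A n : ℤ) := by
    rw [hS, SN]
    push_cast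
    rfl
  have heven : Even (S - N) := by
    have hkey : (n : ℤ) * (S - N) = ((A : ℤ) - 1) * T - 2 * L := by linarith [h1, h2, h3]
    have hA1 : Even ((A : ℤ) - 1) := by
      rw [Int.even_iff]
      omega
    have h4 : Even ((n : ℤ) * (S - N)) := by
      obtain ⟨t, ht⟩ := hA1
      exact ⟨(t * T - L), by rw [hkey, ht]; ring⟩
    rcases Int.even_mul.mp h4 with h | h
    · exfalso
      rw [Int.even_coe_nat, Nat.even_iff] at h
      omega
    · exact h
  rw [hG]
  have hpar : Even (SN A n) ↔ Even N := by
    have := Int.even_sub.mp heven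
    rw [hSN] at this  -- careless: heven is about S; after rw needs S
    constructor
    · intro h; exact Int.even_coe_nat _ |>.mp (this.mp (by exact_mod_cast h))
    · intro h; exact_mod_cast this.mpr (by exact_mod_cast h)
  rcases Nat.even_or_odd N with h | h
  · rw [h.neg_one_pow, (hpar.mpr h).neg_one_pow]
  · rw [h.neg_one_pow]
    have hodd : Odd (SN A n) := by
      rcases Nat.even_or_odd (SN A n) with h' | h'
      · exact absurd (hpar.mp h') (Nat.not_even_iff_odd.mpr h)
      · exact h'
    rw [hodd.neg_one_pow]

end JS13two

namespace JS13three
open JS13 JS13two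

lemma div_eq_card {A B k : ℕ} (hA : A % 2 = 1) (hB : B % 2 = 1)
    (hco : Nat.Coprime A B) (hk1 : 1 ≤ k) (hk2 : k ≤ B / 2) :
    A * k / B = ((Finset.Icc 1 (A / 2)).filter (fun j => j * B ≤ A * k)).card := by
  have hB0 : 0 < B := by omega
  have hbound : A * k / B ≤ A / 2 := by
    have h5 : A * k ≤ A * (B / 2) := Nat.mul_le_mul_left A hk2
    have hlt : A * k < (A / 2 + 1) * B := by nlinarith [Nat.div_add_mod A 2, Nat.div_add_mod B 2]
    have := (Nat.div_lt_iff_lt_mul hB0).mpr hlt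
    omega
  have hset : (Finset.Icc 1 (A / 2)).filter (fun j => j * B ≤ A * k) =
      Finset.Icc 1 (A * k / B) := by
    ext j
    simp only [Finset.mem_filter, Finset.mem_Icc]
    constructor
    · rintro ⟨⟨hj1, _⟩, hj⟩
      exact ⟨hj1, Nat.le_div_iff_mul_le hB0 |>.mpr hj⟩
    · rintro ⟨hj1, hj2⟩
      exact ⟨⟨hj1, le_trans hj2 hbound⟩, (Nat.le_div_iff_mul_le hB0).mp hj2⟩
  rw [hset]
  simp [Nat.card_Icc]

lemma no_tie {A B j k : ℕ} (hco : Nat.Coprime A B) (hk1 : 1 ≤ k) (hk2 : k ≤ B / 2)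
    (hB : B % 2 = 1) : j * B ≠ A * k := by
  intro h
  have hdvd : B ∣ A * k := ⟨j, by rw [← h]; ring⟩
  have : B ∣ k := (Nat.Coprime.dvd_of_dvd_mul_left (hco.symm) hdvd)
  have := Nat.le_of_dvd (by omega) this
  omega

lemma SN_rec {A B : ℕ} (hA : A % 2 = 1) (hB : B % 2 = 1) (hco : Nat.Coprime A B) :
    SN A B + SN B A = (A / 2) * (B / 2) := by
  classical
  have h1 : SN A B = ∑ k ∈ Finset.Icc 1 (B / 2), ∑ j ∈ Finset.Icc 1 (A / 2),
      (if j * B ≤ A * k then 1 else 0) := by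
    rw [SN]
    refine Finset.sum_congr rfl fun k hk => ?_
    simp only [Finset.mem_Icc] at hk
    rw [div_eq_card hA hB hco hk.1 hk.2, Finset.card_filter]
  have h2 : SN B A = ∑ k ∈ Finset.Icc 1 (B / 2), ∑ j ∈ Finset.Icc 1 (A / 2),
      (if k * A ≤ B * j then 1 else 0) := by
    rw [SN, Finset.sum_comm]
    refine Finset.sum_congr rfl fun j hj => ?_
    simp only [Finset.mem_Icc] at hj
    rw [div_eq_card hB hA hco.symm hj.1 hj.2, Finset.card_filter]
  rw [h1, h2, ← Finset.sum_add_distrib]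
  have h3 : ∀ k ∈ Finset.Icc 1 (B / 2),
      ((∑ j ∈ Finset.Icc 1 (A / 2), (if j * B ≤ A * k then 1 else 0)) +
        ∑ j ∈ Finset.Icc 1 (A / 2), (if k * A ≤ B * j then 1 else 0)) = A / 2 := by
    intro k hk
    simp only [Finset.mem_Icc] at hk
    rw [← Finset.sum_add_distrib]
    have h4 : ∀ j ∈ Finset.Icc 1 (A / 2),
        ((if j * B ≤ A * k then 1 else 0) + (if k * A ≤ B * j then 1 else 0)) = 1 := by
      intro j hj
      have hne := no_tie hco hk.1 hk.2 hB (A := A) (j := j)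
      have e1 : j * B = B * j := Nat.mul_comm _ _
      have e2 : k * A = A * k := Nat.mul_comm _ _
      rcases le_or_gt (j * B) (A * k) with h | h
      · rw [if_pos h, if_neg (by omega)]
      · rw [if_neg (by omega), if_pos (by omega)]
    rw [Finset.sum_congr rfl h4, Finset.sum_const, Nat.card_Icc, smul_eq_mul,
      Nat.add_sub_cancel, Nat.mul_one]
  rw [Finset.sum_congr rfl h3, Finset.sum_const, Nat.card_Icc, smul_eq_mul,
    Nat.add_sub_cancel, Nat.mul_comm]

lemma G_modeq {a b : ℤ} {n : ℕ} (h : Int.ModEq n a b) : G a n = G b n := by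
  unfold G eps
  exact Finset.prod_congr rfl fun k _ => by rw [rr_modeq h]

lemma coprime_of_modeq {a b : ℤ} {n : ℕ} (h : Int.ModEq n a b)
    (hco : IsCoprime a (n : ℤ)) : IsCoprime b (n : ℤ) := by
  obtain ⟨t, ht⟩ := h.dvd
  have : b = a + (n : ℤ) * t := by omega
  rw [this]
  exact hco.add_mul_left_left t

lemma rr_neg_add {a : ℤ} {n k : ℕ} (hn : n % 2 = 1) (hn3 : 3 ≤ n)
    (hco : IsCoprime a (n : ℤ)) (hk1 : 1 ≤ k) (hk2 : k < n) :
    rr (-a) n k = (n : ℤ) - rr a n k := by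
  have hn0 : 0 < n := by omega
  have h1 : 0 < rr a n k := rr_pos hco hk1 hk2
  have h2 : rr a n k < n := rr_lt hn0
  have h3 : 0 < rr (-a) n k := rr_pos (hco.neg_left) hk1 hk2
  have h4 : rr (-a) n k < n := rr_lt hn0
  have hdvd : (n : ℤ) ∣ (rr (-a) n k + rr a n k) := by
    apply Int.dvd_of_emod_eq_zero
    unfold rr
    rw [← Int.add_emod]
    simp [show -a * (k:ℤ) + a * k = 0 by ring]
  rcases hdvd with ⟨c, hc⟩
  have hc1 : c = 1 := by
    rcases lt_trichotomy c 1 with h' | h' | h'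
    · exfalso; nlinarith
    · exact h'
    · exfalso; nlinarith
  rw [hc1, mul_one] at hc
  omega

lemma G_neg {a : ℤ} {n : ℕ} (hn : n % 2 = 1) (hn3 : 3 ≤ n) (hco : IsCoprime a (n : ℤ)) :
    G (-a) n = (-1) ^ (n / 2) * G a n := by
  have heps : ∀ k ∈ Finset.Icc 1 (n / 2), eps (-a) n k = - eps a n k := by
    intro k hk
    simp only [Finset.mem_Icc] at hk
    have hr := rr_neg_add hn hn3 hco hk.1 (by omega)
    have h1 : 0 < rr a n k := rr_pos hco hk.1 (by omega)
    have h2 : rr a n k < n := rr_lt (by omega)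
    unfold eps
    rw [hr]
    have hiff : ((n : ℤ) - rr a n k ≤ ((n / 2 : ℕ) : ℤ)) ↔
        ¬ (rr a n k ≤ ((n / 2 : ℕ) : ℤ)) := by
      constructor <;> intro h <;> omega
    by_cases hP : rr a n k ≤ ((n / 2 : ℕ) : ℤ)
    · rw [if_pos hP, if_neg (by rw [hiff]; exact fun hh => hh hP |>.elim)]
    · rw [if_pos (hiff.mpr hP), if_neg hP]
      norm_num
  rw [G, Finset.prod_congr rfl heps]
  have : ∀ k ∈ Finset.Icc 1 (n / 2), - eps a n k = (-1) * eps a n k := by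
    intro k _; ring
  rw [Finset.prod_congr rfl this, Finset.prod_mul_distrib, Finset.prod_const, Nat.card_Icc,
    Nat.add_sub_cancel, G]

end JS13three

namespace JS13four
open JS13 JS13two JS13three

lemma swap {n A : ℕ} (hn : n % 2 = 1) (hA : A % 2 = 1) (h1 : 1 ≤ A) (hlt : A < n)
    (hco : IsCoprime (A : ℤ) (n : ℤ))
    (hrec : jacobiSym (n : ℤ) A = G (n : ℤ) A) :
    jacobiSym (A : ℤ) n = G (A : ℤ) n := by
  have hconat : Nat.Coprime A n := by
    rwa [Int.isCoprime_iff_gcd_eq_one, Int.gcd_natCast_natCast] at hco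
  have e1 : G (A : ℤ) n = (-1) ^ (SN A n) := G_eq_pow hn hA hco
  have e2 : G (n : ℤ) A = (-1) ^ (SN n A) := G_eq_pow hA hn hco.symm
  have e3 := SN_rec hA hn hconat
  have e4 := jacobiSym.quadratic_reciprocity (Nat.odd_iff.mpr hA) (Nat.odd_iff.mpr hn)
  rw [e4, hrec, e2, e1, ← pow_add,
    show A / 2 * (n / 2) + SN n A = SN A n + 2 * (SN n A) by omega,
    pow_add, pow_mul, neg_one_sq, one_pow, mul_one]

theorem jacobiSym_eq_G : ∀ n : ℕ, n % 2 = 1 → ∀ a : ℤ, IsCoprime a (n : ℤ) →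
    jacobiSym a n = G a n := by
  intro n
  induction n using Nat.strong_induction_on with
  | _ n IH =>
    intro hn a hco
    by_cases h1 : n = 1
    · subst h1
      simp [G, jacobiSym.one_right]
    · have hn3 : 3 ≤ n := by omega
      set b : ℤ := if a % 2 = 0 then a + n else a with hb
      have hab : Int.ModEq n a b := by
        rw [hb]; split
        · exact (Int.modEq_iff_dvd.mpr ⟨1, by ring⟩)
        · rfl
      have hbodd : b % 2 = 1 := by
        rw [hb]; split <;> omega
      have hcob : IsCoprime b (n : ℤ) := coprime_of_modeq hab hco
      set c : ℤ := b % (2 * (n : ℤ)) with hc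
      have h2n : (0 : ℤ) < 2 * (n : ℤ) := by positivity
      have hc0 : 0 ≤ c := Int.emod_nonneg b h2n.ne'
      have hc2n : c < 2 * n := Int.emod_lt_of_pos b h2n
      have hbc : Int.ModEq (2 * (n : ℤ)) b c := by
        show b % (2 * (n : ℤ)) = c % (2 * (n : ℤ))
        rw [← hc, Int.emod_eq_of_lt hc0 hc2n]
      have hbcn : Int.ModEq n b c := hbc.of_dvd (dvd_mul_left (n : ℤ) 2)
      have hac : Int.ModEq n a c := hab.trans hbcn
      have hcodd : c % 2 = 1 := by
        have h4 : Int.ModEq 2 b c := hbc.of_dvd (dvd_mul_right 2 (n : ℤ))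
        have h5 : b % 2 = c % 2 := h4
        omega
      have hcoc : IsCoprime c (n : ℤ) := coprime_of_modeq hac hco
      have hcne0 : c ≠ 0 := by
        intro h
        rw [h] at hcoc
        have h6 := isCoprime_zero_left.mp hcoc
        rw [Int.isUnit_iff] at h6
        omega
      have hcnen : c ≠ n := by
        intro h
        rw [h] at hcoc
        have h6 := (isCoprime_self.mp hcoc)
        rw [Int.isUnit_iff] at h6
        omega
      have hJ : jacobiSym a n = jacobiSym c n := jacobiSym.mod_left' hac
      have hG : G a n = G c n := G_modeq hac
      rcases lt_or_gt_of_ne hcnen with hsm | hbig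
      · set A : ℕ := c.toNat with hA
        have hAc : (A : ℤ) = c := Int.toNat_of_nonneg hc0
        have hA1 : 1 ≤ A := by omega
        have hAlt : A < n := by omega
        have hAodd : A % 2 = 1 := by omega
        have hcoA : IsCoprime (A : ℤ) (n : ℤ) := by rw [hAc]; exact hcoc
        have hrec : jacobiSym (n : ℤ) A = G (n : ℤ) A :=
          IH A hAlt hAodd (n : ℤ) hcoA.symm
        calc jacobiSym a n = jacobiSym (A : ℤ) n := by rw [hJ, hAc]
        _ = G (A : ℤ) n := swap hn hAodd hA1 hAlt hcoA hrec
        _ = G a n := by rw [hAc, ← hG]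
      · set d : ℤ := 2 * n - c with hd
        have hd1 : 1 ≤ d := by omega
        have hdn : d < n := by omega
        have hdodd : d % 2 = 1 := by omega
        have hcd : Int.ModEq n c (-d) := Int.modEq_iff_dvd.mpr ⟨-2, by rw [hd]; ring⟩
        have hcod : IsCoprime d (n : ℤ) := by
          have h5 : IsCoprime (-d) (n : ℤ) := coprime_of_modeq hcd hcoc
          simpa using h5.neg_left
        set A : ℕ := d.toNat with hA
        have hAd : (A : ℤ) = d := Int.toNat_of_nonneg (by omega)
        have hA1 : 1 ≤ A := by omega
        have hAlt : A < n := by omega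
        have hAodd : A % 2 = 1 := by omega
        have hcoA : IsCoprime (A : ℤ) (n : ℤ) := by rw [hAd]; exact hcod
        have hrec : jacobiSym (n : ℤ) A = G (n : ℤ) A :=
          IH A hAlt hAodd (n : ℤ) hcoA.symm
        have hswap : jacobiSym (A : ℤ) n = G (A : ℤ) n := swap hn hAodd hA1 hAlt hcoA hrec
        have hJ3 : jacobiSym (-d) n = (-1) ^ (n / 2) * jacobiSym d n := by
          rw [jacobiSym.neg d (Nat.odd_iff.mpr hn), ZMod.χ₄_eq_neg_one_pow hn]
        calc jacobiSym a n = jacobiSym (-d) n := by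
              rw [hJ]; exact jacobiSym.mod_left' hcd
        _ = (-1) ^ (n / 2) * jacobiSym d n := hJ3
        _ = (-1) ^ (n / 2) * G d n := by rw [← hAd, hswap]
        _ = G (-d) n := (G_neg hn hn3 hcod).symm
        _ = G c n := (G_modeq hcd).symm
        _ = G a n := hG.symm

end JS13four

namespace JS13five
open JS13 JS13two JS13three JS13four

variable {F : Type*} [Field F] [Fintype F] [DecidableEq F]

lemma jflip (χ ψ : MulChar F ℂ) :
    jacobiSum χ ψ = ψ (-1) * jacobiSum ((χ * ψ)⁻¹) ψ := by
  rw [jacobiSum, jacobiSum, Finset.mul_sum]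
  apply Finset.sum_bijective _ inv_involutive.bijective (fun x => by simp)
  intro x _
  by_cases hx : x = 0
  · subst hx
    simp [MulChar.map_zero]
  · have e1 : (χ * ψ)⁻¹ (x⁻¹) = χ x * ψ x := by
      rw [MulChar.inv_apply', inv_inv, MulChar.coeToFun_mul, Pi.mul_apply]
    have e2 : ψ (1 - x⁻¹) = ψ (x - 1) * ψ x⁻¹ := by
      rw [← map_mul]
      congr 1
      field_simp
    rw [e1, e2,
      show ψ (-1) * (χ x * ψ x * (ψ (x - 1) * ψ x⁻¹)) =
        (ψ (-1) * ψ (x - 1)) * (ψ x * ψ x⁻¹) * χ x from by ring,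
      ← map_mul, ← map_mul, mul_inv_cancel₀ hx, MulChar.map_one,
      show (-1 : F) * (x - 1) = 1 - x from by ring]
    ring

lemma jflip' {φ ψ : MulChar F ℂ} (hφ2 : φ * φ = 1) (hφm : φ (-1) = -1) :
    jacobiSum φ ψ = - jacobiSum φ (φ * ψ⁻¹) := by
  have hinv : φ⁻¹ = φ := inv_eq_of_mul_eq_one_right hφ2
  rw [jacobiSum_comm φ ψ, jflip ψ φ, hφm, jacobiSum_comm _ φ,
    show (ψ * φ)⁻¹ = φ * ψ⁻¹ from by rw [mul_inv_rev, hinv, mul_comm]]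
  ring

end JS13five


/-- Let `q = 2n+1` be an odd prime power with `q ≡ 3 (mod 4)`, `χ` a generator of the group
of `ℂ`-valued multiplicative characters of `F_q`, and `a` an integer with `gcd(a, q-1) = 1`.
Then `∏_{k ∈ ℤ, 0 < k < n/2} (J_q(φ, χ^{ak}) - J_q(φ, χ^{-ak})) = (a/n) · I_q(χ)`, where
`(a/n)` is the Jacobi symbol.  (This expresses `σ_a(I_q(χ)) = (a/n) · I_q(χ)` for the Galois
automorphism `σ_a` of `ℚ(ζ_{q-1})`.) -/
theorem stmt13 (F : Type*) [Field F] [Fintype F] [DecidableEq F]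
    (q n : ℕ) (hq : q = Fintype.card F) (hqn : q = 2 * n + 1) (hq4 : q % 4 = 3)
    (χ : MulChar F ℂ) (hχ : ∀ ψ : MulChar F ℂ, ψ ∈ Subgroup.zpowers χ)
    (a : ℤ) (ha : IsCoprime a ((q : ℤ) - 1)) :
    (∏ k ∈ (Finset.range n).filter fun k => 0 < k ∧ 2 * k < n,
        (jacobiSum (phiC F) (χ ^ (a * (k : ℤ))) -
          jacobiSum (phiC F) (χ ^ (-(a * (k : ℤ)))))) =
      (jacobiSym a n : ℂ) * Iq n χ := by
  classical
  open JS13 JS13two JS13three JS13four JS13five in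
  have hn1 : 1 ≤ n := by omega
  have hnodd : n % 2 = 1 := by omega
  have hcard : Fintype.card F = 2 * n + 1 := by omega
  have hchar : ringChar F ≠ 2 := by
    intro h
    have := FiniteField.even_card_iff_char_two.mp h
    omega
  set φ : MulChar F ℂ := phiC F with hφdef
  -- φ² = 1
  have hφ2 : φ * φ = 1 := by
    apply MulChar.ext
    intro u
    rw [MulChar.coeToFun_mul, Pi.mul_apply, MulChar.one_apply_coe]
    show ((quadraticChar F (u : F) : ℂ)) * ((quadraticChar F (u : F) : ℂ)) = 1
    rw [← Int.cast_mul, ← sq, quadraticChar_sq_one u.ne_zero]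
    norm_num
  have hinv : φ⁻¹ = φ := inv_eq_of_mul_eq_one_right hφ2
  -- φ(-1) = -1
  have hφm : φ (-1) = -1 := by
    show ((quadraticChar F (-1) : ℤ) : ℂ) = -1
    rw [quadraticChar_neg_one hchar, hcard, ZMod.χ₄_nat_three_mod_four (by omega)]
    norm_num
  -- φ ≠ 1
  have hφ1 : φ ≠ 1 := by
    obtain ⟨x, hx⟩ := quadraticChar_exists_neg_one hchar
    have hx0 : x ≠ 0 := by
      intro h
      rw [h] at hx
      simp [MulChar.map_zero] at hx
    intro h
    have h1 : φ x = -1 := by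
      show ((quadraticChar F x : ℤ) : ℂ) = -1
      rw [hx]; norm_num
    rw [h] at h1
    rw [MulChar.one_apply (isUnit_iff_ne_zero.mpr hx0)] at h1
    norm_num at h1
  -- order of χ
  haveI : NeZero (Monoid.exponent Fˣ) := ⟨Monoid.exponent_ne_zero_of_finite⟩
  haveI : NeZero ((Monoid.exponent Fˣ : ℕ) : ℂ) :=
    ⟨by exact_mod_cast (NeZero.ne (Monoid.exponent Fˣ))⟩
  have htop : Subgroup.zpowers χ = ⊤ := by
    rw [Subgroup.eq_top_iff']
    exact hχ
  have horder : orderOf χ = 2 * n := by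
    have h1 : Nat.card (MulChar F ℂ) = Nat.card Fˣ :=
      MulChar.card_eq_card_units_of_hasEnoughRootsOfUnity F ℂ
    have h2 : Nat.card Fˣ = 2 * n := by
      rw [Nat.card_eq_fintype_card, Fintype.card_units, hcard]
      omega
    have h3 : orderOf χ = Nat.card (Subgroup.zpowers χ) := (Nat.card_zpowers χ).symm
    rw [h3, htop]
    rw [Nat.card_congr (Subgroup.topEquiv.toEquiv), h1, h2]
  -- χ^(2n) = 1 and φ = χ^n
  have hχ2n : χ ^ ((2 * n : ℕ) : ℤ) = 1 := by
    rw [zpow_natCast, ← horder, pow_orderOf_eq_one]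
  have hφχ : χ ^ (n : ℤ) = φ := by
    obtain ⟨m, hm0⟩ := hχ φ
    have hm : χ ^ m = φ := hm0
    have h2m : χ ^ (m * 2) = 1 := by
      rw [zpow_mul, hm]
      show φ ^ (2 : ℤ) = 1
      rw [show (2 : ℤ) = ((2 : ℕ) : ℤ) from rfl, zpow_natCast, sq, hφ2]
    have hdvd : ((2 * n : ℕ) : ℤ) ∣ m * 2 := by
      rw [← horder] at *
      exact orderOf_dvd_iff_zpow_eq_one.mpr h2m
    have hdvd2 : (n : ℤ) ∣ m := by
      rcases hdvd with ⟨t, ht⟩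
      exact ⟨t, by push_cast at ht; linarith⟩
    obtain ⟨t, ht⟩ := hdvd2
    have hsq : (χ ^ (n : ℤ)) * (χ ^ (n : ℤ)) = 1 := by
      rw [← zpow_add, show (n : ℤ) + n = ((2 * n : ℕ) : ℤ) from by push_cast; ring, hχ2n]
    rcases Int.even_or_odd t with ⟨u, hu⟩ | ⟨u, hu⟩
    · exfalso
      apply hφ1
      rw [← hm, ht, zpow_mul, hu, zpow_add, ← mul_zpow, hsq, one_zpow]
    · rw [← hm, ht, zpow_mul, hu, show 2 * u + 1 = u + (u + 1) from by ring,
        zpow_add, zpow_add, zpow_one, ← mul_assoc, ← mul_zpow, hsq, one_zpow, one_mul]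
  -- the function f
  set f : ℤ → ℂ := fun x => jacobiSum φ (χ ^ x) - jacobiSum φ (χ ^ (-x)) with hf
  have hodd : ∀ x, f (-x) = - f x := by
    intro x
    simp only [hf, neg_neg]
    ring
  have hkey : ∀ y : ℤ, jacobiSum φ (χ ^ y * φ) = - jacobiSum φ (χ ^ (-y)) := by
    intro y
    rw [jflip' hφ2 hφm]
    congr 1
    rw [mul_inv_rev, hinv, zpow_neg, ← mul_assoc, hφ2, one_mul]
  have hper : ∀ x, f (x + n) = f x := by
    intro x
    have e1 : χ ^ (x + (n : ℤ)) = χ ^ x * φ := by rw [zpow_add, hφχ]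
    have e2 : χ ^ (-(x + (n : ℤ))) = χ ^ (-x) * φ := by
      rw [show -(x + (n : ℤ)) = -x + -(n : ℤ) from by ring, zpow_add]
      congr 1
      rw [← hinv, ← hφχ]
      exact zpow_neg χ (n : ℤ)
    show jacobiSum φ (χ ^ (x + (n : ℤ))) - jacobiSum φ (χ ^ (-(x + (n : ℤ)))) = f x
    rw [e1, e2, hkey x, hkey (-x), neg_neg]
    simp only [hf]
    ring
  have hco : IsCoprime a ((n : ℕ) : ℤ) := by
    have h1 : ((q : ℤ) - 1) = 2 * (n : ℤ) := by omega
    rw [h1] at ha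
    exact ha.of_mul_right_right
  have hset : (Finset.range n).filter (fun k => 0 < k ∧ 2 * k < n) = Finset.Icc 1 (n / 2) := by
    ext k
    simp only [Finset.mem_filter, Finset.mem_range, Finset.mem_Icc]
    omega
  have hIq : Iq n χ = ∏ k ∈ Finset.Icc 1 (n / 2), f (k : ℤ) := by
    rw [Iq, hset]
  calc (∏ k ∈ (Finset.range n).filter fun k => 0 < k ∧ 2 * k < n,
        (jacobiSum φ (χ ^ (a * (k : ℤ))) - jacobiSum φ (χ ^ (-(a * (k : ℤ)))))) =
      ∏ k ∈ Finset.Icc 1 (n / 2), f (a * (k : ℤ)) := by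
        rw [hset]
  _ = (G a n : ℂ) * ∏ k ∈ Finset.Icc 1 (n / 2), f (k : ℤ) :=
      prod_fold hnodd hco f hper hodd
  _ = (jacobiSym a n : ℂ) * Iq n χ := by
      rw [hIq, ← jacobiSym_eq_G n hnodd a hco]
end
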